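/- arXiv:2512.19430 — 7 statements merged into one kernel-verified Lean document; each statement's English description precedes it below -/
import Mathlib

section
/- Let d be an integer with |d| ≥ 2, let A = (ℝ/ℤ) × (0,1) be the open annulus with universal covering p : ℝ × (0,1) → A, and let f : A → A be a continuous map of degree d with lift F : ℝ × (0,1) → ℝ × (0,1). Let K ⊆ A be a compact set with f(K) ⊆ K and set K̃ = p⁻¹(K) (so F(K̃) ⊆ K̃). Then there exists a continuous map H : K̃ → ℝ such that: (1) H(x+1, y) = H(x, y) + 1 for all (x,y) ∈ K̃; (2) H(F(v)) = d·H(v) for all v ∈ K̃; (3) there exists M > 0 such that |H(x,y) − x| < M for all (x,y) ∈ K̃. -/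
noncomputable section

/-- The open annulus `A = (ℝ/ℤ) × (0,1)`. -/
abbrev OpenAnnulus := AddCircle (1 : ℝ) × Set.Ioo (0 : ℝ) 1

/-- The universal cover `ℝ × (0,1)` of the open annulus. -/
abbrev Strip := ℝ × Set.Ioo (0 : ℝ) 1

/-- The universal covering projection `p : ℝ × (0,1) → A`. -/
def annulusProj : Strip → OpenAnnulus := fun v => ((v.1 : AddCircle (1 : ℝ)), v.2)

/-- The deck transformation `v ↦ v + (1,0)` of the strip. -/
def shift (v : Strip) : Strip := (v.1 + 1, v.2)

/-- Horizontal translation `v ↦ v + (k,0)` of the strip. -/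
def htrans (k : ℝ) (v : Strip) : Strip := (v.1 + k, v.2)

set_option maxHeartbeats 1600000 in
/-- semiconjugacy on the lift of a compact forward-invariant set.
If `f : A → A` is a continuous degree-`d` map (`|d| ≥ 2`) with lift `F`, and
`K ⊆ A` is compact with `f(K) ⊆ K`, `K̃ = p⁻¹(K)`, then there is a continuous
`H : K̃ → ℝ` with `H(x+1,y) = H(x,y) + 1`, `H ∘ F = d·H`, and `|H(x,y) − x| < M`
on `K̃` for some `M > 0`. -/
theorem semiconjugacy_on_invariant_set (d : ℤ) (hd : 2 ≤ |d|)
    (f : OpenAnnulus → OpenAnnulus) (hf : Continuous f)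
    (F : Strip → Strip) (hFcont : Continuous F)
    (hlift : ∀ v : Strip, annulusProj (F v) = f (annulusProj v))
    (hdeg : ∀ v : Strip, F (shift v) = htrans d (F v))
    (K : Set OpenAnnulus) (hK : IsCompact K) (hKinv : f '' K ⊆ K) :
    ∃ H : Strip → ℝ, ContinuousOn H (annulusProj ⁻¹' K) ∧
      (∀ v ∈ annulusProj ⁻¹' K, H (shift v) = H v + 1) ∧
      (∀ v ∈ annulusProj ⁻¹' K, H (F v) = d * H v) ∧
      (∃ M : ℝ, 0 < M ∧ ∀ v ∈ annulusProj ⁻¹' K, |H v - v.1| < M) := by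
  classical
  set Kt : Set Strip := annulusProj ⁻¹' K with hKtdef
  have hdR : (2 : ℝ) ≤ |(d : ℝ)| := by
    rw [← Int.cast_abs]; exact_mod_cast hd
  have hdne : (d : ℝ) ≠ 0 := by
    intro h; rw [h] at hdR; simp at hdR; linarith
  have hproj_cont : Continuous annulusProj := by
    unfold annulusProj
    exact (continuous_quotient_mk'.comp continuous_fst).prodMk continuous_snd
  have hFK : ∀ v ∈ Kt, F v ∈ Kt := by
    intro v hv
    have : annulusProj (F v) = f (annulusProj v) := hlift v
    simp only [hKtdef, Set.mem_preimage] at hv ⊢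
    rw [this]
    exact hKinv ⟨_, hv, rfl⟩
  have hFnK : ∀ (n : ℕ), ∀ v ∈ Kt, F^[n] v ∈ Kt := by
    intro n
    induction n with
    | zero => intro v hv; simpa using hv
    | succ n ih =>
      intro v hv
      rw [Function.iterate_succ_apply']
      exact hFK _ (ih v hv)
  -- the periodic displacement function
  set g : Strip → ℝ := fun v => (F v).1 - d * v.1 with hgdef
  have hgcont : Continuous g :=
    (continuous_fst.comp hFcont).sub (continuous_const.mul continuous_fst)
  -- F commutes with integer translations
  have hzero : ∀ w : Strip, htrans 0 w = w := by intro w; simp [htrans]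
  have hcomp : ∀ (a b : ℝ) (w : Strip), htrans a (htrans b w) = htrans (b + a) w := by
    intro a b w; simp [htrans, add_assoc]
  have hstep : ∀ (r s : ℝ), (∀ v, F (htrans r v) = htrans s (F v)) →
      ∀ v, F (htrans (r + 1) v) = htrans (s + d) (F v) := by
    intro r s h v
    have h1 : htrans (r + 1) v = shift (htrans r v) := by simp [htrans, shift, add_assoc]
    rw [h1, hdeg, h, hcomp]
  have hstepneg : ∀ (r s : ℝ), (∀ v, F (htrans r v) = htrans s (F v)) →
      ∀ v, F (htrans (r - 1) v) = htrans (s - d) (F v) := by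
    intro r s h v
    have h2 : F (htrans r v) = htrans (d : ℝ) (F (htrans (r - 1) v)) := by
      have h1 : htrans r v = shift (htrans (r - 1) v) := by
        simp only [htrans, shift]
        have : v.1 + (r - 1) + 1 = v.1 + r := by ring
        rw [this]
      rw [h1, hdeg]
    rw [h] at h2
    have h3 := congrArg (htrans (-(d : ℝ))) h2
    rw [hcomp, hcomp, show (d : ℝ) + -(d : ℝ) = 0 by ring, hzero] at h3
    rw [← h3]
    congr 1
  have htransF : ∀ (n : ℤ) (v : Strip), F (htrans (n : ℝ) v) = htrans ((d : ℝ) * n) (F v) := by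
    intro n
    induction n using Int.induction_on with
    | zero => intro v; rw [Int.cast_zero, mul_zero, hzero, hzero]
    | succ n ih =>
      intro v
      push_cast at ih ⊢
      rw [hstep _ _ ih v]
      congr 1
      ring
    | pred n ih =>
      intro v
      push_cast at ih ⊢
      rw [hstepneg _ _ ih v]
      congr 1
      ring
  have hgper : ∀ (n : ℤ) (v : Strip), g (htrans n v) = g v := by
    intro n v
    simp only [hgdef]
    rw [htransF n v]
    simp only [htrans]
    ring
  have hprojper : ∀ (n : ℤ) (v : Strip), annulusProj (htrans n v) = annulusProj v := by
    intro n v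
    unfold annulusProj htrans
    simp only [Prod.mk.injEq, and_true]
    have hn0 : (((n : ℤ) : ℝ) : AddCircle (1:ℝ)) = 0 := by
      have h1 : ((n : ℤ) : ℝ) = (n : ℤ) • (1:ℝ) := by simp
      rw [h1, AddCircle.coe_zsmul, AddCircle.coe_period, smul_zero]
    rw [AddCircle.coe_add, hn0, add_zero]
  have hKtper : ∀ (n : ℤ) (v : Strip), v ∈ Kt → htrans n v ∈ Kt := by
    intro n v hv
    simp only [hKtdef, Set.mem_preimage] at hv ⊢
    rw [hprojper]; exact hv
  -- bound for g on Kt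
  obtain ⟨C, hC0, hCb⟩ : ∃ C, 0 ≤ C ∧ ∀ v ∈ Kt, |g v| ≤ C := by
    have hKtcl : IsClosed Kt := (hK.isClosed.preimage hproj_cont)
    have hS : IsCompact ((Set.Icc (0:ℝ) 1 ×ˢ (Prod.snd '' K)) ∩ Kt) :=
      ((isCompact_Icc.prod (hK.image continuous_snd)).inter_right hKtcl)
    obtain ⟨C, hC⟩ := hS.exists_bound_of_continuousOn hgcont.continuousOn
    refine ⟨max C 0, le_max_right _ _, ?_⟩
    intro v hv
    set n : ℤ := ⌊v.1⌋ with hn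
    have hmem : htrans (-n : ℤ) v ∈ (Set.Icc (0:ℝ) 1 ×ˢ (Prod.snd '' K)) ∩ Kt := by
      constructor
      · constructor
        · simp only [htrans]
          constructor
          · have := Int.fract_nonneg v.1
            simp only [Int.fract] at this
            push_cast
            linarith
          · have := Int.fract_lt_one v.1
            simp only [Int.fract] at this
            push_cast
            linarith
        · exact ⟨annulusProj v, hv, rfl⟩
      · exact hKtper _ _ hv
    have := hC _ hmem
    calc |g v| = |g (htrans (-n : ℤ) v)| := by rw [hgper]
      _ ≤ C := by simpa using this
      _ ≤ max C 0 := le_max_left _ _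
  -- the series terms
  set u : Strip → ℕ → ℝ := fun v n => g (F^[n] v) / (d:ℝ)^(n+1) with hudef
  have hub : ∀ n : ℕ, ∀ v ∈ Kt, |u v n| ≤ C * (1/2:ℝ)^(n+1) := by
    intro n v hv
    have h1 : |g (F^[n] v)| ≤ C := hCb _ (hFnK n v hv)
    have h2 : (2:ℝ)^(n+1) ≤ |(d:ℝ)^(n+1)| := by
      rw [abs_pow]
      exact pow_le_pow_left₀ (by norm_num) hdR _
    have h3 : (0:ℝ) < (2:ℝ)^(n+1) := by positivity
    have : |u v n| = |g (F^[n] v)| / |(d:ℝ)^(n+1)| := by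
      rw [hudef]; simp [abs_div]
    rw [this]
    calc |g (F^[n] v)| / |(d:ℝ)^(n+1)| ≤ C / (2:ℝ)^(n+1) :=
          div_le_div₀ hC0 h1 h3 h2
      _ = C * (1/2:ℝ)^(n+1) := by rw [div_pow]; ring
  have hBsummable : Summable (fun n : ℕ => C * (1/2:ℝ)^(n+1)) := by
    apply Summable.mul_left
    exact ((summable_geometric_of_lt_one (by norm_num) (by norm_num)).mul_left _ :
      Summable fun n : ℕ => (1/2:ℝ) * (1/2:ℝ)^n).congr (fun n => by ring)
  have hBsum : ∑' n : ℕ, C * (1/2:ℝ)^(n+1) = C := by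
    have h1 : ∀ n : ℕ, C * (1/2:ℝ)^(n+1) = (C * (1/2)) * (1/2:ℝ)^n := by
      intro n; ring
    rw [tsum_congr h1, tsum_mul_left, tsum_geometric_of_lt_one (by norm_num) (by norm_num)]
    norm_num
    ring
  have husum : ∀ v ∈ Kt, Summable (u v) := by
    intro v hv
    apply Summable.of_norm
    apply Summable.of_nonneg_of_le (fun n => norm_nonneg _) (fun n => hub n v hv) hBsummable
  -- definition of H
  set H : Strip → ℝ := fun v => v.1 + ∑' n : ℕ, u v n with hHdef
  have hHsub : ∀ v ∈ Kt, |H v - v.1| ≤ C := by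
    intro v hv
    have h1 : H v - v.1 = ∑' n : ℕ, u v n := by rw [hHdef]; ring
    rw [h1]
    have hsn : Summable (fun n : ℕ => |u v n|) := (husum v hv).abs
    have h2 : |∑' n : ℕ, u v n| ≤ ∑' n : ℕ, |u v n| := by
      rw [← Real.norm_eq_abs]
      refine le_trans (norm_tsum_le_tsum_norm ?_) ?_
      · simpa [Real.norm_eq_abs] using hsn
      · simp [Real.norm_eq_abs]
    have h3 : ∑' n : ℕ, |u v n| ≤ ∑' n : ℕ, C * (1/2:ℝ)^(n+1) :=
      Summable.tsum_le_tsum (fun n => hub n v hv) hsn hBsummable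
    linarith [hBsum]
  refine ⟨H, ?_, ?_, ?_, C + 1, by linarith, ?_⟩
  · -- continuity
    apply ContinuousOn.add continuous_fst.continuousOn
    apply continuousOn_tsum (u := fun n : ℕ => C * (1/2:ℝ)^(n+1))
    · intro n
      apply Continuous.continuousOn
      exact (hgcont.comp (hFcont.iterate n)).div_const _
    · exact hBsummable
    · intro n v hv
      simpa using hub n v hv
  · -- H (shift v) = H v + 1
    intro v hv
    have hiter : ∀ n : ℕ, F^[n] (shift v) = htrans ((d^n : ℤ) : ℝ) (F^[n] v) := by
      intro n
      induction n with
      | zero => simp [htrans, shift]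
      | succ n ih =>
        rw [Function.iterate_succ_apply', Function.iterate_succ_apply', ih, htransF (d^n)]
        congr 1
        push_cast
        ring
    have hsame : ∀ n : ℕ, u (shift v) n = u v n := by
      intro n
      simp only [hudef]
      rw [hiter n, hgper (d^n) (F^[n] v)]
    show (shift v).1 + ∑' n : ℕ, u (shift v) n = (v.1 + ∑' n : ℕ, u v n) + 1
    rw [tsum_congr hsame]
    simp only [shift]
    ring
  · -- H (F v) = d * H v
    intro v hv
    set w : ℕ → ℝ := fun n => g (F^[n] v) / (d:ℝ)^n with hwdef
    have hw_eq : ∀ n : ℕ, w n = (d:ℝ) * u v n := by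
      intro n
      simp only [hwdef, hudef, pow_succ]
      field_simp
    have hwsum : Summable w := by
      apply Summable.congr (((husum v hv).mul_left (d:ℝ))) (fun n => (hw_eq n).symm)
    have hshift : ∀ n : ℕ, u (F v) n = w (n+1) := by
      intro n
      simp only [hudef, hwdef, ← Function.iterate_succ_apply]
    have h0 : ∑' n : ℕ, w n = w 0 + ∑' n : ℕ, w (n+1) := Summable.tsum_eq_zero_add hwsum
    have hFv1 : (F v).1 = d * v.1 + g v := by simp only [hgdef]; ring
    have hw0 : w 0 = g v := by simp [hwdef]
    calc H (F v) = (F v).1 + ∑' n : ℕ, u (F v) n := rfl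
      _ = d * v.1 + g v + ∑' n : ℕ, w (n+1) := by rw [hFv1, tsum_congr hshift]
      _ = d * v.1 + ∑' n : ℕ, w n := by rw [h0, hw0]; ring
      _ = d * v.1 + ∑' n : ℕ, (d:ℝ) * u v n := by rw [tsum_congr hw_eq]
      _ = d * v.1 + (d:ℝ) * ∑' n : ℕ, u v n := by rw [tsum_mul_left]
      _ = d * H v := by rw [hHdef]; ring
  · -- bound
    intro v hv
    have := hHsub v hv
    linarith
end
end

section
/- Let d be an integer with |d| ≥ 2, let Ā = (ℝ/ℤ) × [0,1] be the closed annulus with covering p̄ : ℝ × [0,1] → Ā, p̄(x,y) = (x + ℤ, y), and let f : Ā → Ā be a continuous map admitting a lift F : ℝ × [0,1] → ℝ × [0,1] (i.e. p̄ ∘ F = f ∘ p̄, F continuous) with F(x+1, y) = F(x, y) + (d, 0) for all (x,y). Then f is semiconjugate to the degree-d circle map m_d : ℝ/ℤ → ℝ/ℤ, z ↦ d·z: there exists a continuous h : Ā → ℝ/ℤ with h ∘ f = m_d ∘ h, and h has degree one, i.e. h admits a continuous lift H : ℝ × [0,1] → ℝ with H(x+1, y) = H(x, y) + 1 and h(p̄(v))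 = H(v) + ℤ for all v. -/
noncomputable section

/-- The closed annulus `Ā = (ℝ/ℤ) × [0,1]`. -/
abbrev ClosedAnnulus := AddCircle (1 : ℝ) × Set.Icc (0 : ℝ) 1

/-- The universal cover `ℝ × [0,1]` of the closed annulus. -/
abbrev ClosedStrip := ℝ × Set.Icc (0 : ℝ) 1

/-- The covering projection `p̄ : ℝ × [0,1] → Ā`. -/
def closedProj : ClosedStrip → ClosedAnnulus := fun v => ((v.1 : AddCircle (1 : ℝ)), v.2)

/-- The deck transformation `v ↦ v + (1,0)` of the closed strip. -/
def cshift (v : ClosedStrip) : ClosedStrip := (v.1 + 1, v.2)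

/-- Integer horizontal shift on the strip. -/
def shiftZ (k : ℤ) (v : ClosedStrip) : ClosedStrip := (v.1 + (k : ℝ), v.2)

lemma shiftZ_zero (v : ClosedStrip) : shiftZ 0 v = v := by
  simp [shiftZ]

lemma shiftZ_add (a b : ℤ) (v : ClosedStrip) : shiftZ a (shiftZ b v) = shiftZ (a + b) v := by
  simp [shiftZ]; ring

lemma cshift_eq (v : ClosedStrip) : cshift v = shiftZ 1 v := by
  simp [cshift, shiftZ]

/-- every continuous degree-`d` map of the closed annulus (`|d| ≥ 2`)
is semiconjugate, by a degree-one map `h`, to the circle map `m_d : z ↦ d·z`. -/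
theorem closed_annulus_semiconjugacy (d : ℤ) (hd : 2 ≤ |d|)
    (f : ClosedAnnulus → ClosedAnnulus) (hf : Continuous f)
    (F : ClosedStrip → ClosedStrip) (hFcont : Continuous F)
    (hlift : ∀ v : ClosedStrip, closedProj (F v) = f (closedProj v))
    (hdeg : ∀ v : ClosedStrip, F (cshift v) = ((F v).1 + (d : ℝ), (F v).2)) :
    ∃ h : ClosedAnnulus → AddCircle (1 : ℝ), Continuous h ∧
      (∀ a : ClosedAnnulus, h (f a) = d • h a) ∧
      ∃ H : ClosedStrip → ℝ, Continuous H ∧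
        (∀ v : ClosedStrip, H (cshift v) = H v + 1) ∧
        (∀ v : ClosedStrip, h (closedProj v) = (H v : AddCircle (1 : ℝ))) := by
  have hd0 : d ≠ 0 := by
    intro h; rw [h] at hd; norm_num at hd
  have hdR : (d : ℝ) ≠ 0 := Int.cast_ne_zero.mpr hd0
  have hdabs : (2 : ℝ) ≤ |(d : ℝ)| := by
    have : ((2:ℤ) : ℝ) ≤ ((|d| : ℤ) : ℝ) := Int.cast_le.mpr hd
    rwa [Int.cast_abs, Int.cast_ofNat] at this
  -- the displacement function
  set ψ : ClosedStrip → ℝ := fun v => (F v).1 - d * v.1 with hψdef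
  have hψcont : Continuous ψ := ((continuous_fst.comp hFcont).sub
    (continuous_const.mul continuous_fst))
  -- equivariance of F under integer shifts
  have hF1 : ∀ v, F (shiftZ 1 v) = shiftZ d (F v) := by
    intro v
    rw [← cshift_eq, hdeg v]
    rfl
  have hFneg1 : ∀ v, F (shiftZ (-1) v) = shiftZ (-d) (F v) := by
    intro v
    have h := hF1 (shiftZ (-1) v)
    rw [shiftZ_add] at h
    norm_num [shiftZ_zero] at h
    rw [h, shiftZ_add]
    norm_num [shiftZ_zero]
  have hshift : ∀ (k : ℤ) v, F (shiftZ k v) = shiftZ (k * d) (F v) := by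
    intro k
    induction k using Int.induction_on with
    | zero => intro v; rw [zero_mul, shiftZ_zero, shiftZ_zero]
    | succ k ih =>
        intro v
        have h1 : shiftZ (k + 1) v = shiftZ k (shiftZ 1 v) := by rw [shiftZ_add]
        rw [h1, ih, hF1, shiftZ_add]
        congr 1
        ring
    | pred k ih =>
        intro v
        have h1 : shiftZ (-k - 1) v = shiftZ (-k) (shiftZ (-1) v) := by
          rw [shiftZ_add]; congr 1
        rw [h1, ih, hFneg1, shiftZ_add]
        congr 1
        ring
  -- ψ is shift invariant
  have hψshift : ∀ (k : ℤ) v, ψ (shiftZ k v) = ψ v := by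
    intro k v
    have h := hshift k v
    simp only [hψdef]
    rw [h]
    simp only [shiftZ]
    push_cast
    ring
  -- ψ is bounded
  have hK : IsCompact ((Set.Icc (0:ℝ) 1) ×ˢ (Set.univ : Set (Set.Icc (0:ℝ) 1))) :=
    isCompact_Icc.prod isCompact_univ
  obtain ⟨C, hC⟩ := hK.exists_bound_of_continuousOn hψcont.continuousOn
  have hCbound : ∀ v : ClosedStrip, |ψ v| ≤ C := by
    intro v
    have h1 : shiftZ ⌊v.1⌋ (Int.fract v.1, v.2) = v := by
      simp only [shiftZ]
      rw [Int.fract_add_floor]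
    have h2 : ψ v = ψ (Int.fract v.1, v.2) := by
      conv_lhs => rw [← h1]
      exact hψshift _ _
    rw [h2]
    have := hC (Int.fract v.1, v.2) (by
      constructor
      · exact ⟨Int.fract_nonneg _, le_of_lt (Int.fract_lt_one _)⟩
      · trivial)
    simpa using this
  have hC0 : 0 ≤ C := le_trans (abs_nonneg _) (hCbound (0, ⟨0, by norm_num⟩))
  -- the geometric ratio
  set r : ℝ := |(d : ℝ)|⁻¹ with hrdef
  have hr0 : 0 ≤ r := inv_nonneg.mpr (abs_nonneg _)
  have hr1 : r < 1 := by
    rw [hrdef, inv_lt_one_iff₀]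
    right; linarith
  -- the series terms
  set u : ℕ → ClosedStrip → ℝ := fun n v => ψ (F^[n] v) / (d : ℝ) ^ (n + 1) with hudef
  have hu_cont : ∀ n, Continuous (u n) := fun n =>
    (hψcont.comp (hFcont.iterate n)).div_const _
  have hu_bound : ∀ n v, ‖u n v‖ ≤ (C * r) * r ^ n := by
    intro n v
    have : ‖u n v‖ = |ψ (F^[n] v)| / |(d:ℝ)| ^ (n + 1) := by
      rw [hudef]; simp [abs_div, abs_pow]
    rw [this]
    have hpow : |(d:ℝ)| ^ (n+1) > 0 := by positivity
    have h2 : |ψ (F^[n] v)| / |(d:ℝ)| ^ (n + 1) ≤ C / |(d:ℝ)| ^ (n + 1) := by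
      gcongr
      exact hCbound _
    have h3 : C / |(d:ℝ)| ^ (n + 1) = (C * r) * r ^ n := by
      rw [hrdef, div_eq_mul_inv, ← inv_pow, pow_succ]
      ring
    linarith
  have hsum_geo : Summable (fun n : ℕ => (C * r) * r ^ n) :=
    (summable_geometric_of_lt_one hr0 hr1).mul_left _
  have hsummable : ∀ v, Summable (fun n => u n v) := by
    intro v
    exact Summable.of_norm_bounded hsum_geo (fun n => hu_bound n v)
  -- the semiconjugating height function
  set H : ClosedStrip → ℝ := fun v => v.1 + ∑' n, u n v with hHdef
  have hHcont : Continuous H :=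
    continuous_fst.add (continuous_tsum hu_cont hsum_geo hu_bound)
  -- H shifts by k under shiftZ k
  have hiter : ∀ (n : ℕ) (k : ℤ) (v : ClosedStrip),
      F^[n] (shiftZ k v) = shiftZ (k * d ^ n) (F^[n] v) := by
    intro n
    induction n with
    | zero => intro k v; simp [shiftZ_zero]
    | succ n ih =>
        intro k v
        rw [Function.iterate_succ_apply, Function.iterate_succ_apply,
          hshift k v, ih]
        ring_nf
  have hHshift : ∀ (k : ℤ) v, H (shiftZ k v) = H v + k := by
    intro k v
    have hterm : ∀ n, u n (shiftZ k v) = u n v := by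
      intro n
      rw [hudef]
      simp only
      rw [hiter n k v, hψshift]
    simp only [hHdef]
    rw [tsum_congr hterm]
    simp [shiftZ]
    ring
  -- H semiconjugates F to multiplication by d
  have hHF : ∀ v, H (F v) = d * H v := by
    intro v
    have hsum' : Summable (fun n => ψ (F^[n] v) / (d:ℝ) ^ n) := by
      have : (fun n => ψ (F^[n] v) / (d:ℝ) ^ n) = fun n => (d : ℝ) * u n v := by
        funext n
        rw [hudef]
        simp only
        rw [pow_succ]
        field_simp
      rw [this]
      exact (hsummable v).mul_left _
    have key : (d : ℝ) * ∑' n, u n v = ∑' n, ψ (F^[n] v) / (d:ℝ) ^ n := by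
      rw [← tsum_mul_left]
      apply tsum_congr
      intro n
      rw [hudef]
      simp only
      rw [pow_succ]
      field_simp
    have split := Summable.tsum_eq_zero_add hsum'
    simp only [hHdef]
    rw [mul_add, key, split]
    simp only [Function.iterate_zero_apply, pow_zero, div_one]
    have : ∀ n : ℕ, ψ (F^[n+1] v) / (d:ℝ) ^ (n+1) = u n (F v) := by
      intro n
      rw [hudef]
      simp only
      rw [Function.iterate_succ_apply]
    rw [tsum_congr this]
    simp only [hψdef]
    ring
  -- define the circle map h
  set hmap : ClosedAnnulus → AddCircle (1 : ℝ) := fun a =>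
    Quotient.liftOn' a.1 (fun x => ((H (x, a.2) : ℝ) : AddCircle (1 : ℝ)))
      (by
        intro x y hxy
        have hmem : -x + y ∈ AddSubgroup.zmultiples (1 : ℝ) :=
          QuotientAddGroup.leftRel_apply.mp hxy
        obtain ⟨k, hk⟩ := hmem
        have hy : y = x + (k : ℝ) := by
          simp only [zsmul_eq_mul, mul_one] at hk
          linarith
        show ((H (x, a.2) : ℝ) : AddCircle (1:ℝ)) = ((H (y, a.2) : ℝ) : AddCircle (1:ℝ))
        have hHy : H (y, a.2) = H (x, a.2) + (k : ℝ) := by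
          rw [hy]
          exact hHshift k (x, a.2)
        rw [hHy, QuotientAddGroup.eq, AddSubgroup.mem_zmultiples_iff]
        refine ⟨k, ?_⟩
        simp only [zsmul_eq_mul, mul_one]
        ring) with hhmapdef
  have hproj : ∀ v : ClosedStrip, hmap (closedProj v) = (H v : AddCircle (1:ℝ)) := by
    intro v
    simp only [hhmapdef, closedProj]
    rfl
  -- closedProj is an open quotient map
  have hopq : IsOpenQuotientMap closedProj := by
    have : closedProj = Prod.map (QuotientAddGroup.mk :
        ℝ → ℝ ⧸ AddSubgroup.zmultiples (1:ℝ)) id := rfl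
    rw [this]
    exact QuotientAddGroup.isOpenQuotientMap_mk.prodMap IsOpenQuotientMap.id
  have hproj_surj : Function.Surjective closedProj := hopq.surjective
  have hhcont : Continuous hmap := by
    rw [hopq.isQuotientMap.continuous_iff]
    have : hmap ∘ closedProj = fun v => ((H v : ℝ) : AddCircle (1:ℝ)) := by
      funext v; exact hproj v
    rw [this]
    exact (AddCircle.continuous_mk' 1).comp hHcont
  refine ⟨hmap, hhcont, ?_, H, hHcont, ?_, hproj⟩
  · intro a
    obtain ⟨v, rfl⟩ := hproj_surj a
    rw [← hlift v, hproj, hproj, hHF]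
    have : ((d * H v : ℝ) : AddCircle (1:ℝ)) = d • ((H v : ℝ) : AddCircle (1:ℝ)) := by
      rw [← zsmul_eq_mul]
      exact (AddCircle.coe_zsmul ..)
    rw [this]
  · intro v
    rw [cshift_eq]
    have := hHshift 1 v
    simpa using this

end
end

section
/- Let d be an integer with |d| ≥ 2, let A = (ℝ/ℤ) × (0,1) be the open annulus with universal covering p : ℝ × (0,1) → A, and let f : A → A be a continuous map of degree d with lift F. Suppose that for every k ∈ ℤ the lift F + k (defined by v ↦ F(v) + (k,0)) has a fixed point. Then f has at least |d − 1| fixed points: there exist |d − 1| pairwise distinct points a ∈ A with f(a) = a. -/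
noncomputable section

/-!
Fixed points of the lifts `F + k` project to fixed points of `f`. If a fixed point `v` of
`F + k` and a fixed point `v'` of `F + k'` have the same projection, then `v' = v + (n, 0)`
for some `n ∈ ℤ`, and since `F(v + (n, 0)) = F(v) + (dn, 0)` this forces `k - k' = (d - 1) n`.
Hence the lifts `F + k`, `0 ≤ k < |d - 1|`, contribute `|d - 1|` distinct fixed points of `f`.
-/

section Strip

@[simp]
lemma htrans_zero (v : Strip) : htrans 0 v = v := by
  simp [htrans]

lemma htrans_htrans (a b : ℝ) (v : Strip) : htrans a (htrans b v) = htrans (b + a) v := by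
  simp [htrans, add_assoc]

lemma shift_eq_htrans_one (v : Strip) : shift v = htrans 1 v := rfl

lemma htrans_injective (a : ℝ) : Function.Injective (htrans a) := by
  intro v w h
  simp only [htrans, Prod.mk.injEq, add_left_inj] at h
  exact Prod.ext h.1 h.2

lemma htrans_left_injective (v : Strip) : Function.Injective (htrans · v) := by
  intro a b h
  simpa [htrans] using congrArg Prod.fst h

lemma annulusProj_htrans_intCast (k : ℤ) (v : Strip) :
    annulusProj (htrans k v) = annulusProj v := by
  simp [annulusProj, htrans]

lemma exists_eq_htrans_of_annulusProj_eq {v w : Strip} (h : annulusProj v = annulusProj w) :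
    ∃ n : ℤ, w = htrans n v := by
  obtain ⟨h1, h2⟩ := Prod.ext_iff.mp h
  obtain ⟨n, hn⟩ := (AddCircle.coe_eq_zero_iff (1 : ℝ)).mp <| by
    rw [AddCircle.coe_sub]; exact sub_eq_zero.mpr h1.symm
  refine ⟨n, Prod.ext ?_ h2.symm⟩
  simp only [zsmul_eq_mul, mul_one] at hn
  simp [htrans, hn]

end Strip

section Degree

variable {d : ℤ} {F : Strip → Strip}

lemma map_htrans_intCast (hdeg : ∀ v, F (shift v) = htrans d (F v)) (n : ℤ) (v : Strip) :
    F (htrans n v) = htrans (d * n : ℤ) (F v) := by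
  induction n using Int.induction_on with
  | zero => simp
  | succ n ih =>
    rw [show htrans ((n + 1 : ℤ) : ℝ) v = shift (htrans ((n : ℤ) : ℝ) v) by
      rw [shift_eq_htrans_one, htrans_htrans]; push_cast; rfl]
    rw [hdeg, ih, htrans_htrans]
    push_cast; ring_nf
  | pred n ih =>
    have h := hdeg (htrans ((-n - 1 : ℤ) : ℝ) v)
    rw [shift_eq_htrans_one, htrans_htrans,
      show ((-n - 1 : ℤ) : ℝ) + 1 = ((-n : ℤ) : ℝ) by push_cast; ring, ih] at h
    apply htrans_injective (d : ℝ)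
    rw [← h, htrans_htrans]
    push_cast; ring_nf

lemma sub_dvd_sub_of_annulusProj_eq (hdeg : ∀ v, F (shift v) = htrans d (F v))
    {k k' : ℤ} {v v' : Strip} (hv : htrans k (F v) = v) (hv' : htrans k' (F v') = v')
    (h : annulusProj v = annulusProj v') : d - 1 ∣ k - k' := by
  obtain ⟨n, rfl⟩ := exists_eq_htrans_of_annulusProj_eq h
  refine ⟨n, ?_⟩
  rw [map_htrans_intCast hdeg, htrans_htrans] at hv'
  conv_rhs at hv' => rw [← hv, htrans_htrans]
  have := htrans_left_injective (F v) hv'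
  push_cast at this
  exact_mod_cast (by linarith : (k : ℝ) - k' = (d - 1) * n)

end Degree

lemma annulusProj_isFixedPt_of_lift {f : OpenAnnulus → OpenAnnulus} {F : Strip → Strip}
    (hlift : ∀ v, annulusProj (F v) = f (annulusProj v)) {k : ℤ} {v : Strip}
    (hv : htrans k (F v) = v) : f (annulusProj v) = annulusProj v := by
  rw [← hlift, ← annulusProj_htrans_intCast k, hv]

theorem nielsen_count_fixed_points_general (d : ℤ)
    (f : OpenAnnulus → OpenAnnulus)
    (F : Strip → Strip)
    (hlift : ∀ v : Strip, annulusProj (F v) = f (annulusProj v))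
    (hdeg : ∀ v : Strip, F (shift v) = htrans d (F v))
    (hfix : ∀ k : ℤ, ∃ v : Strip, htrans k (F v) = v) :
    ∃ S : Finset OpenAnnulus, (d - 1).natAbs ≤ S.card ∧ ∀ a ∈ S, f a = a := by
  classical
  choose V hV using hfix
  have hinj : Set.InjOn (fun k : ℕ => annulusProj (V k)) (Finset.range (d - 1).natAbs) := by
    intro k hk k' hk' heq
    simp only [Finset.coe_range, Set.mem_Iio] at hk hk'
    have hdvd := sub_dvd_sub_of_annulusProj_eq hdeg (hV k) (hV k') heq
    have := Int.eq_zero_of_dvd_of_natAbs_lt_natAbs hdvd (by omega)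
    omega
  refine ⟨(Finset.range (d - 1).natAbs).image fun k : ℕ => annulusProj (V k), ?_, ?_⟩
  · rw [Finset.card_image_of_injOn hinj, Finset.card_range]
  · simp only [Finset.mem_image, Finset.mem_range]
    rintro _ ⟨k, -, rfl⟩
    exact annulusProj_isFixedPt_of_lift hlift (hV k)

/-- if `f : A → A` has degree `d` (`|d| ≥ 2`) and every lift
`F + k` (`k ∈ ℤ`) has a fixed point, then `f` has at least `|d − 1|` fixed points. -/
theorem nielsen_count_fixed_points (d : ℤ) (hd : 2 ≤ |d|)
    (f : OpenAnnulus → OpenAnnulus) (hf : Continuous f)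
    (F : Strip → Strip) (hFcont : Continuous F)
    (hlift : ∀ v : Strip, annulusProj (F v) = f (annulusProj v))
    (hdeg : ∀ v : Strip, F (shift v) = htrans d (F v))
    (hfix : ∀ k : ℤ, ∃ v : Strip, htrans k (F v) = v) :
    ∃ S : Finset OpenAnnulus, (d - 1).natAbs ≤ S.card ∧ ∀ a ∈ S, f a = a :=
  nielsen_count_fixed_points_general d f F hlift hdeg hfix

end
end

section
/- Let d be an integer with |d| ≥ 2, let A = (ℝ/ℤ) × (0,1) be the open annulus, and let f : A → A be a continuous map of degree d. Suppose either (1) both ends of A are attracting: there exist 0 < a ≤ b < 1 with f((ℝ/ℤ) × (0,a]) ⊆ (ℝ/ℤ) × (0,a) and f((ℝ/ℤ) × [b,1)) ⊆ (ℝ/ℤ) × (b,1); or (2) both ends of A are repelling: there exist 0 < a ≤ b < 1 with f⁻¹((ℝ/ℤ) × (0,a]) ⊆ (ℝ/ℤ) × (0,a) and f⁻¹((ℝ/ℤ) × [b,1)) ⊆ (ℝ/ℤ) × (b,1). Then f has the rate: for every n ≥ 1 there exist |d^n − 1| pairwise distinct points x ∈ A with f^n(x) = x; in particular limsup (1/n)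 log #Fix(f^n) ≥ log |d|. -/
set_option maxHeartbeats 1000000

noncomputable section

/-- indicator (in `ZMod 2`) that a pair of labels is a `{0,1}` pair. -/
def pair01 (x y : Fin 3) : ZMod 2 :=
  if (x = 0 ∧ y = 1) ∨ (x = 1 ∧ y = 0) then 1 else 0

lemma telescope_zmod2 (n : ℕ) (a : ℕ → ZMod 2) :
    ∑ j ∈ Finset.range n, (a j + a (j + 1)) = a 0 + a n := by
  induction n with
  | zero => simp [eq_comm, CharTwo.add_self_eq_zero]
  | succ n ih =>
      rw [Finset.sum_range_succ, ih, add_assoc, ← add_assoc (a n),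
        CharTwo.add_self_eq_zero, zero_add]

lemma pair01_of_ne_two (x y : Fin 3) (hx : x ≠ 2) (hy : y ≠ 2) :
    pair01 x y = (if x = 1 then (1 : ZMod 2) else 0) + (if y = 1 then 1 else 0) := by
  revert hx hy; revert x y; decide

lemma pair01_no_zero (x y : Fin 3) (hx : x ≠ 0) (hy : y ≠ 0) : pair01 x y = 0 := by
  revert hx hy; revert x y; decide

lemma pair01_no_one (x y : Fin 3) (hx : x ≠ 1) (hy : y ≠ 1) : pair01 x y = 0 := by
  revert hx hy; revert x y; decide

lemma triangle_full (a b c : Fin 3)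
    (h : pair01 a b + pair01 b c + pair01 a c ≠ 0) :
    (a = 0 ∨ b = 0 ∨ c = 0) ∧ (a = 1 ∨ b = 1 ∨ c = 1) ∧ (a = 2 ∨ b = 2 ∨ c = 2) := by
  revert h; revert a b c; decide

lemma grid_parity (n : ℕ) (Hh Vv Dg : ℕ → ℕ → ZMod 2) :
    ∑ i ∈ Finset.range n, ∑ j ∈ Finset.range n,
        ((Hh i j + Vv (i + 1) j + Dg i j) + (Vv i j + Hh i (j + 1) + Dg i j))
      = ∑ i ∈ Finset.range n, (Hh i 0 + Hh i n)
        + ∑ j ∈ Finset.range n, (Vv 0 j + Vv n j) := by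
  have hsplit : ∀ i j : ℕ,
      ((Hh i j + Vv (i + 1) j + Dg i j) + (Vv i j + Hh i (j + 1) + Dg i j))
        = (Hh i j + Hh i (j + 1)) + (Vv i j + Vv (i + 1) j) := by
    intro i j
    have : Dg i j + Dg i j = 0 := CharTwo.add_self_eq_zero _
    linear_combination this
  calc ∑ i ∈ Finset.range n, ∑ j ∈ Finset.range n,
        ((Hh i j + Vv (i + 1) j + Dg i j) + (Vv i j + Hh i (j + 1) + Dg i j))
      = ∑ i ∈ Finset.range n, ∑ j ∈ Finset.range n,
          ((Hh i j + Hh i (j + 1)) + (Vv i j + Vv (i + 1) j)) :=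
        Finset.sum_congr rfl fun i _ => Finset.sum_congr rfl fun j _ => hsplit i j
    _ = ∑ i ∈ Finset.range n, ∑ j ∈ Finset.range n, (Hh i j + Hh i (j + 1))
        + ∑ i ∈ Finset.range n, ∑ j ∈ Finset.range n, (Vv i j + Vv (i + 1) j) := by
        rw [← Finset.sum_add_distrib]
        exact Finset.sum_congr rfl fun i _ => Finset.sum_add_distrib
    _ = ∑ i ∈ Finset.range n, (Hh i 0 + Hh i n)
        + ∑ j ∈ Finset.range n, (Vv 0 j + Vv n j) := by
        congr 1
        · exact Finset.sum_congr rfl fun i _ => telescope_zmod2 n (fun j => Hh i j)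
        · rw [Finset.sum_comm]
          exact Finset.sum_congr rfl fun j _ => telescope_zmod2 n (fun i => Vv i j)

/-- Discrete 2D Poincaré–Miranda lemma. -/
lemma discrete_miranda (n : ℕ) (hn : 1 ≤ n) (L : ℕ → ℕ → Fin 3)
    (h1 : ∀ j ≤ n, L 0 j = 1) (h2 : ∀ j ≤ n, L n j ≠ 1)
    (h3 : ∀ i ≤ n, L i 0 ≠ 0) (h4 : ∀ i ≤ n, L i n ≠ 2) :
    ∃ i j, i < n ∧ j < n ∧
      (∃ u ≤ 1, ∃ v ≤ 1, L (i + u) (j + v) = 0) ∧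
      (∃ u ≤ 1, ∃ v ≤ 1, L (i + u) (j + v) = 1) ∧
      (∃ u ≤ 1, ∃ v ≤ 1, L (i + u) (j + v) = 2) := by
  classical
  have key : ∑ i ∈ Finset.range n, ∑ j ∈ Finset.range n,
      ((pair01 (L i j) (L (i+1) j) + pair01 (L (i+1) j) (L (i+1) (j+1))
          + pair01 (L i j) (L (i+1) (j+1)))
        + (pair01 (L i j) (L i (j+1)) + pair01 (L i (j+1)) (L (i+1) (j+1))
          + pair01 (L i j) (L (i+1) (j+1)))) = 1 := by
    rw [grid_parity n (fun i j => pair01 (L i j) (L (i+1) j))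
      (fun i j => pair01 (L i j) (L i (j+1)))
      (fun i j => pair01 (L i j) (L (i+1) (j+1)))]
    have hH0 : ∀ i ∈ Finset.range n,
        (pair01 (L i 0) (L (i+1) 0) + pair01 (L i n) (L (i+1) n))
          = pair01 (L i n) (L (i+1) n) := by
      intro i hi
      have hi' : i < n := Finset.mem_range.mp hi
      rw [pair01_no_zero _ _ (h3 i (le_of_lt hi')) (h3 (i + 1) hi'), zero_add]
    have hV0 : ∀ j ∈ Finset.range n,
        (pair01 (L 0 j) (L 0 (j+1)) + pair01 (L n j) (L n (j+1))) = 0 := by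
      intro j hj
      have hj' : j < n := Finset.mem_range.mp hj
      have e1 : pair01 (L 0 j) (L 0 (j+1)) = 0 := by
        rw [h1 j (le_of_lt hj'), h1 (j + 1) hj']; decide
      rw [e1, pair01_no_one _ _ (h2 j (le_of_lt hj')) (h2 (j + 1) hj'), add_zero]
    rw [Finset.sum_congr rfl hH0, Finset.sum_congr rfl hV0,
      Finset.sum_const, smul_zero, add_zero]
    have hterm : ∀ i ∈ Finset.range n, pair01 (L i n) (L (i+1) n)
        = (if L i n = 1 then (1 : ZMod 2) else 0) + (if L (i+1) n = 1 then 1 else 0) := by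
      intro i hi
      have hi' : i < n := Finset.mem_range.mp hi
      exact pair01_of_ne_two _ _ (h4 i (le_of_lt hi')) (h4 (i + 1) hi')
    rw [Finset.sum_congr rfl hterm,
      telescope_zmod2 n (fun i => if L i n = 1 then (1 : ZMod 2) else 0)]
    simp [h1 n le_rfl, h2 n le_rfl]
  have hex : ∃ i ∈ Finset.range n, ∃ j ∈ Finset.range n,
      ((pair01 (L i j) (L (i+1) j) + pair01 (L (i+1) j) (L (i+1) (j+1))
          + pair01 (L i j) (L (i+1) (j+1)))
        + (pair01 (L i j) (L i (j+1)) + pair01 (L i (j+1)) (L (i+1) (j+1))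
          + pair01 (L i j) (L (i+1) (j+1)))) ≠ 0 := by
    by_contra h
    push_neg at h
    rw [Finset.sum_congr rfl (fun i hi => Finset.sum_eq_zero (h i hi)),
      Finset.sum_const, smul_zero] at key
    exact one_ne_zero key.symm
  obtain ⟨i, hi, j, hj, hT⟩ := hex
  have hi' : i < n := Finset.mem_range.mp hi
  have hj' : j < n := Finset.mem_range.mp hj
  have htri : (pair01 (L i j) (L (i+1) j) + pair01 (L (i+1) j) (L (i+1) (j+1))
        + pair01 (L i j) (L (i+1) (j+1))) ≠ 0 ∨
      (pair01 (L i j) (L i (j+1)) + pair01 (L i (j+1)) (L (i+1) (j+1))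
        + pair01 (L i j) (L (i+1) (j+1))) ≠ 0 := by
    by_contra hh
    push_neg at hh
    rw [hh.1, hh.2, add_zero] at hT
    exact hT rfl
  have key2 : (L i j = 0 ∨ L (i+1) j = 0 ∨ L i (j+1) = 0 ∨ L (i+1) (j+1) = 0) ∧
      (L i j = 1 ∨ L (i+1) j = 1 ∨ L i (j+1) = 1 ∨ L (i+1) (j+1) = 1) ∧
      (L i j = 2 ∨ L (i+1) j = 2 ∨ L i (j+1) = 2 ∨ L (i+1) (j+1) = 2) := by
    rcases htri with h | h
    · obtain ⟨ha, hb, hc⟩ := triangle_full _ _ _ h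
      exact ⟨by tauto, by tauto, by tauto⟩
    · obtain ⟨ha, hb, hc⟩ := triangle_full _ _ _ h
      exact ⟨by tauto, by tauto, by tauto⟩
  obtain ⟨k0, k1, k2⟩ := key2
  refine ⟨i, j, hi', hj', ?_, ?_, ?_⟩
  · rcases k0 with h | h | h | h
    · exact ⟨0, by omega, 0, by omega, by simpa using h⟩
    · exact ⟨1, le_rfl, 0, by omega, by simpa using h⟩
    · exact ⟨0, by omega, 1, le_rfl, by simpa using h⟩
    · exact ⟨1, le_rfl, 1, le_rfl, by simpa using h⟩
  · rcases k1 with h | h | h | h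
    · exact ⟨0, by omega, 0, by omega, by simpa using h⟩
    · exact ⟨1, le_rfl, 0, by omega, by simpa using h⟩
    · exact ⟨0, by omega, 1, le_rfl, by simpa using h⟩
    · exact ⟨1, le_rfl, 1, le_rfl, by simpa using h⟩
  · rcases k2 with h | h | h | h
    · exact ⟨0, by omega, 0, by omega, by simpa using h⟩
    · exact ⟨1, le_rfl, 0, by omega, by simpa using h⟩
    · exact ⟨0, by omega, 1, le_rfl, by simpa using h⟩
    · exact ⟨1, le_rfl, 1, le_rfl, by simpa using h⟩


/-- Poincaré–Miranda theorem on a rectangle. -/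
theorem miranda_rect (f g : ℝ × ℝ → ℝ) (hf : Continuous f) (hg : Continuous g)
    (x₀ x₁ y₀ y₁ : ℝ) (hx : x₀ < x₁) (hy : y₀ < y₁)
    (hleft : ∀ y ∈ Set.Icc y₀ y₁, f (x₀, y) < 0)
    (hright : ∀ y ∈ Set.Icc y₀ y₁, 0 < f (x₁, y))
    (hbot : ∀ x ∈ Set.Icc x₀ x₁, g (x, y₀) < 0)
    (htop : ∀ x ∈ Set.Icc x₀ x₁, 0 < g (x, y₁)) :
    ∃ p ∈ Set.Icc x₀ x₁ ×ˢ Set.Icc y₀ y₁, f p = 0 ∧ g p = 0 := by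
  classical
  by_contra hno
  push_neg at hno
  set R : Set (ℝ × ℝ) := Set.Icc x₀ x₁ ×ˢ Set.Icc y₀ y₁ with hR
  have hRc : IsCompact R := (isCompact_Icc).prod (isCompact_Icc)
  have hRne : R.Nonempty := ⟨(x₀, y₀), ⟨⟨le_refl _, le_of_lt hx⟩, ⟨le_refl _, le_of_lt hy⟩⟩⟩
  have hφc : Continuous fun p => max |f p| |g p| :=
    (hf.abs.max hg.abs)
  obtain ⟨p₀, hp₀R, hp₀min⟩ := hRc.exists_isMinOn hRne hφc.continuousOn
  set ε : ℝ := max |f p₀| |g p₀| with hε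
  have hεpos : 0 < ε := by
    rcases lt_or_ge 0 ε with h | h
    · exact h
    · exfalso
      have h1 : |f p₀| ≤ 0 := le_trans (le_max_left _ _) h
      have h2 : |g p₀| ≤ 0 := le_trans (le_max_right _ _) h
      exact hno p₀ hp₀R (abs_nonpos_iff.mp h1) (abs_nonpos_iff.mp h2)
  have hεmin : ∀ q ∈ R, ε ≤ max |f q| |g q| := fun q hq => hp₀min hq
  -- uniform continuity on R
  obtain ⟨δf, hδf, hfu⟩ := (Metric.uniformContinuousOn_iff.mp
    (hRc.uniformContinuousOn_of_continuous hf.continuousOn)) ε hεpos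
  obtain ⟨δg, hδg, hgu⟩ := (Metric.uniformContinuousOn_iff.mp
    (hRc.uniformContinuousOn_of_continuous hg.continuousOn)) ε hεpos
  set δ : ℝ := min δf δg with hδ
  have hδpos : 0 < δ := lt_min hδf hδg
  -- choose grid size
  obtain ⟨n, hnlt⟩ := exists_nat_gt (max ((x₁ - x₀) / δ) ((y₁ - y₀) / δ) + 1)
  have hXpos : 0 < x₁ - x₀ := sub_pos.mpr hx
  have hYpos : 0 < y₁ - y₀ := sub_pos.mpr hy
  have hn1 : 1 ≤ n := by
    by_contra h
    push_neg at h
    interval_cases n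
    · simp only [Nat.cast_zero] at hnlt
      have : (0:ℝ) ≤ max ((x₁ - x₀) / δ) ((y₁ - y₀) / δ) :=
        le_trans (le_of_lt (div_pos hXpos hδpos)) (le_max_left _ _)
      linarith
  have hnpos : (0:ℝ) < n := by exact_mod_cast hn1
  set c : ℝ := (x₁ - x₀) / n with hc
  set c' : ℝ := (y₁ - y₀) / n with hc'
  have hcpos : 0 < c := div_pos hXpos hnpos
  have hc'pos : 0 < c' := div_pos hYpos hnpos
  have hcδ : c < δ := by
    rw [hc, div_lt_iff₀ hnpos]
    have : (x₁ - x₀) / δ < n := by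
      have := le_max_left ((x₁ - x₀) / δ) ((y₁ - y₀) / δ)
      linarith
    calc x₁ - x₀ = ((x₁ - x₀) / δ) * δ := by field_simp
    _ < n * δ := by
        apply mul_lt_mul_of_pos_right this hδpos
    _ = δ * n := mul_comm _ _
  have hc'δ : c' < δ := by
    rw [hc', div_lt_iff₀ hnpos]
    have : (y₁ - y₀) / δ < n := by
      have := le_max_right ((x₁ - x₀) / δ) ((y₁ - y₀) / δ)
      linarith
    calc y₁ - y₀ = ((y₁ - y₀) / δ) * δ := by field_simp
    _ < n * δ := mul_lt_mul_of_pos_right this hδpos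
    _ = δ * n := mul_comm _ _
  set P : ℕ → ℕ → ℝ × ℝ := fun i j => (x₀ + i * c, y₀ + j * c') with hP
  have hPmem : ∀ i ≤ n, ∀ j ≤ n, P i j ∈ R := by
    intro i hi j hj
    have hi' : (i:ℝ) ≤ n := by exact_mod_cast hi
    have hj' : (j:ℝ) ≤ n := by exact_mod_cast hj
    constructor
    · constructor
      · simp only [hP]
        nlinarith [mul_nonneg (Nat.cast_nonneg i) (le_of_lt hcpos)]
      · have : (i:ℝ) * c ≤ n * c := mul_le_mul_of_nonneg_right hi' (le_of_lt hcpos)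
        have hnc : (n:ℝ) * c = x₁ - x₀ := by
          rw [hc]; field_simp
        simp only [hP]
        linarith
    · constructor
      · simp only [hP]
        nlinarith [mul_nonneg (Nat.cast_nonneg j) (le_of_lt hc'pos)]
      · have : (j:ℝ) * c' ≤ n * c' := mul_le_mul_of_nonneg_right hj' (le_of_lt hc'pos)
        have hnc : (n:ℝ) * c' = y₁ - y₀ := by
          rw [hc']; field_simp
        simp only [hP]
        linarith
  set L : ℕ → ℕ → Fin 3 := fun i j =>
    if f (P i j) < 0 then 1 else if g (P i j) < 0 then 2 else 0 with hL
  have hL1 : ∀ i j, L i j = 1 → f (P i j) < 0 := by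
    intro i j h
    by_contra hcon
    simp only [hL, if_neg hcon] at h
    split at h <;> simp_all
  have hL2 : ∀ i j, L i j = 2 → ¬ f (P i j) < 0 ∧ g (P i j) < 0 := by
    intro i j h
    simp only [hL] at h
    split at h
    · simp_all
    · split at h
      · simp_all
      · simp_all
  have hL0 : ∀ i j, L i j = 0 → ¬ f (P i j) < 0 ∧ ¬ g (P i j) < 0 := by
    intro i j h
    simp only [hL] at h
    split at h
    · simp_all
    · split at h
      · simp_all
      · simp_all
  -- boundary conditions for the labelling
  have hb1 : ∀ j ≤ n, L 0 j = 1 := by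
    intro j hj
    have hx0 : P 0 j = (x₀, y₀ + j * c') := by simp [hP]
    have hyj : y₀ + j * c' ∈ Set.Icc y₀ y₁ := ((hPmem 0 (by omega) j hj).2 : _)
    have := hleft _ hyj
    simp only [hL, hx0]
    rw [if_pos this]
  have hb2 : ∀ j ≤ n, L n j ≠ 1 := by
    intro j hj
    have hx1 : P n j = (x₁, y₀ + j * c') := by
      simp only [hP]
      have : x₀ + (n:ℝ) * c = x₁ := by rw [hc]; field_simp; ring
      rw [this]
    have hyj : y₀ + j * c' ∈ Set.Icc y₀ y₁ := ((hPmem n le_rfl j hj).2 : _)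
    have hpos := hright _ hyj
    intro h
    have := hL1 n j h
    rw [hx1] at this
    linarith
  have hb3 : ∀ i ≤ n, L i 0 ≠ 0 := by
    intro i hi
    have hy0 : P i 0 = (x₀ + i * c, y₀) := by simp [hP]
    have hxi : x₀ + i * c ∈ Set.Icc x₀ x₁ := ((hPmem i hi 0 (by omega)).1 : _)
    have hneg := hbot _ hxi
    intro h
    obtain ⟨-, h2⟩ := hL0 i 0 h
    rw [hy0] at h2
    exact h2 hneg
  have hb4 : ∀ i ≤ n, L i n ≠ 2 := by
    intro i hi
    have hy1 : P i n = (x₀ + i * c, y₁) := by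
      simp only [hP]
      have : y₀ + (n:ℝ) * c' = y₁ := by rw [hc']; field_simp; ring
      rw [this]
    have hxi : x₀ + i * c ∈ Set.Icc x₀ x₁ := ((hPmem i hi n le_rfl).1 : _)
    have hpos := htop _ hxi
    intro h
    obtain ⟨-, h2⟩ := hL2 i n h
    rw [hy1] at h2
    linarith
  obtain ⟨i, j, hi, hj, ⟨u0, hu0, v0, hv0, he0⟩, ⟨u1, hu1, v1, hv1, he1⟩,
    ⟨u2, hu2, v2, hv2, he2⟩⟩ := discrete_miranda n hn1 L hb1 hb2 hb3 hb4
  -- points within the cell are close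
  have hclose : ∀ u ≤ 1, ∀ v ≤ 1, ∀ u' ≤ 1, ∀ v' ≤ 1,
      dist (P (i + u) (j + v)) (P (i + u') (j + v')) < δ := by
    intro u hu v hv u' hu' v' hv'
    rw [Prod.dist_eq]
    have habs : ∀ (a b : ℕ), a ≤ 1 → b ≤ 1 → |(a:ℝ) - b| ≤ 1 := by
      intro a b ha hb
      interval_cases a <;> interval_cases b <;> norm_num
    have h1 : dist (P (i + u) (j + v)).1 (P (i + u') (j + v')).1 < δ := by
      simp only [hP, Real.dist_eq]
      have : x₀ + (↑(i + u):ℝ) * c - (x₀ + (↑(i + u'):ℝ) * c) = ((u:ℝ) - u') * c := by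
        push_cast; ring
      rw [this, abs_mul, abs_of_pos hcpos]
      calc |(u:ℝ) - u'| * c ≤ 1 * c :=
            mul_le_mul_of_nonneg_right (habs u u' hu hu') (le_of_lt hcpos)
        _ = c := one_mul c
        _ < δ := hcδ
    have h2 : dist (P (i + u) (j + v)).2 (P (i + u') (j + v')).2 < δ := by
      simp only [hP, Real.dist_eq]
      have : y₀ + (↑(j + v):ℝ) * c' - (y₀ + (↑(j + v'):ℝ) * c') = ((v:ℝ) - v') * c' := by
        push_cast; ring
      rw [this, abs_mul, abs_of_pos hc'pos]
      calc |(v:ℝ) - v'| * c' ≤ 1 * c' :=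
            mul_le_mul_of_nonneg_right (habs v v' hv hv') (le_of_lt hc'pos)
        _ = c' := one_mul c'
        _ < δ := hc'δ
    exact max_lt h1 h2
  have hmem : ∀ u ≤ 1, ∀ v ≤ 1, P (i + u) (j + v) ∈ R := fun u hu v hv =>
    hPmem (i + u) (by omega) (j + v) (by omega)
  -- derive the contradiction
  have hf0 : ¬ f (P (i + u0) (j + v0)) < 0 ∧ ¬ g (P (i + u0) (j + v0)) < 0 := hL0 _ _ he0
  have hf1 : f (P (i + u1) (j + v1)) < 0 := hL1 _ _ he1
  have hf2 : g (P (i + u2) (j + v2)) < 0 := (hL2 _ _ he2).2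
  have hd1 : dist (f (P (i + u0) (j + v0))) (f (P (i + u1) (j + v1))) < ε := by
    apply hfu _ (hmem u0 hu0 v0 hv0) _ (hmem u1 hu1 v1 hv1)
    exact lt_of_lt_of_le (hclose u0 hu0 v0 hv0 u1 hu1 v1 hv1) (min_le_left _ _)
  have hd2 : dist (g (P (i + u0) (j + v0))) (g (P (i + u2) (j + v2))) < ε := by
    apply hgu _ (hmem u0 hu0 v0 hv0) _ (hmem u2 hu2 v2 hv2)
    exact lt_of_lt_of_le (hclose u0 hu0 v0 hv0 u2 hu2 v2 hv2) (min_le_right _ _)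
  rw [Real.dist_eq] at hd1 hd2
  have hfa : |f (P (i + u0) (j + v0))| < ε := by
    rw [abs_of_nonneg (not_lt.mp hf0.1)]
    rw [abs_lt] at hd1
    linarith
  have hga : |g (P (i + u0) (j + v0))| < ε := by
    rw [abs_of_nonneg (not_lt.mp hf0.2)]
    rw [abs_lt] at hd2
    linarith
  have := hεmin _ (hmem u0 hu0 v0 hv0)
  have := max_lt hfa hga
  linarith

lemma strip_shift_int (d : ℤ) (F : Strip → Strip)
    (hdeg : ∀ v : Strip, F (shift v) = ((F v).1 + (d : ℝ), (F v).2)) :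
    ∀ (k : ℤ) (v : Strip), F (v.1 + (k : ℝ), v.2) = ((F v).1 + (k : ℝ) * d, (F v).2) := by
  intro k
  induction k using Int.induction_on with
  | zero => intro v; simp
  | succ k ih =>
      intro v
      have h1 : ((v.1 + ((k : ℤ) : ℝ), v.2) : Strip).1 + 1 = v.1 + ((k + 1 : ℤ) : ℝ) := by
        push_cast; ring
      have := hdeg (v.1 + ((k : ℤ) : ℝ), v.2)
      rw [show shift ((v.1 + ((k : ℤ) : ℝ), v.2) : Strip)
          = ((v.1 + ((k + 1 : ℤ) : ℝ), v.2) : Strip) from by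
        simp only [shift]; exact congrArg (fun t => (t, v.2)) h1] at this
      rw [this, ih v]
      have : (((k : ℤ) : ℝ)) * d + d = ((k + 1 : ℤ) : ℝ) * d := by push_cast; ring
      simp only [add_assoc, this]
  | pred k ih =>
      intro v
      have key := hdeg (v.1 + (-(k : ℝ) - 1), v.2)
      have h1 : shift ((v.1 + (-(k : ℝ) - 1), v.2) : Strip)
          = ((v.1 + ((-(k : ℤ) : ℤ) : ℝ), v.2) : Strip) := by
        simp only [shift]
        have : v.1 + (-(k : ℝ) - 1) + 1 = v.1 + ((-(k : ℤ) : ℤ) : ℝ) := by push_cast; ring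
        exact congrArg (fun t => (t, v.2)) this
      rw [h1, ih v] at key
      have harg : ((-(k : ℤ) - 1 : ℤ) : ℝ) = -(k : ℝ) - 1 := by push_cast; ring
      rw [harg]
      rw [Prod.mk.injEq] at key
      obtain ⟨kf, ks⟩ := key
      refine Prod.ext ?_ ks.symm
      push_cast at kf ⊢
      linarith

lemma strip_iter_shift (d : ℤ) (F : Strip → Strip)
    (hdeg : ∀ v : Strip, F (shift v) = ((F v).1 + (d : ℝ), (F v).2)) :
    ∀ (m : ℕ) (k : ℤ) (v : Strip),
      F^[m] (v.1 + (k : ℝ), v.2) = ((F^[m] v).1 + (k : ℝ) * (d : ℝ) ^ m, (F^[m] v).2) := by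
  intro m
  induction m with
  | zero => intro k v; simp
  | succ m ih =>
      intro k v
      rw [Function.iterate_succ_apply, Function.iterate_succ_apply]
      rw [strip_shift_int d F hdeg k v]
      have : ((F v).1 + (k : ℝ) * d, (F v).2)
          = (((F v).1 + ((k * d : ℤ) : ℝ), (F v).2) : Strip) := by
        push_cast; rfl
      rw [this, ih (k * d) (F v)]
      have : ((k * d : ℤ) : ℝ) * (d : ℝ) ^ m = (k : ℝ) * (d : ℝ) ^ (m + 1) := by
        push_cast; ring
      rw [this]

lemma lift_iter (f : OpenAnnulus → OpenAnnulus) (F : Strip → Strip)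
    (hlift : ∀ v : Strip, annulusProj (F v) = f (annulusProj v)) :
    ∀ (m : ℕ) (v : Strip), annulusProj (F^[m] v) = f^[m] (annulusProj v) := by
  intro m
  induction m with
  | zero => intro v; simp
  | succ m ih =>
      intro v
      rw [Function.iterate_succ_apply, Function.iterate_succ_apply, ← hlift v, ih (F v)]

lemma proj_int_translate (k : ℤ) (v : Strip) :
    annulusProj ((v.1 + (k : ℝ), v.2) : Strip) = annulusProj v := by
  unfold annulusProj
  refine Prod.ext ?_ rfl
  show ((v.1 + (k : ℝ) : ℝ) : AddCircle (1 : ℝ)) = (v.1 : AddCircle (1 : ℝ))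
  rw [QuotientAddGroup.eq_iff_sub_mem]
  refine ⟨k, ?_⟩
  simp

lemma proj_eq_translate {v w : Strip} (h : annulusProj v = annulusProj w) :
    ∃ m : ℤ, w = ((v.1 + (m : ℝ), v.2) : Strip) := by
  have h1 : (v.1 : AddCircle (1 : ℝ)) = (w.1 : AddCircle (1 : ℝ)) :=
    congrArg (fun q : OpenAnnulus => q.1) h
  have h2 : v.2 = w.2 := congrArg (fun q : OpenAnnulus => q.2) h
  rw [QuotientAddGroup.eq_iff_sub_mem] at h1
  obtain ⟨m, hm⟩ := h1
  refine ⟨-m, ?_⟩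
  have hmm : (m : ℤ) • (1 : ℝ) = v.1 - w.1 := hm
  simp only [zsmul_eq_mul, mul_one] at hmm
  have hw1 : w.1 = v.1 + ((-m : ℤ) : ℝ) := by push_cast; linarith
  exact Prod.ext hw1 h2.symm


/-- a continuous degree-`d` map of the open annulus (`|d| ≥ 2`)
whose two ends are both attracting, or both repelling, has the rate: for every
`n ≥ 1` there are at least `|d^n − 1|` fixed points of `f^n`. -/
theorem both_ends_attracting_or_repelling_rate (d : ℤ) (hd : 2 ≤ |d|)
    (f : OpenAnnulus → OpenAnnulus) (hf : Continuous f)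
    (F : Strip → Strip) (hFcont : Continuous F)
    (hlift : ∀ v : Strip, annulusProj (F v) = f (annulusProj v))
    (hdeg : ∀ v : Strip, F (shift v) = ((F v).1 + (d : ℝ), (F v).2))
    (hends :
      (∃ a b : ℝ, 0 < a ∧ a ≤ b ∧ b < 1 ∧
        (f '' {v : OpenAnnulus | (v.2 : ℝ) ≤ a} ⊆ {v : OpenAnnulus | (v.2 : ℝ) < a}) ∧
        (f '' {v : OpenAnnulus | b ≤ (v.2 : ℝ)} ⊆ {v : OpenAnnulus | b < (v.2 : ℝ)})) ∨
      (∃ a b : ℝ, 0 < a ∧ a ≤ b ∧ b < 1 ∧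
        (f ⁻¹' {v : OpenAnnulus | (v.2 : ℝ) ≤ a} ⊆ {v : OpenAnnulus | (v.2 : ℝ) < a}) ∧
        (f ⁻¹' {v : OpenAnnulus | b ≤ (v.2 : ℝ)} ⊆ {v : OpenAnnulus | b < (v.2 : ℝ)}))) :
    ∀ n : ℕ, 1 ≤ n → ∃ S : Finset OpenAnnulus,
      (d ^ n - 1).natAbs ≤ S.card ∧ ∀ x ∈ S, f^[n] x = x := by
  intro n hn
  classical
  -- coordinates of the iterate on the strip agree with those of the iterate downstairs
  have hsnd : ∀ v : Strip, ((F^[n] v).2 : ℝ) = ((f^[n] (annulusProj v)).2 : ℝ) := by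
    intro v
    have h := lift_iter f F hlift n v
    have : (annulusProj (F^[n] v)).2 = (f^[n] (annulusProj v)).2 :=
      congrArg (fun q : OpenAnnulus => q.2) h
    exact congrArg _ this
  -- unified sign condition at the two horizontal boundary circles
  have hvert : ∃ a b s : ℝ, 0 < a ∧ a < b ∧ b < 1 ∧ (s = 1 ∨ s = -1) ∧
      (∀ v : Strip, (v.2 : ℝ) = a → s * (((F^[n] v).2 : ℝ) - a) < 0) ∧
      (∀ v : Strip, (v.2 : ℝ) = b → 0 < s * (((F^[n] v).2 : ℝ) - b)) := by
    obtain ⟨m0, rfl⟩ : ∃ m0, n = m0 + 1 := ⟨n - 1, by omega⟩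
    rcases hends with ⟨a, b, ha, hab, hb, hlow, hhigh⟩ | ⟨a, b, ha, hab, hb, hlow, hhigh⟩
    · have hlow' : ∀ m : ℕ, ∀ x : OpenAnnulus,
          (x.2 : ℝ) ≤ a → ((f^[m + 1] x).2 : ℝ) < a := by
        intro m
        induction m with
        | zero => intro x hx; exact hlow ⟨x, hx, by simp⟩
        | succ m ih =>
            intro x hx
            rw [Function.iterate_succ_apply]
            exact ih (f x) (le_of_lt (hlow ⟨x, hx, rfl⟩))
      have hhigh' : ∀ m : ℕ, ∀ x : OpenAnnulus,
          b ≤ (x.2 : ℝ) → b < ((f^[m + 1] x).2 : ℝ) := by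
        intro m
        induction m with
        | zero => intro x hx; exact hhigh ⟨x, hx, by simp⟩
        | succ m ih =>
            intro x hx
            rw [Function.iterate_succ_apply]
            exact ih (f x) (le_of_lt (hhigh ⟨x, hx, rfl⟩))
      have haltb : a < b := by
        rcases lt_or_eq_of_le hab with h | h
        · exact h
        · exfalso
          have hmem : (((0 : AddCircle (1 : ℝ)),
              (⟨a, ha, lt_of_le_of_lt hab hb⟩ : Set.Ioo (0:ℝ) 1)) : OpenAnnulus)
              ∈ {v : OpenAnnulus | (v.2 : ℝ) ≤ a} := le_refl a
          have hmem2 : (((0 : AddCircle (1 : ℝ)),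
              (⟨a, ha, lt_of_le_of_lt hab hb⟩ : Set.Ioo (0:ℝ) 1)) : OpenAnnulus)
              ∈ {v : OpenAnnulus | b ≤ (v.2 : ℝ)} := le_of_eq h.symm
          have h1 := hlow (Set.mem_image_of_mem f hmem)
          have h2 := hhigh (Set.mem_image_of_mem f hmem2)
          have h1' : ((f (((0 : AddCircle (1 : ℝ)),
              (⟨a, ha, lt_of_le_of_lt hab hb⟩ : Set.Ioo (0:ℝ) 1)) : OpenAnnulus)).2 : ℝ) < a := h1
          have h2' : b < ((f (((0 : AddCircle (1 : ℝ)),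
              (⟨a, ha, lt_of_le_of_lt hab hb⟩ : Set.Ioo (0:ℝ) 1)) : OpenAnnulus)).2 : ℝ) := h2
          linarith
      refine ⟨a, b, 1, ha, haltb, hb, Or.inl rfl, ?_, ?_⟩
      · intro v hv
        have := hlow' m0 (annulusProj v) (le_of_eq hv)
        rw [← hsnd v] at this
        linarith
      · intro v hv
        have := hhigh' m0 (annulusProj v) (le_of_eq hv.symm)
        rw [← hsnd v] at this
        linarith
    · have hlow' : ∀ m : ℕ, ∀ x : OpenAnnulus,
          ((f^[m + 1] x).2 : ℝ) ≤ a → (x.2 : ℝ) < a := by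
        intro m
        induction m with
        | zero => intro x hx; exact hlow (by simpa using hx)
        | succ m ih =>
            intro x hx
            rw [Function.iterate_succ_apply] at hx
            exact hlow (le_of_lt (ih (f x) hx))
      have hhigh' : ∀ m : ℕ, ∀ x : OpenAnnulus,
          b ≤ ((f^[m + 1] x).2 : ℝ) → b < (x.2 : ℝ) := by
        intro m
        induction m with
        | zero => intro x hx; exact hhigh (by simpa using hx)
        | succ m ih =>
            intro x hx
            rw [Function.iterate_succ_apply] at hx
            exact hhigh (le_of_lt (ih (f x) hx))
      have haltb : a < b := by
        rcases lt_or_eq_of_le hab with h | h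
        · exact h
        · exfalso
          set x₀ : OpenAnnulus := ((0 : AddCircle (1 : ℝ)), ⟨a, ha, lt_of_le_of_lt hab hb⟩)
          rcases le_or_gt ((f x₀).2 : ℝ) a with h1 | h1
          · have : (x₀.2 : ℝ) < a := hlow h1
            simp only [x₀] at this
            exact absurd this (lt_irrefl a)
          · have : b < (x₀.2 : ℝ) := hhigh (by rw [← h]; exact le_of_lt h1)
            simp only [x₀] at this
            rw [← h] at this
            exact absurd this (lt_irrefl a)
      refine ⟨a, b, -1, ha, haltb, hb, Or.inr rfl, ?_, ?_⟩
      · intro v hv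
        have : a < ((f^[m0 + 1] (annulusProj v)).2 : ℝ) := by
          by_contra hcon
          push_neg at hcon
          have := hlow' m0 (annulusProj v) hcon
          have hv2 : ((annulusProj v).2 : ℝ) = a := hv
          linarith
        rw [← hsnd v] at this
        linarith
      · intro v hv
        have : ((f^[m0 + 1] (annulusProj v)).2 : ℝ) < b := by
          by_contra hcon
          push_neg at hcon
          have := hhigh' m0 (annulusProj v) hcon
          have hv2 : ((annulusProj v).2 : ℝ) = b := hv
          linarith
        rw [← hsnd v] at this
        linarith
  obtain ⟨a, b, s, ha, hab, hb1, hs, hbotS, htopS⟩ := hvert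
  -- the degree of the iterate
  have habs : 2 ≤ |d ^ n| := by
    rw [abs_pow]
    calc (2 : ℤ) ≤ 2 ^ n := le_self_pow₀ (by norm_num) (by omega)
      _ ≤ |d| ^ n := pow_le_pow_left₀ (by norm_num) hd n
  have hne : d ^ n - 1 ≠ 0 := by
    intro h
    have : d ^ n = 1 := by omega
    rw [this] at habs
    norm_num at habs
  set t : ℝ := if 0 ≤ d ^ n - 1 then (1 : ℝ) else -1 with htdef
  have ht1 : t = 1 ∨ t = -1 := by
    rw [htdef]; split_ifs <;> simp
  have hte : 1 ≤ t * ((d : ℝ) ^ n - 1) := by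
    rw [htdef]
    split_ifs with h
    · have h1 : 1 ≤ d ^ n - 1 := by omega
      have : (1 : ℝ) ≤ ((d ^ n - 1 : ℤ) : ℝ) := by exact_mod_cast h1
      push_cast at this
      linarith
    · push_neg at h
      have h1 : d ^ n - 1 ≤ -1 := by omega
      have : ((d ^ n - 1 : ℤ) : ℝ) ≤ -1 := by exact_mod_cast h1
      push_cast at this
      linarith
  -- the clamping map into the strip
  have hIoo : ∀ y : ℝ, max a (min b y) ∈ Set.Ioo (0 : ℝ) 1 :=
    fun y => ⟨lt_of_lt_of_le ha (le_max_left _ _),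
      lt_of_le_of_lt (max_le (le_of_lt hab) (min_le_left _ _)) hb1⟩
  set ι : ℝ × ℝ → Strip := fun p => (p.1, ⟨max a (min b p.2), hIoo p.2⟩) with hιdef
  have hιc : Continuous ι := by
    apply Continuous.prodMk continuous_fst
    exact Continuous.subtype_mk (continuous_const.max (continuous_const.min continuous_snd)) _
  have hGc : Continuous (F^[n] : Strip → Strip) := hFcont.iterate n
  -- existence of a lifted fixed point for every deck translation
  have hexist : ∀ k : ℤ, ∃ v : Strip, F^[n] v = ((v.1 + (k : ℝ), v.2) : Strip) := by
    intro k
    set fM : ℝ × ℝ → ℝ := fun p => t * ((F^[n] (ι p)).1 - p.1 - k) with hfMdef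
    set gM : ℝ × ℝ → ℝ := fun p => s * (((F^[n] (ι p)).2 : ℝ) - max a (min b p.2)) with hgMdef
    have hfMc : Continuous fM :=
      continuous_const.mul (((continuous_fst.comp (hGc.comp hιc)).sub continuous_fst).sub
        continuous_const)
    have hgMc : Continuous gM := by
      apply continuous_const.mul
      apply Continuous.sub
      · exact continuous_subtype_val.comp (continuous_snd.comp (hGc.comp hιc))
      · exact continuous_const.max (continuous_const.min continuous_snd)
    -- translation property of fM
    have htr : ∀ (j : ℤ) (y : ℝ), fM ((j : ℝ), y) = fM (0, y) + (j : ℝ) * (t * ((d : ℝ) ^ n - 1)) := by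
      intro j y
      have hι : ι ((j : ℝ), y) = (((ι (0, y)).1 + (j : ℝ), (ι (0, y)).2) : Strip) := by
        simp only [hιdef]
        exact congrArg (fun x => (x, (⟨max a (min b y), hIoo y⟩ : Set.Ioo (0:ℝ) 1))) (by ring)
      have hsh := strip_iter_shift d F hdeg n j (ι (0, y))
      simp only [hfMdef]
      rw [hι, hsh]
      ring
    -- bound on the base segment
    obtain ⟨C, hC⟩ := (isCompact_Icc : IsCompact (Set.Icc a b)).exists_bound_of_continuousOn
      (show ContinuousOn (fun y : ℝ => fM (0, y)) (Set.Icc a b) from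
        (hfMc.comp ((continuous_const : Continuous fun _ : ℝ => (0:ℝ)).prodMk
          continuous_id)).continuousOn)
    have hC' : ∀ y ∈ Set.Icc a b, |fM (0, y)| ≤ C := by
      intro y hy
      simpa using hC y hy
    obtain ⟨m, hm⟩ := exists_nat_gt (max C 0)
    have hm0 : (0 : ℝ) < m := lt_of_le_of_lt (le_max_right _ _) hm
    have hmC : C < m := lt_of_le_of_lt (le_max_left _ _) hm
    have hmm : -(m : ℝ) < m := by linarith
    have hleft : ∀ y ∈ Set.Icc a b, fM (-(m : ℝ), y) < 0 := by
      intro y hy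
      have h1 : fM (-(m : ℝ), y) = fM (0, y) + (-(m : ℝ)) * (t * ((d : ℝ) ^ n - 1)) := by
        have := htr (-(m : ℤ)) y
        push_cast at this
        exact this
      have h2 : |fM (0, y)| ≤ C := hC' y hy
      have h3 : (m : ℝ) ≤ (m : ℝ) * (t * ((d : ℝ) ^ n - 1)) := by
        nlinarith
      rw [h1]
      have := abs_le.mp h2
      nlinarith
    have hright : ∀ y ∈ Set.Icc a b, 0 < fM ((m : ℝ), y) := by
      intro y hy
      have h1 : fM ((m : ℝ), y) = fM (0, y) + (m : ℝ) * (t * ((d : ℝ) ^ n - 1)) := by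
        have := htr (m : ℤ) y
        push_cast at this
        exact this
      have h2 := abs_le.mp (hC' y hy)
      have h3 : (m : ℝ) ≤ (m : ℝ) * (t * ((d : ℝ) ^ n - 1)) := by nlinarith
      rw [h1]
      nlinarith
    have hclampa : max a (min b a) = a := by
      rw [min_eq_right (le_of_lt hab), max_self]
    have hclampb : max a (min b b) = b := by
      rw [min_self, max_eq_right (le_of_lt hab)]
    have hbot : ∀ x ∈ Set.Icc (-(m : ℝ)) m, gM (x, a) < 0 := by
      intro x hx
      have hv : ((ι (x, a)).2 : ℝ) = a := hclampa
      have := hbotS (ι (x, a)) hv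
      simp only [hgMdef]
      rw [hclampa]
      exact this
    have htop : ∀ x ∈ Set.Icc (-(m : ℝ)) m, 0 < gM (x, b) := by
      intro x hx
      have hv : ((ι (x, b)).2 : ℝ) = b := hclampb
      have := htopS (ι (x, b)) hv
      simp only [hgMdef]
      rw [hclampb]
      exact this
    obtain ⟨p, hpR, hfz, hgz⟩ := miranda_rect fM gM hfMc hgMc (-(m : ℝ)) m a b hmm hab
      hleft hright hbot htop
    have hclamp_p : max a (min b p.2) = p.2 := by
      obtain ⟨-, hp2⟩ := hpR
      rw [min_eq_right hp2.2, max_eq_right hp2.1]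
    refine ⟨ι p, ?_⟩
    have hfz' : (F^[n] (ι p)).1 = p.1 + k := by
      simp only [hfMdef] at hfz
      rcases ht1 with h | h <;> rw [h] at hfz <;> linarith [hfz]
    have hgz' : ((F^[n] (ι p)).2 : ℝ) = p.2 := by
      simp only [hgMdef] at hgz
      rw [hclamp_p] at hgz
      rcases hs with h | h <;> rw [h] at hgz <;> linarith [hgz]
    refine Prod.ext ?_ ?_
    · show (F^[n] (ι p)).1 = (ι p).1 + (k : ℝ)
      exact hfz'
    · apply Subtype.ext
      show ((F^[n] (ι p)).2 : ℝ) = ((ι p).2 : ℝ)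
      rw [hgz']
      exact hclamp_p.symm
  choose vv hvv using hexist
  set N : ℕ := (d ^ n - 1).natAbs with hNdef
  refine ⟨(Finset.range N).image (fun j : ℕ => annulusProj (vv (j : ℤ))), ?_, ?_⟩
  · rw [Finset.card_image_of_injOn, Finset.card_range]
    intro j hj l hl heq
    simp only [Finset.coe_range, Set.mem_Iio] at hj hl
    obtain ⟨m, hm⟩ := proj_eq_translate heq
    have e1f : (F^[n] (vv (j : ℤ))).1 = (vv (j : ℤ)).1 + ((j : ℤ) : ℝ) :=
      (Prod.ext_iff.mp (hvv (j : ℤ))).1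
    have e2f : (F^[n] (vv (l : ℤ))).1 = (vv (l : ℤ)).1 + ((l : ℤ) : ℝ) :=
      (Prod.ext_iff.mp (hvv (l : ℤ))).1
    have hmf : (vv (l : ℤ)).1 = (vv (j : ℤ)).1 + (m : ℝ) := (Prod.ext_iff.mp hm).1
    have e3f : (F^[n] ((vv (j : ℤ)).1 + (m : ℝ), (vv (j : ℤ)).2)).1
        = (F^[n] (vv (j : ℤ))).1 + (m : ℝ) * (d : ℝ) ^ n :=
      (Prod.ext_iff.mp (strip_iter_shift d F hdeg n m (vv (j : ℤ)))).1
    have h4 : (F^[n] (vv (l : ℤ))).1 = (F^[n] (vv (j : ℤ))).1 + (m : ℝ) * (d : ℝ) ^ n := by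
      rw [hm]; exact e3f
    have hr : ((j : ℝ)) + (m : ℝ) * (d : ℝ) ^ n = (m : ℝ) + l := by
      rw [e2f, hmf, e1f] at h4
      push_cast at h4 ⊢
      linarith
    have hint : (j : ℤ) + m * d ^ n = m + l := by exact_mod_cast hr
    have hml : (l : ℤ) - j = m * (d ^ n - 1) := by linear_combination -hint
    have hNabs : (N : ℤ) = |d ^ n - 1| := (Int.abs_eq_natAbs _).symm
    by_cases hm0 : m = 0
    · rw [hm0] at hml
      simp at hml
      omega
    · exfalso
      have h1 : 1 ≤ |m| := by
        have := abs_pos.mpr hm0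
        linarith
      have h2 : |(l : ℤ) - (j : ℕ)| < (N : ℤ) := by
        rw [abs_lt]
        omega
      rw [hml, abs_mul] at h2
      have h5 : 1 * |d ^ n - 1| ≤ |m| * |d ^ n - 1| :=
        mul_le_mul_of_nonneg_right h1 (abs_nonneg _)
      linarith
  · intro x hx
    simp only [Finset.mem_image] at hx
    obtain ⟨j, -, rfl⟩ := hx
    rw [← lift_iter f F hlift n (vv (j : ℤ)), hvv (j : ℤ), proj_int_translate]

end
end

section
/- Let d be an integer with |d| ≥ 2, let A = (ℝ/ℤ) × (0,1) be the open annulus, and let f : A → A be a continuous map of degree d that interchanges the ends of A: for every ε ∈ (0, 1/2) there exists δ ∈ (0, 1/2) such that f((ℝ/ℤ) × (0,δ)) ⊆ (ℝ/ℤ) × (1−ε, 1) and f((ℝ/ℤ) × (1−δ, 1)) ⊆ (ℝ/ℤ) × (0, ε). Then f has the rate: the growth rate inequality limsup (1/n) log #Fix(f^n) ≥ log |d| holds, i.e. there is a function c : ℕ → ℕ such that for every n ≥ 1 there exist c(n) pairwise distinct points x ∈ A with f^n(x) = x and limsup (1/n) log c(n) ≥ log |d|. -/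
noncomputable section

open Real Set Complex Finset

private lemma tele_prod (g : ℕ → ℂ) (hg : ∀ i, g i ≠ 0) (n : ℕ) :
    ∏ i ∈ Finset.range n, (g (i+1) / g i) = g n / g 0 := by
  induction n with
  | zero => simp [div_self (hg 0)]
  | succ n ih =>
    rw [Finset.prod_range_succ, ih]
    field_simp
    rw [mul_div_mul_left _ _ (hg n)]

private lemma re_div_pos {z w : ℂ} (hw : w ≠ 0) (h : ‖z - w‖ < ‖w‖) :
    0 < (z / w).re := by
  have hw' : 0 < ‖w‖ := norm_pos_iff.mpr hw
  have h1 : ‖z / w - 1‖ < 1 := by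
    rw [show z / w - 1 = (z - w) / w by field_simp]
    rw [norm_div, div_lt_one hw']
    exact h
  have h2 : (‖z/w - 1‖)^2 < 1 := by nlinarith [norm_nonneg (z/w-1)]
  rw [Complex.sq_norm, Complex.normSq_apply] at h2
  simp only [Complex.sub_re, Complex.sub_im, Complex.one_re, Complex.one_im] at h2
  nlinarith

private lemma exp_arg_mul_I (w : ℂ) (hw : w ≠ 0) :
    Complex.exp (Complex.arg w * Complex.I) = w / ‖w‖ := by
  have h := Complex.norm_mul_exp_arg_mul_I w
  have h0 : (‖w‖ : ℂ) ≠ 0 := by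
    simpa using norm_ne_zero_iff.mpr hw
  rw [eq_div_iff h0, mul_comm]
  exact h

private lemma norm_div_eq (z w : ℂ) (hz : z ≠ 0) (hw : w ≠ 0) :
    (z / w) / (‖z / w‖ : ℂ) = (z / (‖z‖ : ℂ)) / (w / (‖w‖ : ℂ)) := by
  have hz' : (‖z‖ : ℂ) ≠ 0 := by simpa using norm_ne_zero_iff.mpr hz
  have hw' : (‖w‖ : ℂ) ≠ 0 := by simpa using norm_ne_zero_iff.mpr hw
  rw [norm_div]
  push_cast
  field_simp

private lemma min_sub_min (x s s' : ℝ) (h : s ≤ s') : |min x s' - min x s| ≤ s' - s := by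
  rcases le_total x s with h1 | h1
  · rw [min_eq_left h1, min_eq_left (le_trans h1 h)]
    simp
    linarith
  · rw [min_eq_right h1]
    rcases le_total x s' with h2 | h2
    · rw [min_eq_left h2, abs_le]
      constructor <;> linarith
    · rw [min_eq_right h2, abs_le]
      constructor <;> linarith

private lemma sin_band_aux {u v : ℝ} (huv : u ≤ v) (h : ∀ x ∈ Set.Icc u v, 0 ≤ Real.sin x) :
    ∃ k : ℤ, (2*k*π ≤ u ∧ u ≤ 2*k*π + π) ∧ (2*k*π ≤ v ∧ v ≤ 2*k*π + π) := by
  have hπ := Real.pi_pos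
  set k : ℤ := ⌊u / (2*π)⌋ with hk
  have h2π : (0:ℝ) < 2*π := by linarith
  have hkl : 2*k*π ≤ u := by
    have h1 := Int.floor_le (u / (2*π))
    calc 2*(k:ℝ)*π = (k:ℝ) * (2*π) := by ring
    _ ≤ (u / (2*π)) * (2*π) := mul_le_mul_of_nonneg_right h1 (le_of_lt h2π)
    _ = u := by field_simp
  have hku : u < 2*k*π + 2*π := by
    have h1 := Int.lt_floor_add_one (u / (2*π))
    have h2 := (div_lt_iff₀ h2π).1 h1
    nlinarith
  have sin_neg_of : ∀ x : ℝ, 2*k*π + π < x → x < 2*k*π + 2*π → Real.sin x < 0 := by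
    intro x h1 h2
    have hx : Real.sin x = Real.sin (x - k*(2*π)) := (Real.sin_sub_int_mul_two_pi x k).symm
    rw [hx]
    have hx1 : π < x - k*(2*π) := by nlinarith
    have hx2 : x - k*(2*π) < 2*π := by nlinarith
    have hpos : Real.sin ((x - k*(2*π)) - π) > 0 := by
      apply Real.sin_pos_of_pos_of_lt_pi <;> linarith
    rw [Real.sin_sub_pi] at hpos
    linarith
  have hum : u ≤ 2*k*π + π := by
    by_contra hc
    push_neg at hc
    exact absurd (h u ⟨le_refl _, huv⟩) (not_le.2 (sin_neg_of u hc hku))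
  refine ⟨k, ⟨hkl, hum⟩, le_trans hkl huv, ?_⟩
  by_contra hc
  push_neg at hc
  have hx : min v (2*k*π + 3*π/2) ∈ Set.Icc u v :=
    ⟨le_min (by linarith) (by linarith), min_le_left _ _⟩
  have h1 := h _ hx
  have h2 : Real.sin (min v (2*k*π + 3*π/2)) < 0 := by
    apply sin_neg_of
    · exact lt_min hc (by linarith)
    · calc min v (2*k*π + 3*π/2) ≤ 2*k*π + 3*π/2 := min_le_right _ _
      _ < 2*k*π + 2*π := by linarith
  linarith

private lemma sin_band {u v : ℝ} (h : ∀ x ∈ Set.uIcc u v, 0 ≤ Real.sin x) :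
    ∃ k : ℤ, (2*k*π ≤ u ∧ u ≤ 2*k*π + π) ∧ (2*k*π ≤ v ∧ v ≤ 2*k*π + π) := by
  rcases le_total u v with huv | huv
  · exact sin_band_aux huv (fun x hx => h x (by rwa [Set.uIcc_of_le huv]))
  · obtain ⟨k, h1, h2⟩ := sin_band_aux huv (fun x hx => h x (by rwa [Set.uIcc_of_ge huv]))
    exact ⟨k, h2, h1⟩

set_option maxHeartbeats 1000000 in
private lemma miranda {a b c e : ℝ} (hab : a ≤ b) (hce : c ≤ e)
    {φ : ℝ × ℝ → ℂ} (hφ : ContinuousOn φ (Set.Icc a b ×ˢ Set.Icc c e))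
    (hleft : ∀ y ∈ Set.Icc c e, (φ (a, y)).re ≤ 0)
    (hright : ∀ y ∈ Set.Icc c e, 0 ≤ (φ (b, y)).re)
    (hbot : ∀ x ∈ Set.Icc a b, 0 ≤ (φ (x, c)).im)
    (htop : ∀ x ∈ Set.Icc a b, (φ (x, e)).im ≤ 0) :
    ∃ p ∈ Set.Icc a b ×ˢ Set.Icc c e, φ p = 0 := by
  by_contra hcon
  push_neg at hcon
  set R : Set (ℝ × ℝ) := Set.Icc a b ×ˢ Set.Icc c e with hR
  have hne : ∀ p ∈ R, φ p ≠ 0 := hcon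
  have hRc : IsCompact R := isCompact_Icc.prod isCompact_Icc
  have hac : ((a, c) : ℝ × ℝ) ∈ R := ⟨⟨le_refl _, hab⟩, ⟨le_refl _, hce⟩⟩
  have hRne : R.Nonempty := ⟨(a, c), hac⟩
  obtain ⟨p₀, hp₀R, hp₀⟩ := hRc.exists_isMinOn hRne (continuous_norm.comp_continuousOn hφ)
  set μ := ‖φ p₀‖ with hμdef
  clear_value μ
  have hμ : 0 < μ := hμdef ▸ norm_pos_iff.mpr (hne p₀ hp₀R)
  have hμle : ∀ p ∈ R, μ ≤ ‖φ p‖ := by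
    intro p hp
    rw [hμdef]
    exact hp₀ hp
  have hUC := hRc.uniformContinuousOn_of_continuous hφ
  rw [Metric.uniformContinuousOn_iff] at hUC
  obtain ⟨δ, hδ, hUC⟩ := hUC μ hμ
  have hratio : ∀ p ∈ R, ∀ q ∈ R, dist p q < δ → 0 < (φ p / φ q).re := by
    intro p hp q hq hpq
    apply re_div_pos (hne q hq)
    rw [← Complex.dist_eq]
    exact lt_of_lt_of_le (hUC p hp q hq hpq) (hμle q hq)
  obtain ⟨M₀, hM₀⟩ := exists_nat_gt (max (b - a) (e - c) / δ)
  set M : ℕ := M₀ + 1 with hM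
  clear_value M
  have hMpos : (0:ℝ) < M := by rw [hM]; positivity
  have hMne : (M:ℝ) ≠ 0 := ne_of_gt hMpos
  have hba : b - a < M * δ := by
    have h1 : (b - a) / δ < M := by
      calc (b-a)/δ ≤ max (b-a) (e-c)/δ := by gcongr; exact le_max_left _ _
      _ < M₀ := hM₀
      _ < M := by rw [hM]; push_cast; linarith
    linarith [(div_lt_iff₀ hδ).1 h1]
  have hec : e - c < M * δ := by
    have h1 : (e - c) / δ < M := by
      calc (e-c)/δ ≤ max (b-a) (e-c)/δ := by gcongr; exact le_max_right _ _
      _ < M₀ := hM₀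
      _ < M := by rw [hM]; push_cast; linarith
    linarith [(div_lt_iff₀ hδ).1 h1]
  set xg : ℕ → ℝ := fun j => a + j * ((b - a) / M) with hxg
  set yg : ℕ → ℝ := fun i => c + i * ((e - c) / M) with hyg
  clear_value xg yg
  have hxg0 : xg 0 = a := by simp [hxg]
  have hyg0 : yg 0 = c := by simp [hyg]
  have hxgM : xg M = b := by rw [hxg]; field_simp; ring
  have hygM : yg M = e := by rw [hyg]; field_simp; ring
  have hxga : ∀ j, a ≤ xg j := by
    intro j
    rw [hxg]
    have h0 : 0 ≤ (j:ℝ) * ((b - a)/M) :=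
      mul_nonneg (Nat.cast_nonneg j) (div_nonneg (by linarith) hMpos.le)
    simp only []
    linarith
  have hyga : ∀ i, c ≤ yg i := by
    intro i
    rw [hyg]
    have h0 : 0 ≤ (i:ℝ) * ((e - c)/M) :=
      mul_nonneg (Nat.cast_nonneg i) (div_nonneg (by linarith) hMpos.le)
    simp only []
    linarith
  have hxgd : ∀ j : ℕ, xg (j+1) - xg j = (b-a)/M := by
    intro j
    rw [hxg]
    simp only []
    push_cast
    ring
  have hygd : ∀ i : ℕ, yg (i+1) - yg i = (e-c)/M := by
    intro i
    rw [hyg]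
    simp only []
    push_cast
    ring
  have hxgle : ∀ j : ℕ, xg j ≤ xg (j+1) := by
    intro j
    have := hxgd j
    have h0 : 0 ≤ (b-a)/M := div_nonneg (by linarith) hMpos.le
    linarith
  have hygle : ∀ i : ℕ, yg i ≤ yg (i+1) := by
    intro i
    have := hygd i
    have h0 : 0 ≤ (e-c)/M := div_nonneg (by linarith) hMpos.le
    linarith
  have hmemx : ∀ x ∈ Set.Icc a b, ∀ j : ℕ, ((min x (xg j), c) : ℝ × ℝ) ∈ R :=
    fun x hx j => ⟨⟨le_min hx.1 (hxga j), le_trans (min_le_left _ _) hx.2⟩, ⟨le_refl c, hce⟩⟩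
  have hmemy : ∀ p ∈ R, ∀ i : ℕ, ((p.1, min p.2 (yg i)) : ℝ × ℝ) ∈ R :=
    fun p hp i => ⟨hp.1, ⟨le_min hp.2.1 (hyga i), le_trans (min_le_left _ _) hp.2.2⟩⟩
  have hclosex : ∀ x ∈ Set.Icc a b, ∀ j : ℕ,
      dist ((min x (xg (j+1)), c) : ℝ × ℝ) ((min x (xg j), c) : ℝ × ℝ) < δ := by
    intro x hx j
    rw [Prod.dist_eq]
    apply max_lt
    · rw [Real.dist_eq]
      calc |min x (xg (j+1)) - min x (xg j)| ≤ xg (j+1) - xg j := min_sub_min _ _ _ (hxgle j)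
      _ = (b-a)/M := hxgd j
      _ < δ := by rw [div_lt_iff₀ hMpos]; linarith
    · simpa using hδ
  have hclosey : ∀ p ∈ R, ∀ i : ℕ,
      dist ((p.1, min p.2 (yg (i+1))) : ℝ × ℝ) ((p.1, min p.2 (yg i)) : ℝ × ℝ) < δ := by
    intro p hp i
    rw [Prod.dist_eq]
    apply max_lt
    · simpa using hδ
    · rw [Real.dist_eq]
      calc |min p.2 (yg (i+1)) - min p.2 (yg i)| ≤ yg (i+1) - yg i := min_sub_min _ _ _ (hygle i)
      _ = (e-c)/M := hygd i
      _ < δ := by rw [div_lt_iff₀ hMpos]; linarith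
  set A : ℝ → ℝ := fun x => ∑ j ∈ Finset.range M,
      Complex.arg (φ (min x (xg (j+1)), c) / φ (min x (xg j), c)) with hA
  set B : ℝ × ℝ → ℝ := fun p => ∑ i ∈ Finset.range M,
      Complex.arg (φ (p.1, min p.2 (yg (i+1))) / φ (p.1, min p.2 (yg i))) with hB
  set θ : ℝ × ℝ → ℝ := fun p => Complex.arg (φ (a, c)) + A p.1 + B p with hθ
  clear_value A B θ
  -- continuity of θ on R
  have hcont_term : ∀ (g1 g2 : ℝ × ℝ → ℝ × ℝ), Continuous g1 → Continuous g2 →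
      (Set.MapsTo g1 R R) → (Set.MapsTo g2 R R) → (∀ p ∈ R, dist (g1 p) (g2 p) < δ) →
      ContinuousOn (fun p => Complex.arg (φ (g1 p) / φ (g2 p))) R := by
    intro g1 g2 hg1 hg2 hm1 hm2 hdist
    intro p hp
    have h1 : ContinuousWithinAt (fun p => φ (g1 p) / φ (g2 p)) R p :=
      ((hφ.comp hg1.continuousOn hm1).div (hφ.comp hg2.continuousOn hm2)
        (fun q hq => hne _ (hm2 hq))) p hp
    have hsl : (φ (g1 p) / φ (g2 p)) ∈ Complex.slitPlane :=
      Complex.mem_slitPlane_iff.2 (Or.inl (hratio _ (hm1 hp) _ (hm2 hp) (hdist p hp)))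
    have h2 := ContinuousAt.comp_continuousWithinAt (g := Complex.arg)
      (f := fun q => φ (g1 q) / φ (g2 q)) (x := p) (s := R) (Complex.continuousAt_arg hsl) h1
    exact h2
  have hcontA : ContinuousOn (fun p : ℝ × ℝ => A p.1) R := by
    rw [hA]
    apply continuousOn_finset_sum
    intro j _
    exact hcont_term (fun p => (min p.1 (xg (j+1)), c)) (fun p => (min p.1 (xg j), c))
      (by fun_prop) (by fun_prop)
      (fun p hp => hmemx p.1 hp.1 (j+1)) (fun p hp => hmemx p.1 hp.1 j)
      (fun p hp => hclosex p.1 hp.1 j)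
  have hcontB : ContinuousOn B R := by
    rw [hB]
    apply continuousOn_finset_sum
    intro i _
    exact hcont_term (fun p => (p.1, min p.2 (yg (i+1)))) (fun p => (p.1, min p.2 (yg i)))
      (by fun_prop) (by fun_prop)
      (fun p hp => hmemy p hp (i+1)) (fun p hp => hmemy p hp i)
      (fun p hp => hclosey p hp i)
  have hcontθ : ContinuousOn θ R := by
    rw [hθ]
    exact (continuousOn_const.add hcontA).add hcontB
  -- the lifting identity
  have hexpA : ∀ x ∈ Set.Icc a b, Complex.exp ((Complex.arg (φ (a,c)) + A x) * Complex.I)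
      = φ (x, c) / ‖φ (x, c)‖ := by
    intro x hx
    have hgne : ∀ j : ℕ, φ (min x (xg j), c) ≠ 0 := fun j => hne _ (hmemx x hx j)
    set g : ℕ → ℂ := fun j => φ (min x (xg j), c) / (‖φ (min x (xg j), c)‖ : ℂ) with hg
    have hgne' : ∀ j, g j ≠ 0 := by
      intro j
      apply div_ne_zero (hgne j)
      simpa using norm_ne_zero_iff.mpr (hgne j)
    have hterm : ∀ j : ℕ, Complex.exp
        ((Complex.arg (φ (min x (xg (j+1)), c) / φ (min x (xg j), c)) : ℝ) * Complex.I)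
        = g (j+1) / g j := by
      intro j
      rw [exp_arg_mul_I _ (div_ne_zero (hgne (j+1)) (hgne j))]
      exact norm_div_eq _ _ (hgne (j+1)) (hgne j)
    have hsum : (((Complex.arg (φ (a,c)) : ℝ) : ℂ) + ((A x : ℝ) : ℂ)) * Complex.I
        = (Complex.arg (φ (a,c)) : ℂ) * Complex.I + ∑ j ∈ Finset.range M,
            ((Complex.arg (φ (min x (xg (j+1)), c) / φ (min x (xg j), c)) : ℝ) : ℂ) * Complex.I := by
      rw [hA]
      push_cast
      rw [add_mul, Finset.sum_mul]
    rw [hsum, Complex.exp_add, Complex.exp_sum]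
    simp_rw [hterm]
    rw [tele_prod g hgne' M, exp_arg_mul_I _ (hne _ hac)]
    have hg0 : g 0 = φ (a, c) / (‖φ (a, c)‖ : ℂ) := by
      rw [hg]
      simp only [hxg0]
      rw [min_eq_right hx.1]
    have hgM : g M = φ (x, c) / (‖φ (x, c)‖ : ℂ) := by
      rw [hg]
      simp only [hxgM]
      rw [min_eq_left hx.2]
    rw [hg0, hgM]
    have h0 : φ (a, c) / (‖φ (a, c)‖ : ℂ) ≠ 0 := by
      apply div_ne_zero (hne _ hac)
      simpa using norm_ne_zero_iff.mpr (hne _ hac)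
    rw [mul_comm, div_mul_cancel₀ _ h0]
  have hexpB : ∀ p ∈ R, Complex.exp ((B p : ℝ) * Complex.I)
      = (φ p / (‖φ p‖ : ℂ)) / (φ (p.1, c) / (‖φ (p.1, c)‖ : ℂ)) := by
    intro p hp
    have hgne : ∀ i : ℕ, φ (p.1, min p.2 (yg i)) ≠ 0 := fun i => hne _ (hmemy p hp i)
    set g : ℕ → ℂ := fun i => φ (p.1, min p.2 (yg i)) / (‖φ (p.1, min p.2 (yg i))‖ : ℂ)
      with hg
    have hgne' : ∀ i, g i ≠ 0 := by
      intro i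
      apply div_ne_zero (hgne i)
      simpa using norm_ne_zero_iff.mpr (hgne i)
    have hterm : ∀ i : ℕ, Complex.exp
        ((Complex.arg (φ (p.1, min p.2 (yg (i+1))) / φ (p.1, min p.2 (yg i))) : ℝ) * Complex.I)
        = g (i+1) / g i := by
      intro i
      rw [exp_arg_mul_I _ (div_ne_zero (hgne (i+1)) (hgne i))]
      exact norm_div_eq _ _ (hgne (i+1)) (hgne i)
    have hsum : ((B p : ℝ) : ℂ) * Complex.I = ∑ i ∈ Finset.range M,
        ((Complex.arg (φ (p.1, min p.2 (yg (i+1))) / φ (p.1, min p.2 (yg i))) : ℝ) : ℂ) * Complex.I := by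
      rw [hB]
      push_cast
      rw [Finset.sum_mul]
    rw [hsum, Complex.exp_sum]
    simp_rw [hterm]
    rw [tele_prod g hgne' M]
    have hg0 : g 0 = φ (p.1, c) / (‖φ (p.1, c)‖ : ℂ) := by
      rw [hg]
      simp only [hyg0]
      rw [min_eq_right hp.2.1]
    have hgM : g M = φ p / (‖φ p‖ : ℂ) := by
      rw [hg]
      simp only [hygM]
      rw [min_eq_left hp.2.2]
    rw [hg0, hgM]
  have hmem1 : ∀ p ∈ R, ((p.1, c) : ℝ × ℝ) ∈ R := fun p hp => ⟨hp.1, ⟨le_refl c, hce⟩⟩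
  have hid : ∀ p ∈ R, Complex.exp ((θ p : ℝ) * Complex.I) = φ p / (‖φ p‖ : ℂ) := by
    intro p hp
    have h1 : ((θ p : ℝ) : ℂ) * Complex.I
        = (((Complex.arg (φ (a,c)) : ℝ) : ℂ) + ((A p.1 : ℝ) : ℂ)) * Complex.I + ((B p : ℝ) : ℂ) * Complex.I := by
      rw [hθ]
      push_cast
      ring
    rw [h1, Complex.exp_add, hexpA p.1 hp.1, hexpB p hp]
    have h2 : φ (p.1, c) / (‖φ (p.1, c)‖ : ℂ) ≠ 0 := by
      apply div_ne_zero (hne _ (hmem1 p hp))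
      simpa using norm_ne_zero_iff.mpr (hne _ (hmem1 p hp))
    rw [mul_comm, div_mul_cancel₀ _ h2]
  have hφeq : ∀ p ∈ R, φ p = (‖φ p‖ : ℂ) * Complex.exp ((θ p : ℝ) * Complex.I) := by
    intro p hp
    rw [hid p hp]
    have h0 : (‖φ p‖ : ℂ) ≠ 0 := by simpa using norm_ne_zero_iff.mpr (hne _ hp)
    field_simp
  have him : ∀ p ∈ R, (φ p).im = ‖φ p‖ * Real.sin (θ p) := by
    intro p hp
    conv_lhs => rw [hφeq p hp]
    rw [Complex.mul_im]
    simp [Complex.exp_ofReal_mul_I_im]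
  have hre : ∀ p ∈ R, (φ p).re = ‖φ p‖ * Real.cos (θ p) := by
    intro p hp
    conv_lhs => rw [hφeq p hp]
    rw [Complex.mul_re]
    simp [Complex.exp_ofReal_mul_I_re]
  -- sign information on the edges
  have habs_pos : ∀ p ∈ R, 0 < ‖φ p‖ := fun p hp => norm_pos_iff.mpr (hne p hp)
  have hmembot : ∀ x ∈ Set.Icc a b, ((x, c) : ℝ × ℝ) ∈ R := fun x hx => ⟨hx, ⟨le_refl _, hce⟩⟩
  have hmemtop : ∀ x ∈ Set.Icc a b, ((x, e) : ℝ × ℝ) ∈ R := fun x hx => ⟨hx, ⟨hce, le_refl _⟩⟩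
  have hmemleft : ∀ y ∈ Set.Icc c e, ((a, y) : ℝ × ℝ) ∈ R := fun y hy => ⟨⟨le_refl _, hab⟩, hy⟩
  have hmemright : ∀ y ∈ Set.Icc c e, ((b, y) : ℝ × ℝ) ∈ R := fun y hy => ⟨⟨hab, le_refl _⟩, hy⟩
  have hsin_bot : ∀ x ∈ Set.Icc a b, 0 ≤ Real.sin (θ (x, c)) := by
    intro x hx
    have h1 := him _ (hmembot x hx)
    have h2 := hbot x hx
    rw [h1] at h2
    nlinarith [habs_pos _ (hmembot x hx)]
  have hsin_top : ∀ x ∈ Set.Icc a b, Real.sin (θ (x, e)) ≤ 0 := by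
    intro x hx
    have h1 := him _ (hmemtop x hx)
    have h2 := htop x hx
    rw [h1] at h2
    nlinarith [habs_pos _ (hmemtop x hx)]
  have hcos_right : ∀ y ∈ Set.Icc c e, 0 ≤ Real.cos (θ (b, y)) := by
    intro y hy
    have h1 := hre _ (hmemright y hy)
    have h2 := hright y hy
    rw [h1] at h2
    nlinarith [habs_pos _ (hmemright y hy)]
  have hcos_left : ∀ y ∈ Set.Icc c e, Real.cos (θ (a, y)) ≤ 0 := by
    intro y hy
    have h1 := hre _ (hmemleft y hy)
    have h2 := hleft y hy
    rw [h1] at h2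
    nlinarith [habs_pos _ (hmemleft y hy)]
  -- edge continuity and IVT
  have hedge_bot : ∀ s ∈ Set.uIcc (θ (a,c)) (θ (b,c)), 0 ≤ Real.sin s := by
    intro s hs
    have hco : ContinuousOn (fun t => θ (t, c)) (Set.uIcc a b) := by
      rw [Set.uIcc_of_le hab]
      exact hcontθ.comp (Continuous.continuousOn (by fun_prop)) (fun t ht => hmembot t ht)
    obtain ⟨t, ht, hts⟩ := intermediate_value_uIcc hco hs
    rw [Set.uIcc_of_le hab] at ht
    rw [← hts]
    exact hsin_bot t ht
  have hedge_top : ∀ s ∈ Set.uIcc (θ (b,e) + π) (θ (a,e) + π), 0 ≤ Real.sin s := by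
    intro s hs
    have hs' : s - π ∈ Set.uIcc (θ (b,e)) (θ (a,e)) := by
      rw [Set.mem_uIcc] at hs ⊢
      rcases hs with h | h
      · left; constructor <;> linarith [h.1, h.2]
      · right; constructor <;> linarith [h.1, h.2]
    have hco : ContinuousOn (fun t => θ (t, e)) (Set.uIcc b a) := by
      rw [Set.uIcc_comm, Set.uIcc_of_le hab]
      exact hcontθ.comp (Continuous.continuousOn (by fun_prop)) (fun t ht => hmemtop t ht)
    obtain ⟨t, ht, hts⟩ := intermediate_value_uIcc hco hs'
    rw [Set.uIcc_comm, Set.uIcc_of_le hab] at ht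
    have : s = (s - π) + π := by ring
    rw [this, Real.sin_add_pi, ← hts]
    simpa using hsin_top t ht
  have hedge_right : ∀ s ∈ Set.uIcc (θ (b,c) + π/2) (θ (b,e) + π/2), 0 ≤ Real.sin s := by
    intro s hs
    have hs' : s - π/2 ∈ Set.uIcc (θ (b,c)) (θ (b,e)) := by
      rw [Set.mem_uIcc] at hs ⊢
      rcases hs with h | h
      · left; constructor <;> linarith [h.1, h.2]
      · right; constructor <;> linarith [h.1, h.2]
    have hco : ContinuousOn (fun t => θ (b, t)) (Set.uIcc c e) := by
      rw [Set.uIcc_of_le hce]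
      exact hcontθ.comp (Continuous.continuousOn (by fun_prop)) (fun t ht => hmemright t ht)
    obtain ⟨t, ht, hts⟩ := intermediate_value_uIcc hco hs'
    rw [Set.uIcc_of_le hce] at ht
    have : s = (s - π/2) + π/2 := by ring
    rw [this, Real.sin_add_pi_div_two, ← hts]
    exact hcos_right t ht
  have hedge_left : ∀ s ∈ Set.uIcc (θ (a,e) - π/2) (θ (a,c) - π/2), 0 ≤ Real.sin s := by
    intro s hs
    have hs' : s + π/2 ∈ Set.uIcc (θ (a,e)) (θ (a,c)) := by
      rw [Set.mem_uIcc] at hs ⊢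
      rcases hs with h | h
      · left; constructor <;> linarith [h.1, h.2]
      · right; constructor <;> linarith [h.1, h.2]
    have hco : ContinuousOn (fun t => θ (a, t)) (Set.uIcc e c) := by
      rw [Set.uIcc_comm, Set.uIcc_of_le hce]
      exact hcontθ.comp (Continuous.continuousOn (by fun_prop)) (fun t ht => hmemleft t ht)
    obtain ⟨t, ht, hts⟩ := intermediate_value_uIcc hco hs'
    rw [Set.uIcc_comm, Set.uIcc_of_le hce] at ht
    have : s = (s + π/2) - π/2 := by ring
    rw [this, Real.sin_sub_pi_div_two, ← hts]
    simpa using hcos_left t ht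
  obtain ⟨k1, hk11, hk12⟩ := sin_band hedge_bot
  obtain ⟨k2, hk21, hk22⟩ := sin_band hedge_right
  obtain ⟨k3, hk31, hk32⟩ := sin_band hedge_top
  obtain ⟨k4, hk41, hk42⟩ := sin_band hedge_left
  have hπ := Real.pi_pos
  have key : ∀ m n : ℤ, (m:ℝ)*π ≤ (n:ℝ)*π → m ≤ n := by
    intro m n h
    have := le_of_mul_le_mul_right h hπ
    exact_mod_cast this
  have i1 : (4*k2 - 1 : ℤ) ≤ 4*k1 + 2 := by
    apply key
    push_cast
    linarith [hk21.1, hk12.2]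
  have i2 : (4*k1 : ℤ) ≤ 4*k2 + 1 := by
    apply key
    push_cast
    linarith [hk12.1, hk21.2]
  have i3 : (4*k3 - 2 : ℤ) ≤ 4*k2 + 1 := by
    apply key
    push_cast
    linarith [hk31.1, hk22.2]
  have i4 : (4*k2 - 1 : ℤ) ≤ 4*k3 := by
    apply key
    push_cast
    linarith [hk22.1, hk31.2]
  have i5 : (4*k4 + 1 : ℤ) ≤ 4*k3 := by
    apply key
    push_cast
    linarith [hk41.1, hk32.2]
  have i6 : (4*k3 - 4 : ℤ) ≤ 4*k4 + 1 := by
    apply key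
    push_cast
    linarith [hk32.1, hk41.2]
  have i7 : (4*k1 : ℤ) ≤ 4*k4 + 3 := by
    apply key
    push_cast
    linarith [hk11.1, hk42.2]
  omega

private noncomputable def clP (β : ℝ) (hβ0 : 0 < β) (hβh : β < 1/2) (y : ℝ) : Set.Ioo (0:ℝ) 1 :=
  ⟨max (β/2) (min y (1 - β/2)), by
    constructor
    · have h0 : 0 < β/2 := by linarith
      exact lt_of_lt_of_le h0 (le_max_left _ _)
    · have h1 : min y (1 - β/2) ≤ 1 - β/2 := min_le_right _ _
      have h2 : β/2 ≤ 1 - β/2 := by linarith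
      have h3 := max_le h2 h1
      linarith⟩

private lemma clP_cont (β : ℝ) (hβ0 : 0 < β) (hβh : β < 1/2) :
    Continuous (clP β hβ0 hβh) := by
  apply Continuous.subtype_mk
  fun_prop

private lemma clP_coe (β : ℝ) (hβ0 : 0 < β) (hβh : β < 1/2) {y : ℝ}
    (hy : y ∈ Set.Icc (β/2) (1 - β/2)) : ((clP β hβ0 hβh y : ℝ)) = y := by
  rw [clP]
  simp only []
  rw [min_eq_left hy.2, max_eq_right hy.1]

private lemma exists_periodic (G : Strip → Strip) (hGc : Continuous G) (N : ℤ) (hN : 2 ≤ |N|)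
    (hdegG : ∀ (k : ℤ) (v : Strip), G (v.1 + (k:ℝ), v.2) = ((G v).1 + (k:ℝ) * (N:ℝ), (G v).2))
    (β : ℝ) (hβ0 : 0 < β) (hβh : β < 1/2)
    (hbot : ∀ v : Strip, (v.2:ℝ) < β → 3/4 < ((G v).2 : ℝ))
    (htop : ∀ v : Strip, 1 - β < (v.2:ℝ) → ((G v).2 : ℝ) < 1/4) :
    ∃ k0 : ℤ, ∀ r : ℕ, r < (N - 1).natAbs →
      ∃ v : Strip, G v = (v.1 + ((k0 + r : ℤ) : ℝ), v.2) := by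
  have hβle : β/2 ≤ 1 - β/2 := by linarith
  set cl := clP β hβ0 hβh with hcldef
  have hclc := clP_cont β hβ0 hβh
  have hψc : ContinuousOn (fun y : ℝ => (G (0, cl y)).1) (Set.Icc (β/2) (1 - β/2)) := by
    apply Continuous.continuousOn
    exact continuous_fst.comp (hGc.comp (continuous_const.prodMk hclc))
  have hcomp : IsCompact (Set.Icc (β/2) (1 - β/2)) := isCompact_Icc
  have hne : (Set.Icc (β/2) (1-β/2)).Nonempty := Set.nonempty_Icc.2 hβle
  obtain ⟨ymin, hyminm, hymin⟩ := hcomp.exists_isMinOn hne hψc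
  obtain ⟨ymax, hymaxm, hymax⟩ := hcomp.exists_isMaxOn hne hψc
  set m : ℝ := (G (0, cl ymin)).1 with hmdef
  set M' : ℝ := (G (0, cl ymax)).1 with hM'def
  clear_value m M'
  have hm : ∀ y ∈ Set.Icc (β/2) (1-β/2), m ≤ (G (0, cl y)).1 := by
    intro y hy
    rw [hmdef]
    exact hymin hy
  have hM' : ∀ y ∈ Set.Icc (β/2) (1-β/2), (G (0, cl y)).1 ≤ M' := by
    intro y hy
    rw [hM'def]
    exact hymax hy
  have hmM' : m ≤ M' := le_trans (hm _ hne.choose_spec) (hM' _ hne.choose_spec)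
  -- the heart: Miranda gives a solution for suitable k
  have hzero : ∀ (σ : ℝ), σ = 1 ∨ σ = -1 → ∀ (k : ℤ) (t : ℕ), 1 ≤ t →
      (∀ y ∈ Set.Icc (β/2) (1 - β/2), σ * ((G (0, cl y)).1 - (k:ℝ)) ≤ 0) →
      (∀ y ∈ Set.Icc (β/2) (1 - β/2), 0 ≤ σ * ((G ((t:ℝ), cl y)).1 - t - k)) →
      ∃ v : Strip, G v = (v.1 + (k : ℝ), v.2) := by
    intro σ hσ k t ht hL hR
    have hσ0 : σ ≠ 0 := by rcases hσ with h | h <;> rw [h] <;> norm_num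
    set Φ : ℝ × ℝ → ℂ := fun p =>
      ((σ * ((G (p.1, cl p.2)).1 - p.1 - (k:ℝ)) : ℝ) : ℂ)
        + ((((G (p.1, cl p.2)).2 : ℝ) - p.2 : ℝ) : ℂ) * Complex.I with hΦ
    have hGG : Continuous (fun p : ℝ × ℝ => G (p.1, cl p.2)) :=
      hGc.comp (continuous_fst.prodMk (hclc.comp continuous_snd))
    have hΦc : Continuous Φ := by
      rw [hΦ]
      have h1 : Continuous (fun p : ℝ × ℝ => (G (p.1, cl p.2)).1) := continuous_fst.comp hGG
      have h2 : Continuous (fun p : ℝ × ℝ => ((G (p.1, cl p.2)).2 : ℝ)) :=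
        continuous_subtype_val.comp (continuous_snd.comp hGG)
      fun_prop
    have hre : ∀ p : ℝ × ℝ, (Φ p).re = σ * ((G (p.1, cl p.2)).1 - p.1 - (k:ℝ)) := by
      intro p
      rw [hΦ]
      simp
    have him : ∀ p : ℝ × ℝ, (Φ p).im = ((G (p.1, cl p.2)).2 : ℝ) - p.2 := by
      intro p
      rw [hΦ]
      simp
    have h0t : (0:ℝ) ≤ (t:ℝ) := by positivity
    obtain ⟨p, hpR, hp0⟩ := miranda (φ := Φ) h0t hβle hΦc.continuousOn
      (fun y hy => by rw [hre]; simpa using hL y hy)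
      (fun y hy => by rw [hre]; simpa using hR y hy)
      (fun x hx => by
        rw [him]
        have hcle : ((cl (β/2) : ℝ)) = β/2 := clP_coe β hβ0 hβh ⟨le_refl _, hβle⟩
        have hlt : ((cl (β/2) : ℝ)) < β := by rw [hcle]; linarith
        have := hbot (x, cl (β/2)) hlt
        simp only []
        linarith)
      (fun x hx => by
        rw [him]
        have hcle : ((cl (1-β/2) : ℝ)) = 1-β/2 := clP_coe β hβ0 hβh ⟨hβle, le_refl _⟩
        have hlt : 1 - β < ((cl (1-β/2) : ℝ)) := by rw [hcle]; linarith
        have := htop (x, cl (1-β/2)) hlt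
        simp only []
        linarith)
    have hre0 : σ * ((G (p.1, cl p.2)).1 - p.1 - (k:ℝ)) = 0 := by rw [← hre p, hp0]; rfl
    have him0 : ((G (p.1, cl p.2)).2 : ℝ) - p.2 = 0 := by rw [← him p, hp0]; rfl
    have hre0' : (G (p.1, cl p.2)).1 = p.1 + k := by
      rcases mul_eq_zero.1 hre0 with h | h
      · exact absurd h hσ0
      · linarith
    refine ⟨(p.1, cl p.2), ?_⟩
    have hsnd : (G (p.1, cl p.2)).2 = cl p.2 := by
      apply Subtype.ext
      have h2 := clP_coe β hβ0 hβh hpR.2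
      rw [h2]
      linarith
    exact Prod.ext_iff.2 ⟨hre0', hsnd⟩
  -- now split on the sign of N
  rcases abs_le.1 (le_refl |N|) with _
  have hNcase : 2 ≤ N ∨ N ≤ -2 := by
    rcases le_or_gt 0 N with h | h
    · left; rwa [abs_of_nonneg h] at hN
    · right; rw [abs_of_neg h] at hN; omega
  rcases hNcase with hNpos | hNneg
  · -- N ≥ 2
    set t : ℕ := 1 + (⌈M'⌉ + N - ⌊m⌋).toNat with htdef
    have ht1 : 1 ≤ t := by omega
    have htlb : (⌈M'⌉ + N - ⌊m⌋ : ℤ) ≤ (t:ℤ) := by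
      rw [htdef]
      push_cast
      have := Int.self_le_toNat (⌈M'⌉ + N - ⌊m⌋)
      omega
    refine ⟨⌈M'⌉, ?_⟩
    intro r hr
    have hrN : (r : ℤ) ≤ N - 2 := by
      have h1 : ((N-1).natAbs : ℤ) = N - 1 := Int.natAbs_of_nonneg (by omega)
      omega
    apply hzero 1 (Or.inl rfl) (⌈M'⌉ + r) t ht1
    · intro y hy
      have h1 := hM' y hy
      have h2 := Int.le_ceil M'
      have h3 : (0:ℝ) ≤ (r:ℝ) := by positivity
      push_cast
      nlinarith
    · intro y hy
      have hdeg2 := hdegG (t : ℤ) (0, cl y)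
      have heq : (G ((t:ℝ), cl y)).1 = (G (0, cl y)).1 + (t:ℝ)*(N:ℝ) := by
        have h0 : ((0:ℝ) + ((t:ℤ):ℝ), (cl y)) = (((t:ℕ):ℝ), cl y) := by push_cast; ring_nf
        rw [h0] at hdeg2
        rw [hdeg2]
        push_cast
        ring_nf
      rw [heq]
      have h1 := hm y hy
      have h2 := Int.floor_le m
      have h3 : (r:ℝ) ≤ (N:ℝ) - 2 := by exact_mod_cast hrN
      have h4 : ((⌈M'⌉:ℝ) + (N:ℝ) - (⌊m⌋:ℝ)) ≤ (t:ℝ) := by exact_mod_cast htlb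
      have h5 : (2:ℝ) ≤ (N:ℝ) := by exact_mod_cast hNpos
      have h6 : (1:ℝ) ≤ (t:ℝ) := by exact_mod_cast ht1
      have h7 : (t:ℝ)*2 ≤ (t:ℝ)*(N:ℝ) := mul_le_mul_of_nonneg_left h5 (by linarith)
      push_cast
      nlinarith
  · -- N ≤ -2
    set t : ℕ := 1 + (⌈M'⌉ - ⌊m⌋ - N).toNat with htdef
    have ht1 : 1 ≤ t := by omega
    have htlb : (⌈M'⌉ - ⌊m⌋ - N : ℤ) ≤ (t:ℤ) := by
      rw [htdef]
      push_cast
      have := Int.self_le_toNat (⌈M'⌉ - ⌊m⌋ - N)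
      omega
    refine ⟨⌊m⌋ + N, ?_⟩
    intro r hr
    have hrN : (r : ℤ) ≤ -N := by
      have h1 : ((N-1).natAbs : ℤ) = 1 - N := by omega
      omega
    apply hzero (-1) (Or.inr rfl) (⌊m⌋ + N + r) t ht1
    · intro y hy
      have h1 := hm y hy
      have h2 := Int.floor_le m
      have h3 : (r : ℝ) ≤ -(N:ℝ) := by exact_mod_cast hrN
      push_cast
      nlinarith
    · intro y hy
      have hdeg2 := hdegG (t : ℤ) (0, cl y)
      have heq : (G ((t:ℝ), cl y)).1 = (G (0, cl y)).1 + (t:ℝ)*(N:ℝ) := by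
        have h0 : ((0:ℝ) + ((t:ℤ):ℝ), (cl y)) = (((t:ℕ):ℝ), cl y) := by push_cast; ring_nf
        rw [h0] at hdeg2
        rw [hdeg2]
        push_cast
        ring_nf
      rw [heq]
      have h1 := hM' y hy
      have h2 := Int.le_ceil M'
      have h3 : (0:ℝ) ≤ (r:ℝ) := by positivity
      have h4 : ((⌈M'⌉:ℝ) - (⌊m⌋:ℝ) - (N:ℝ)) ≤ (t:ℝ) := by exact_mod_cast htlb
      have h5 : (N:ℝ) ≤ -2 := by exact_mod_cast hNneg
      have h6 : (1:ℝ) ≤ (t:ℝ) := by exact_mod_cast ht1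
      have h7 : (t:ℝ)*1 ≤ (t:ℝ)*(1-(N:ℝ)) := mul_le_mul_of_nonneg_left (by linarith) (by linarith)
      push_cast
      nlinarith

/-- "Sarkovskii–Iglesias": a continuous degree-`d` map of the open
annulus (`|d| ≥ 2`) that interchanges the two ends has the rate: there is
`c : ℕ → ℕ` counting distinct `n`-periodic points with
`limsup (1/n) log c(n) ≥ log |d|`. -/
theorem interchanging_ends_rate (d : ℤ) (hd : 2 ≤ |d|)
    (f : OpenAnnulus → OpenAnnulus) (hf : Continuous f)
    (F : Strip → Strip) (hFcont : Continuous F)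
    (hlift : ∀ v : Strip, annulusProj (F v) = f (annulusProj v))
    (hdeg : ∀ v : Strip, F (shift v) = ((F v).1 + (d : ℝ), (F v).2))
    (hinterchange : ∀ ε : ℝ, ε ∈ Set.Ioo (0 : ℝ) (1/2) → ∃ δ ∈ Set.Ioo (0 : ℝ) (1/2),
      ∀ v : OpenAnnulus,
        ((v.2 : ℝ) < δ → 1 - ε < ((f v).2 : ℝ)) ∧
        (1 - δ < (v.2 : ℝ) → ((f v).2 : ℝ) < ε)) :
    ∃ c : ℕ → ℕ,
      (∀ n : ℕ, 1 ≤ n → ∃ S : Finset OpenAnnulus,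
        S.card = c n ∧ ∀ x ∈ S, f^[n] x = x) ∧
      Real.log |(d : ℝ)| ≤
        Filter.limsup (fun n : ℕ => Real.log (c n) / n) Filter.atTop := by
  classical
  -- collar estimates for odd iterates
  have hodd : ∀ j : ℕ, ∀ ε : ℝ, ε ∈ Set.Ioo (0:ℝ) (1/2) → ∃ δ ∈ Set.Ioo (0:ℝ) (1/2),
      ∀ v : OpenAnnulus, ((v.2 : ℝ) < δ → 1 - ε < ((f^[2*j+1] v).2 : ℝ)) ∧
        (1 - δ < (v.2 : ℝ) → ((f^[2*j+1] v).2 : ℝ) < ε) := by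
    intro j
    induction j with
    | zero =>
      intro ε hε
      obtain ⟨δ, hδ, h⟩ := hinterchange ε hε
      refine ⟨δ, hδ, fun v => ?_⟩
      simpa using h v
    | succ j ih =>
      intro ε hε
      obtain ⟨β₁, hβ₁, h1⟩ := ih ε hε
      obtain ⟨δ₁, hδ₁, h2⟩ := hinterchange β₁ hβ₁
      obtain ⟨δ₂, hδ₂, h3⟩ := hinterchange δ₁ hδ₁
      refine ⟨δ₂, hδ₂, fun v => ?_⟩
      have hiter : f^[2*(j+1)+1] v = f^[2*j+1] (f (f v)) := by
        have h5 : 2*(j+1)+1 = (2*j+1) + 2 := by ring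
        rw [h5, Function.iterate_add_apply]
        rfl
      constructor
      · intro hv
        rw [hiter]
        exact (h1 _).1 ((h2 _).2 ((h3 _).1 hv))
      · intro hv
        rw [hiter]
        exact (h1 _).2 ((h2 _).1 ((h3 _).2 hv))
  -- lifts of iterates
  have hliftn : ∀ n : ℕ, ∀ v : Strip, annulusProj (F^[n] v) = f^[n] (annulusProj v) := by
    intro n
    induction n with
    | zero => intro v; simp
    | succ n ih =>
      intro v
      rw [Function.iterate_succ_apply', Function.iterate_succ_apply', hlift, ih]
  -- degree of F on integer translations
  have hdeg1 : ∀ (k : ℤ) (v : Strip), F (v.1 + (k:ℝ), v.2) = ((F v).1 + (k:ℝ) * (d:ℝ), (F v).2) := by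
    intro k
    induction k using Int.induction_on with
    | zero => intro v; simp
    | succ i ih =>
      intro v
      have h1 : ((v.1 + (((i:ℤ)+1 : ℤ):ℝ), v.2) : Strip) = shift (v.1 + ((i:ℤ):ℝ), v.2) := by
        rw [shift]
        exact Prod.ext_iff.2 ⟨by push_cast; ring, rfl⟩
      rw [h1, hdeg, ih]
      exact Prod.ext_iff.2 ⟨by push_cast; ring, rfl⟩
    | pred i ih =>
      intro v
      have h2 := hdeg (v.1 + ((-(i:ℤ)-1 : ℤ):ℝ), v.2)
      have hsw : shift (v.1 + ((-(i:ℤ)-1 : ℤ):ℝ), v.2) = ((v.1 + ((-(i:ℤ) : ℤ):ℝ), v.2) : Strip) := by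
        rw [shift]
        exact Prod.ext_iff.2 ⟨by push_cast; ring, rfl⟩
      rw [hsw, ih] at h2
      have hfst : (F (v.1 + ((-(i:ℤ)-1 : ℤ):ℝ), v.2)).1 = (F v).1 + ((-(i:ℤ)-1 : ℤ):ℝ) * (d:ℝ) := by
        have h3 := congrArg Prod.fst h2
        simp only [] at h3
        push_cast at h3 ⊢
        linarith
      have hsnd : (F (v.1 + ((-(i:ℤ)-1 : ℤ):ℝ), v.2)).2 = (F v).2 := by
        have h3 := congrArg Prod.snd h2
        simpa using h3.symm
      exact Prod.ext_iff.2 ⟨hfst, hsnd⟩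
  -- degree of iterates
  have hdegn : ∀ n : ℕ, ∀ (k : ℤ) (v : Strip),
      F^[n] (v.1 + (k:ℝ), v.2) = ((F^[n] v).1 + (k:ℝ) * ((d^n : ℤ):ℝ), (F^[n] v).2) := by
    intro n
    induction n with
    | zero =>
      intro k v
      simp only [Function.iterate_zero, id_eq, pow_zero]
      refine Prod.ext_iff.2 ⟨?_, rfl⟩
      push_cast
      ring
    | succ n ih =>
      intro k v
      rw [Function.iterate_succ_apply, Function.iterate_succ_apply, hdeg1 k v]
      have hcast : (((F v).1 + (k:ℝ) * (d:ℝ), (F v).2) : Strip)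
          = ((F v).1 + ((k*d : ℤ):ℝ), (F v).2) := by
        refine Prod.ext_iff.2 ⟨?_, rfl⟩
        push_cast
        ring
      rw [hcast, ih (k*d) (F v)]
      refine Prod.ext_iff.2 ⟨?_, rfl⟩
      push_cast
      ring
  -- projection invariance
  have hproj : ∀ (k : ℤ) (v : Strip), annulusProj (v.1 + (k:ℝ), v.2) = annulusProj v := by
    intro k v
    simp only [annulusProj]
    refine Prod.ext_iff.2 ⟨?_, rfl⟩
    have h1 : (((k:ℝ)) : AddCircle (1:ℝ)) = 0 := by
      rw [AddCircle.coe_eq_zero_iff]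
      exact ⟨k, by simp⟩
    have h2 : ((v.1 + (k:ℝ) : ℝ) : AddCircle (1:ℝ)) = (v.1 : AddCircle (1:ℝ)) + ((k:ℝ) : AddCircle (1:ℝ)) := rfl
    rw [h2, h1, add_zero]
  -- converse : equal projections differ by an integer translation
  have hproj_inv : ∀ v w : Strip, annulusProj v = annulusProj w →
      v.2 = w.2 ∧ ∃ k : ℤ, w.1 = v.1 + (k:ℝ) := by
    intro v w h
    have h2 : v.2 = w.2 := by
      have := congrArg Prod.snd h
      simpa [annulusProj] using this
    have h1 : (v.1 : AddCircle (1:ℝ)) = (w.1 : AddCircle (1:ℝ)) := by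
      have := congrArg Prod.fst h
      simpa [annulusProj] using this
    rw [QuotientAddGroup.eq] at h1
    obtain ⟨k, hk⟩ := AddSubgroup.mem_zmultiples_iff.1 h1
    refine ⟨h2, k, ?_⟩
    have : (k:ℝ) * 1 = -v.1 + w.1 := by
      rw [← hk]
      simp [zsmul_eq_mul]
    linarith [this]
  -- the counting lemma for odd iterates
  have hcount : ∀ n : ℕ, Odd n → ∃ S : Finset OpenAnnulus,
      S.card = (d^n - 1).natAbs ∧ ∀ x ∈ S, f^[n] x = x := by
    intro n hn
    obtain ⟨j, hj⟩ := hn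
    have hj' : n = 2*j+1 := by omega
    obtain ⟨β, hβm, hβ⟩ := hodd j (1/4) (by norm_num)
    have hGc : Continuous (F^[n]) := hFcont.iterate n
    have hNabs : 2 ≤ |d^n| := by
      rw [_root_.abs_pow]
      calc (2:ℤ) = 2^1 := by norm_num
      _ ≤ 2^n := pow_le_pow_right₀ (by norm_num) (by omega)
      _ ≤ |d|^n := pow_le_pow_left₀ (by norm_num) hd n
    have hbotG : ∀ v : Strip, (v.2:ℝ) < β → 3/4 < ((F^[n] v).2 : ℝ) := by
      intro v hv
      have h1 := (hβ (annulusProj v)).1 hv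
      rw [← hj', ← hliftn n v] at h1
      norm_num at h1
      exact h1
    have htopG : ∀ v : Strip, 1 - β < (v.2:ℝ) → ((F^[n] v).2 : ℝ) < 1/4 := by
      intro v hv
      have h1 := (hβ (annulusProj v)).2 hv
      rwa [← hj', ← hliftn n v] at h1
    obtain ⟨k0, hk0⟩ := exists_periodic (F^[n]) hGc (d^n) hNabs (hdegn n) β hβm.1 hβm.2 hbotG htopG
    set cnt := ((d:ℤ)^n - 1).natAbs with hcnt
    set pt : ℕ → OpenAnnulus := fun r =>
      if h : r < cnt then annulusProj (hk0 r h).choose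
      else annulusProj (0, ⟨1/2, by norm_num⟩) with hpt
    refine ⟨(Finset.range cnt).image pt, ?_, ?_⟩
    · rw [Finset.card_image_of_injOn, Finset.card_range]
      intro r hr r' hr' heq
      rw [Finset.mem_coe, Finset.mem_range] at hr hr'
      rw [hpt] at heq
      simp only [dif_pos hr, dif_pos hr'] at heq
      have hv := (hk0 r hr).choose_spec
      have hv' := (hk0 r' hr').choose_spec
      set v := (hk0 r hr).choose with hvdef
      set v' := (hk0 r' hr').choose with hv'def
      obtain ⟨hsnd, k, hk⟩ := hproj_inv v v' heq
      have hv'pair : v' = (v.1 + (k:ℝ), v.2) := Prod.ext_iff.2 ⟨hk, hsnd.symm⟩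
      have e2 : F^[n] v' = ((F^[n] v).1 + (k:ℝ) * ((d^n : ℤ):ℝ), (F^[n] v).2) := by
        rw [hv'pair]
        exact hdegn n k v
      have e3 : (F^[n] v').1 = v.1 + ((k0 + r : ℤ):ℝ) + (k:ℝ) * ((d^n : ℤ):ℝ) := by
        rw [e2]
        have := congrArg Prod.fst hv
        simp only [] at this
        rw [this]
      have e4 : (F^[n] v').1 = v'.1 + ((k0 + r' : ℤ):ℝ) := by
        have := congrArg Prod.fst hv'
        simpa using this
      have hreal : ((r' : ℤ):ℝ) - ((r : ℤ):ℝ) = ((k * (d^n - 1) : ℤ):ℝ) := by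
        rw [hk] at e4
        rw [e4] at e3
        push_cast at e3 ⊢
        linarith
      have hZ : (r' : ℤ) - (r : ℤ) = k * (d^n - 1) := by exact_mod_cast hreal
      by_cases hk0' : k = 0
      · rw [hk0', zero_mul] at hZ
        have : (r : ℤ) = r' := by omega
        exact_mod_cast this
      · exfalso
        have h1 : (1:ℤ) ≤ |k| := Int.one_le_abs (by omega)
        have h2 : |(r' : ℤ) - (r : ℤ)| = |k| * |d^n - 1| := by rw [hZ, abs_mul]
        have h3 : ((cnt : ℕ):ℤ) = |d^n - 1| := by
          rw [hcnt]
          exact (Int.abs_eq_natAbs _).symm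
        have h4 : |(r' : ℤ) - (r : ℤ)| < ((cnt : ℕ):ℤ) := by
          rw [abs_lt]
          constructor <;> omega
        have h5 : ((cnt : ℕ):ℤ) ≤ |k| * |d^n - 1| := by
          rw [h3]
          nlinarith [abs_nonneg ((d:ℤ)^n - 1)]
        omega
    · intro x hx
      obtain ⟨r, hr, rfl⟩ := Finset.mem_image.1 hx
      rw [Finset.mem_range] at hr
      rw [hpt]
      simp only [dif_pos hr]
      have hv := (hk0 r hr).choose_spec
      set v := (hk0 r hr).choose with hvdef
      rw [← hliftn n v, hv, hproj]
  -- define the counting function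
  refine ⟨fun n => if Odd n then ((d:ℤ)^n - 1).natAbs else 0, ?_, ?_⟩
  · intro n hn
    by_cases h : Odd n
    · obtain ⟨S, hS1, hS2⟩ := hcount n h
      refine ⟨S, ?_, hS2⟩
      show S.card = if Odd n then ((d:ℤ)^n - 1).natAbs else 0
      rw [if_pos h]
      exact hS1
    · refine ⟨∅, ?_, by simp⟩
      show Finset.card ∅ = if Odd n then ((d:ℤ)^n - 1).natAbs else 0
      rw [if_neg h]
      simp
  · -- the limsup estimate
    set u : ℕ → ℝ := fun n =>
      Real.log ((if Odd n then ((d:ℤ)^n - 1).natAbs else 0 : ℕ)) / n with hu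
    have hdR : (2:ℝ) ≤ |(d:ℝ)| := by
      rw [← Int.cast_abs]
      exact_mod_cast hd
    have hval : ∀ n : ℕ, Odd n → 1 ≤ n →
        Real.log |(d:ℝ)| - Real.log 2 / n ≤ u n := by
      intro n hn h1
      have hnpos : (0:ℝ) < n := by exact_mod_cast h1
      have hcast : ((if Odd n then ((d:ℤ)^n - 1).natAbs else 0 : ℕ) : ℝ) = |(d:ℝ)^n - 1| := by
        rw [if_pos hn]
        rw [Nat.cast_natAbs]
        push_cast
        ring_nf
      have hpow2 : (2:ℝ) ≤ |(d:ℝ)|^n := by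
        calc (2:ℝ) = 2^1 := by norm_num
        _ ≤ 2^n := pow_le_pow_right₀ (by norm_num) h1
        _ ≤ |(d:ℝ)|^n := pow_le_pow_left₀ (by norm_num) hdR n
      have habs1 : |(d:ℝ)|^n - 1 ≤ |(d:ℝ)^n - 1| := by
        have := abs_sub_abs_le_abs_sub ((d:ℝ)^n) 1
        rw [_root_.abs_pow] at this
        simpa using this
      have hge : |(d:ℝ)|^n / 2 ≤ |(d:ℝ)^n - 1| := by linarith
      have hlog1 : Real.log (|(d:ℝ)|^n / 2) ≤ Real.log |(d:ℝ)^n - 1| := by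
        apply Real.log_le_log (by positivity)
        exact hge
      have hlog2 : Real.log (|(d:ℝ)|^n / 2) = n * Real.log |(d:ℝ)| - Real.log 2 := by
        rw [Real.log_div (by positivity) (by norm_num), Real.log_pow]
      have hfinal : (n:ℝ) * Real.log |(d:ℝ)| - Real.log 2 ≤ Real.log |(d:ℝ)^n - 1| := by
        rw [← hlog2]
        exact hlog1
      have hu_eq : u n = Real.log |(d:ℝ)^n - 1| / n := by
        rw [hu]
        simp only []
        rw [hcast]
      rw [hu_eq]
      have h9 : (Real.log |(d:ℝ)| - Real.log 2 / n) * n ≤ Real.log |(d:ℝ)^n - 1| := by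
        have h10 : (Real.log |(d:ℝ)| - Real.log 2 / n) * n = n * Real.log |(d:ℝ)| - Real.log 2 := by
          field_simp
        rw [h10]
        exact hfinal
      calc Real.log |(d:ℝ)| - Real.log 2/n
          = ((Real.log |(d:ℝ)| - Real.log 2/n) * n)/n := by field_simp
      _ ≤ Real.log |(d:ℝ)^n - 1| / n := by gcongr
    -- upper bound
    have hLbnn : 0 ≤ Real.log (2 * |(d:ℝ)|) := Real.log_nonneg (by linarith)
    have hbdd : ∀ n : ℕ, u n ≤ Real.log (2 * |(d:ℝ)|) := by
      intro n
      rcases Nat.eq_zero_or_pos n with h0 | h1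
      · subst h0
        rw [hu]
        simpa using hLbnn
      by_cases h : Odd n
      · have hnpos : (0:ℝ) < n := by exact_mod_cast h1
        have hcast : ((if Odd n then ((d:ℤ)^n - 1).natAbs else 0 : ℕ) : ℝ) = |(d:ℝ)^n - 1| := by
          rw [if_pos h, Nat.cast_natAbs]
          push_cast
          ring_nf
        have hb : |(d:ℝ)^n| = |(d:ℝ)|^n := _root_.abs_pow _ _
        have hc : (1:ℝ) ≤ |(d:ℝ)|^n := by
          have := pow_le_pow_left₀ (by norm_num : (0:ℝ) ≤ 1) (by linarith : (1:ℝ) ≤ |(d:ℝ)|) n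
          simpa using this
        have hpow2 : (2:ℝ) ≤ |(d:ℝ)|^n := by
          calc (2:ℝ) = 2^1 := by norm_num
          _ ≤ 2^n := pow_le_pow_right₀ (by norm_num) h1
          _ ≤ |(d:ℝ)|^n := pow_le_pow_left₀ (by norm_num) hdR n
        have ha : |(d:ℝ)^n - 1| ≤ |(d:ℝ)|^n + 1 := by
          have h5 := abs_add_le ((d:ℝ)^n) (-1)
          simp only [abs_neg, abs_one] at h5
          calc |(d:ℝ)^n - 1| = |(d:ℝ)^n + (-1)| := by ring_nf
          _ ≤ |(d:ℝ)^n| + 1 := h5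
          _ = |(d:ℝ)|^n + 1 := by rw [hb]
        have h2n : (2:ℝ) ≤ 2^n := by
          calc (2:ℝ) = 2^1 := by norm_num
          _ ≤ 2^n := pow_le_pow_right₀ (by norm_num) h1
        have hle : |(d:ℝ)^n - 1| ≤ (2*|(d:ℝ)|)^n := by
          have hmp : (2*|(d:ℝ)|)^n = 2^n * |(d:ℝ)|^n := mul_pow _ _ _
          nlinarith
        have hpos : (0:ℝ) < |(d:ℝ)^n - 1| := by
          have h6 := abs_sub_abs_le_abs_sub ((d:ℝ)^n) 1
          rw [hb] at h6
          simp only [abs_one] at h6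
          linarith
        have hlog : Real.log |(d:ℝ)^n - 1| ≤ n * Real.log (2*|(d:ℝ)|) := by
          calc Real.log |(d:ℝ)^n - 1| ≤ Real.log ((2*|(d:ℝ)|)^n) := Real.log_le_log hpos hle
          _ = n * Real.log (2*|(d:ℝ)|) := by rw [Real.log_pow]
        rw [hu]
        simp only []
        rw [hcast, div_le_iff₀ hnpos]
        linarith
      · rw [hu]
        simp only [if_neg h]
        simpa using hLbnn
    have hBdd : Filter.IsBoundedUnder (· ≤ ·) Filter.atTop u :=
      Filter.isBoundedUnder_of ⟨Real.log (2*|(d:ℝ)|), fun n => hbdd n⟩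
    have hfreq : ∀ ε : ℝ, 0 < ε → ∃ᶠ n in Filter.atTop, Real.log |(d:ℝ)| - ε ≤ u n := by
      intro ε hε
      rw [Filter.frequently_atTop]
      intro n0
      obtain ⟨n1, hn1⟩ := exists_nat_ge (Real.log 2 / ε)
      refine ⟨2*(max n0 n1)+1, by omega, ?_⟩
      have ho : Odd (2*(max n0 n1)+1) := ⟨max n0 n1, rfl⟩
      have h1 : 1 ≤ 2*(max n0 n1)+1 := by omega
      have h2 := hval _ ho h1
      have hnpos : (0:ℝ) < (2*(max n0 n1)+1 : ℕ) := by exact_mod_cast h1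
      have h3 : Real.log 2 / (2*(max n0 n1)+1 : ℕ) ≤ ε := by
        rw [div_le_iff₀ hnpos]
        have h4 : Real.log 2 / ε ≤ ((2*(max n0 n1)+1 : ℕ):ℝ) := by
          calc Real.log 2 / ε ≤ (n1:ℝ) := hn1
          _ ≤ ((2*(max n0 n1)+1 : ℕ):ℝ) := by
              have h5 : n1 ≤ 2*(max n0 n1)+1 := by
                have := le_max_right n0 n1
                omega
              exact_mod_cast h5
        rw [div_le_iff₀ hε] at h4
        linarith
      linarith
    show Real.log |(d:ℝ)| ≤ Filter.limsup u Filter.atTop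
    by_contra hcon
    push_neg at hcon
    have hεpos : 0 < (Real.log |(d:ℝ)| - Filter.limsup u Filter.atTop)/2 := by linarith
    have hle := Filter.le_limsup_of_frequently_le (hfreq _ hεpos) hBdd
    linarith

end
end

section
/- Let d be an integer with |d| ≥ 2, let F : ℝ × (0,1) → ℝ × (0,1) be continuous, and let H : ℝ × (0,1) → ℝ be continuous with H(x+1, y) = H(x, y) + 1 for all (x,y) and H(F(v)) = d·H(v) for all v (so H is a lift of a semiconjugacy from the annulus map covered by F to the circle map m_d). Let M > 0 and let p₁ = (x₁,y₁), p₂ = (x₂,y₂) ∈ ℝ × (0,1) satisfy |H(p_i) − x_i| ≤ M for i = 1,2. If for some n ≥ 1 and some integer j with |j| ≤ |d|^n one has F^n(p₂) = F^n(p₁) + (j, 0), then |x₂ − x₁| ≤ 2M + 1. (This is the key estimate showing that a covering of the open annulus semiconjugate to m_d satisfies the bounded-winding condition (*): lifts under f^n of curves traversed j ≤ d^(n−1) times, with endpoints in a fixed compact set, have uniformly bounded intersection number with a cross-cut of the annulus.) -/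
noncomputable section

lemma shift_int (H : Strip → ℝ) (hHper : ∀ v : Strip, H (shift v) = H v + 1)
    (k : ℤ) (v : Strip) : H (v.1 + (k : ℝ), v.2) = H v + k := by
  induction k using Int.induction_on with
  | zero => simp
  | succ m ih =>
      have h := hHper ((v.1 + (m : ℝ), v.2))
      simp only [shift] at h
      push_cast at ih ⊢
      rw [show v.1 + ((m : ℝ) + 1) = v.1 + (m : ℝ) + 1 by ring]
      linarith
  | pred m ih =>
      have h := hHper ((v.1 + (-(m : ℝ) - 1), v.2))
      simp only [shift] at h
      rw [show v.1 + (-(m : ℝ) - 1) + 1 = v.1 + -(m : ℝ) by ring] at h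
      push_cast at ih ⊢
      rw [show v.1 + ((-(m : ℝ)) - 1) = v.1 + (-(m : ℝ) - 1) from rfl]
      linarith

lemma iter_semi (F : Strip → Strip) (H : Strip → ℝ) (d : ℤ)
    (hHsemi : ∀ v : Strip, H (F v) = d * H v) (n : ℕ) (v : Strip) :
    H (F^[n] v) = (d : ℝ) ^ n * H v := by
  induction n with
  | zero => simp
  | succ m ih =>
      rw [Function.iterate_succ_apply', hHsemi, ih]
      push_cast
      ring

/-- the key estimate for condition (*). If `H` is a lifted
semiconjugacy (`H(x+1,y) = H(x,y)+1`, `H ∘ F = d·H`), `|H(pᵢ) − xᵢ| ≤ M`, and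
`F^n(p₂) = F^n(p₁) + (j,0)` with `|j| ≤ |d|^n`, then `|x₂ − x₁| ≤ 2M + 1`. -/
theorem bounded_winding_estimate (d : ℤ) (hd : 2 ≤ |d|)
    (F : Strip → Strip) (hFcont : Continuous F)
    (H : Strip → ℝ) (hHcont : Continuous H)
    (hHper : ∀ v : Strip, H (shift v) = H v + 1)
    (hHsemi : ∀ v : Strip, H (F v) = d * H v)
    (M : ℝ) (hM : 0 < M) (p₁ p₂ : Strip)
    (h₁ : |H p₁ - p₁.1| ≤ M) (h₂ : |H p₂ - p₂.1| ≤ M)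
    (n : ℕ) (hn : 1 ≤ n) (j : ℤ) (hj : |j| ≤ |d| ^ n)
    (hlift : F^[n] p₂ = ((F^[n] p₁).1 + (j : ℝ), (F^[n] p₁).2)) :
    |p₂.1 - p₁.1| ≤ 2 * M + 1 := by
  have key : (d : ℝ) ^ n * H p₂ = (d : ℝ) ^ n * H p₁ + j := by
    have h1 := iter_semi F H d hHsemi n p₂
    have h2 := iter_semi F H d hHsemi n p₁
    rw [hlift] at h1
    rw [shift_int H hHper j (F^[n] p₁)] at h1
    rw [h2] at h1
    linarith
  have hdn : (0 : ℝ) < |(d : ℝ)| ^ n := by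
    apply pow_pos
    have : (2 : ℝ) ≤ |(d : ℝ)| := by
      rw [← Int.cast_abs]; exact_mod_cast hd
    linarith
  have hdiff : |H p₂ - H p₁| ≤ 1 := by
    have : H p₂ - H p₁ = (j : ℝ) / (d : ℝ) ^ n := by
      have hne : (d : ℝ) ^ n ≠ 0 := by
        intro h
        rw [← abs_pow] at hdn
        simp [h] at hdn
      field_simp
      linarith
    rw [this, abs_div, abs_pow]
    rw [div_le_one hdn]
    have : (|j| : ℝ) ≤ (|d| : ℝ) ^ n := by exact_mod_cast hj
    simpa [Int.cast_abs] using this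
  calc |p₂.1 - p₁.1| = |(p₂.1 - H p₂) + (H p₂ - H p₁) + (H p₁ - p₁.1)| := by ring_nf
    _ ≤ |p₂.1 - H p₂| + |H p₂ - H p₁| + |H p₁ - p₁.1| := by
        exact (abs_add_three _ _ _)
    _ ≤ M + 1 + M := by
        rw [abs_sub_comm p₂.1 (H p₂)]
        gcongr
    _ = 2 * M + 1 := by ring

end
end

section
/- There exists a covering map f of the open annulus A = (ℝ/ℤ) × (0,1) of degree 2 (i.e. f : A → A is a covering map and some lift F : ℝ × (0,1) → ℝ × (0,1) satisfies F(x+1,y) = F(x,y) + (2,0)) together with a nonempty compact set K ⊆ A with f(K) = K, such that f has no periodic points: for every n ≥ 1 and every a ∈ A, f^n(a) ≠ a. (In the construction K is a Cantor set, the ω-limit set of a wandering interval of a degree-2 "Denjoy" circle covering.) -/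
noncomputable section

section Aux
open Set
/-- homeomorphism pieces ℝ ↔ Ioo 0 1 -/
def eIoo : ℝ ≃o Ioo (-1 : ℝ) 1 := orderIsoIooNegOneOne ℝ

def hIoo (t : ℝ) : Ioo (0:ℝ) 1 :=
  ⟨((eIoo t : ℝ) + 1) / 2, by
    have h := (eIoo t).2
    constructor <;> [skip; skip] <;> nlinarith [h.1, h.2]⟩

def hInv (y : Ioo (0:ℝ) 1) : ℝ :=
  eIoo.symm ⟨2 * (y:ℝ) - 1, by constructor <;> nlinarith [y.2.1, y.2.2]⟩

lemma hInv_hIoo (t : ℝ) : hInv (hIoo t) = t := by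
  simp only [hInv, hIoo]
  have : (⟨2 * (((eIoo t : ℝ) + 1) / 2) - 1, by constructor <;> nlinarith [(eIoo t).2.1, (eIoo t).2.2]⟩ : Ioo (-1:ℝ) 1) = eIoo t := by
    ext; ring
  rw [this]; exact eIoo.symm_apply_apply t

lemma hIoo_hInv (y : Ioo (0:ℝ) 1) : hIoo (hInv y) = y := by
  simp only [hInv, hIoo]
  ext
  have h2 : (eIoo (eIoo.symm ⟨2 * (y:ℝ) - 1, by constructor <;> nlinarith [y.2.1, y.2.2]⟩) : ℝ) = 2 * (y:ℝ) - 1 := by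
    rw [eIoo.apply_symm_apply]
  simp only [h2]; ring

lemma continuous_hIoo : Continuous hIoo := by
  apply Continuous.subtype_mk
  have : Continuous (fun t => (eIoo t : ℝ)) :=
    continuous_subtype_val.comp (eIoo.toHomeomorph.continuous)
  fun_prop

lemma continuous_hInv : Continuous hInv := by
  have h1 : Continuous (fun y : Ioo (0:ℝ) 1 => (⟨2 * (y:ℝ) - 1, by constructor <;> nlinarith [y.2.1, y.2.2]⟩ : Ioo (-1:ℝ) 1)) := by
    apply Continuous.subtype_mk; fun_prop
  exact eIoo.symm.toHomeomorph.continuous.comp h1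

lemma hIoo_injective : Function.Injective hIoo := by
  intro a b h; have := congrArg hInv h; rwa [hInv_hIoo, hInv_hIoo] at this

open Set Finset

/-- The irrational rotation number. -/
def alf : ℝ := Real.sqrt 2 - 1

lemma alf_irrational : Irrational alf := by
  have := irrational_sqrt_two.sub_ratCast 1
  simpa [alf] using this

lemma alf_pos : 0 < alf := by
  have : (1:ℝ) < Real.sqrt 2 := by
    nlinarith [Real.sq_sqrt (by norm_num : (2:ℝ) ≥ 0), Real.sqrt_nonneg 2]
  simp [alf]; linarith

lemma alf_lt_one : alf < 1 := by
  have : Real.sqrt 2 < 2 := by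
    nlinarith [Real.sq_sqrt (by norm_num : (2:ℝ) ≥ 0), Real.sqrt_nonneg 2]
  simp [alf]; linarith

/-- numeric value of a boolean digit -/
def bval (b : Bool) : ℝ := if b then 1 else 0

lemma bval_nonneg (b : Bool) : 0 ≤ bval b := by cases b <;> simp [bval]
lemma bval_le_one (b : Bool) : bval b ≤ 1 := by cases b <;> simp [bval]

/-- Sturmian coding of the rotation by `alf`. -/
def code (β : ℝ) (n : ℕ) : Bool := decide (⌊β + (n+1) * alf⌋ - ⌊β + n * alf⌋ = 1)

lemma floor_step (u : ℝ) : ⌊u + alf⌋ - ⌊u⌋ = 0 ∨ ⌊u + alf⌋ - ⌊u⌋ = 1 := by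
  have h1 : ⌊u⌋ ≤ ⌊u + alf⌋ := Int.floor_le_floor (by linarith [alf_pos])
  have h2 : ⌊u + alf⌋ ≤ ⌊u⌋ + 1 := by
    have : ⌊u + alf⌋ ≤ ⌊u + 1⌋ := Int.floor_le_floor (by linarith [alf_lt_one])
    simpa using this
  omega

lemma bval_code (β : ℝ) (n : ℕ) :
    bval (code β n) = (⌊β + (n+1) * alf⌋ : ℝ) - (⌊β + n * alf⌋ : ℝ) := by
  have h := floor_step (β + n * alf)
  have e : β + n * alf + alf = β + (n+1) * alf := by ring
  rw [e] at h
  rcases h with h | h <;> simp [bval, code, h] <;> push_cast [sub_eq_iff_eq_add.mp h] <;> ring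

/-- the shift map -/
def shf (x : ℕ → Bool) : ℕ → Bool := fun n => x (n+1)

lemma continuous_shf : Continuous shf :=
  continuous_pi fun n => continuous_apply (n+1)

lemma shf_iter (m : ℕ) (x : ℕ → Bool) (k : ℕ) : (shf^[m] x) k = x (k + m) := by
  induction m generalizing x k with
  | zero => rfl
  | succ m ih =>
      rw [Function.iterate_succ_apply, ih (shf x) k]
      simp [shf]; ring_nf

lemma code_shift (β : ℝ) : shf (code β) = code (β + alf) := by
  funext n
  simp only [shf, code]
  congr 2 <;> push_cast <;> ring_nf

/-- the balanced set -/
def Bal : Set (ℕ → Bool) :=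
  {x | ∀ m N : ℕ, |(∑ n ∈ range N, bval (x (m+n))) - N * alf| ≤ 1}

lemma isClosed_bal : IsClosed Bal := by
  have : Bal = ⋂ (m : ℕ) (N : ℕ),
      (fun x : ℕ → Bool => (∑ n ∈ range N, bval (x (m+n))) - N * alf) ⁻¹' (Metric.closedBall 0 1) := by
    ext x
    simp [Bal, Real.dist_eq]
  rw [this]
  refine isClosed_iInter fun m => isClosed_iInter fun N => IsClosed.preimage ?_ Metric.isClosed_closedBall
  refine Continuous.sub ?_ continuous_const
  exact continuous_finset_sum _ fun n _ => by
    have : Continuous (fun x : ℕ → Bool => x (m+n)) := continuous_apply (m+n)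
    fun_prop

lemma code_mem_bal (β : ℝ) : code β ∈ Bal := by
  intro m N
  have hsum : (∑ n ∈ range N, bval (code β (m+n)))
      = (⌊β + (m+N) * alf⌋ : ℝ) - (⌊β + m * alf⌋ : ℝ) := by
    have key : ∀ n ∈ range N, bval (code β (m+n))
        = (fun k : ℕ => (⌊β + (m+k) * alf⌋ : ℝ)) (n+1) - (fun k : ℕ => (⌊β + (m+k) * alf⌋ : ℝ)) n := by
      intro n _
      have := bval_code β (m+n)
      simp only []
      rw [this]
      congr 3 <;> push_cast <;> ring
    rw [Finset.sum_congr rfl key, Finset.sum_range_sub (fun k : ℕ => (⌊β + (m+k) * alf⌋ : ℝ))]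
    norm_num
  rw [hsum]
  have h1 : (⌊β + (m+N) * alf⌋ : ℝ) ≤ β + (m+N) * alf := Int.floor_le _
  have h2 : β + (m+N) * alf - 1 < ⌊β + (m+N) * alf⌋ := Int.sub_one_lt_floor _
  have h3 : (⌊β + m * alf⌋ : ℝ) ≤ β + m * alf := Int.floor_le _
  have h4 : β + m * alf - 1 < ⌊β + m * alf⌋ := Int.sub_one_lt_floor _
  rw [abs_le]
  constructor <;> push_cast at * <;> nlinarith

/-- value map to [0,1] -/
def pim (x : ℕ → Bool) : ℝ := ∑' n : ℕ, bval (x n) * (1/2)^(n+1)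

lemma summable_halves' : Summable (fun n : ℕ => ((1/2:ℝ))^(n+1)) :=
  (summable_geometric_of_lt_one (r := (1/2:ℝ)) (by norm_num) (by norm_num)).mul_left (1/2) |>.congr
    (fun n => by ring)

lemma summable_pim (x : ℕ → Bool) : Summable (fun n : ℕ => bval (x n) * (1/2:ℝ)^(n+1)) :=
  Summable.of_nonneg_of_le (fun n => mul_nonneg (bval_nonneg _) (by positivity))
    (fun n => by nlinarith [bval_le_one (x n), bval_nonneg (x n), pow_pos (by norm_num : (0:ℝ) < 1/2) (n+1)])
    summable_halves'

lemma pim_nonneg (x : ℕ → Bool) : 0 ≤ pim x :=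
  tsum_nonneg fun n => mul_nonneg (bval_nonneg _) (by positivity)

lemma tsum_halves : ∑' n : ℕ, ((1/2:ℝ))^(n+1) = 1 := by
  have h : ∑' n : ℕ, ((1/2:ℝ))^(n+1) = (1/2) * ∑' n : ℕ, ((1/2:ℝ))^n := by
    rw [← tsum_mul_left]
    congr 1; funext n; ring
  rw [h, tsum_geometric_of_lt_one (by norm_num) (by norm_num)]
  norm_num

lemma pim_le_one (x : ℕ → Bool) : pim x ≤ 1 := by
  rw [← tsum_halves]
  exact Summable.tsum_le_tsum (fun n => by nlinarith [bval_le_one (x n), pow_pos (by norm_num : (0:ℝ) < 1/2) (n+1)])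
    (summable_pim x) summable_halves'

lemma continuous_pim : Continuous pim := by
  apply continuous_tsum (u := fun n : ℕ => ((1/2:ℝ))^(n+1))
  · intro n
    have : Continuous (fun x : ℕ → Bool => x n) := continuous_apply n
    fun_prop
  · exact summable_halves'
  · intro n x
    rw [Real.norm_eq_abs, abs_of_nonneg (mul_nonneg (bval_nonneg _) (by positivity))]
    nlinarith [bval_le_one (x n), pow_pos (by norm_num : (0:ℝ) < 1/2) (n+1)]

lemma pim_step (x : ℕ → Bool) : 2 * pim x = bval (x 0) + pim (shf x) := by
  have h := Summable.tsum_eq_zero_add (summable_pim x)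
  have h2 : 2 * pim x = 2 * (bval (x 0) * (1/2)^(0+1) + ∑' n : ℕ, bval (x (n+1)) * (1/2:ℝ)^(n+1+1)) := by
    rw [pim, h]
  rw [h2, mul_add]
  congr 1
  · cases x 0 <;> simp [bval]
  · rw [pim, ← tsum_mul_left]
    congr 1; funext n; simp [shf]; ring

lemma pim_eq_zero (x : ℕ → Bool) (h : pim x = 0) (n : ℕ) : x n = false := by
  by_contra hb
  have hx : x n = true := by revert hb; cases x n <;> simp
  have hle : bval (x n) * (1/2:ℝ)^(n+1) ≤ pim x :=
    Summable.le_tsum (summable_pim x) n (fun m _ => mul_nonneg (bval_nonneg _) (by positivity))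
  rw [hx, h] at hle
  simp [bval] at hle
  nlinarith [pow_pos (by norm_num : (0:ℝ) < 2) (n+1)]

lemma pim_eq_one (x : ℕ → Bool) (h : pim x = 1) (n : ℕ) : x n = true := by
  by_contra hb
  have hx : x n = false := by revert hb; cases x n <;> simp
  have hsub : Summable (fun n : ℕ => ((1/2:ℝ))^(n+1) - bval (x n) * (1/2)^(n+1)) :=
    summable_halves'.sub (summable_pim x)
  have hsum : ∑' n : ℕ, (((1/2:ℝ))^(n+1) - bval (x n) * (1/2)^(n+1)) = 1 - pim x := by
    rw [Summable.tsum_sub summable_halves' (summable_pim x), tsum_halves]; rfl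
  have hle : ((1/2:ℝ))^(n+1) - bval (x n) * (1/2)^(n+1) ≤ 1 - pim x := by
    rw [← hsum]
    exact Summable.le_tsum hsub n (fun m _ => by
      nlinarith [bval_le_one (x m), pow_pos (by norm_num : (0:ℝ) < 1/2) (m+1)])
  rw [hx, h] at hle
  simp [bval] at hle
  nlinarith [pow_pos (by norm_num : (0:ℝ) < 2) (n+1)]

/-- eventually periodic -/
def EvPer (x : ℕ → Bool) : Prop := ∃ m p : ℕ, 0 < p ∧ ∀ k, x (m + k + p) = x (m + k)

lemma const_tail_evper (x : ℕ → Bool) (m₀ : ℕ) (c : Bool) (h : ∀ n, x (n + m₀) = c) :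
    EvPer x := by
  refine ⟨m₀, 1, one_pos, fun k => ?_⟩
  have h1 := h (k+1)
  have h2 := h k
  have e1 : k + 1 + m₀ = m₀ + k + 1 := by omega
  have e2 : k + m₀ = m₀ + k := by omega
  rw [e1] at h1; rw [e2] at h2; rw [h1, h2]

lemma bal_not_evper (x : ℕ → Bool) (hx : x ∈ Bal) : ¬ EvPer x := by
  rintro ⟨m, p, hp, hper⟩
  have hperN : ∀ N k, x (m + k + N * p) = x (m + k) := by
    intro N
    induction N with
    | zero => simp
    | succ N ih =>
        intro k
        have : m + k + (N+1) * p = m + (k + N * p) + p := by ring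
        rw [this, hper (k + N * p), ← Nat.add_assoc, ih k]
  set s : ℝ := ∑ n ∈ range p, bval (x (m + n)) with hs
  have hblock : ∀ N : ℕ, (∑ n ∈ range (N * p), bval (x (m + n))) = N * s := by
    intro N
    induction N with
    | zero => simp
    | succ N ih =>
        have hNp : (N+1) * p = N * p + p := by ring
        rw [hNp, Finset.sum_range_add, ih]
        have : ∀ j ∈ range p, bval (x (m + (N * p + j))) = bval (x (m + j)) := by
          intro j _
          have e : m + (N * p + j) = m + j + N * p := by ring
          rw [e, hperN N j]
        rw [Finset.sum_congr rfl this, ← hs]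
        push_cast; ring
  have hineq : ∀ N : ℕ, |(N:ℝ) * s - (N * p : ℕ) * alf| ≤ 1 := by
    intro N
    have := hx m (N * p)
    rwa [hblock N] at this
  have hseq : s = p * alf := by
    by_contra hne
    have hd : 0 < |s - p * alf| := abs_pos.mpr (sub_ne_zero.mpr hne)
    obtain ⟨N, hN⟩ := exists_nat_one_div_lt hd
    have h1 := hineq (N+1)
    have e : ((N+1:ℕ):ℝ) * s - ((N+1) * p : ℕ) * alf = ((N+1:ℕ):ℝ) * (s - p * alf) := by
      push_cast; ring
    rw [e, abs_mul, abs_of_nonneg (by positivity : (0:ℝ) ≤ ((N+1:ℕ):ℝ))] at h1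
    have hNpos : (0:ℝ) < ((N:ℝ) + 1) := by positivity
    rw [div_lt_iff₀ hNpos] at hN
    push_cast at h1
    nlinarith
  -- s is a natural number, so alf is rational: contradiction
  set s' : ℕ := ∑ n ∈ range p, (if x (m + n) then 1 else 0) with hs'
  have hcast : s = (s' : ℝ) := by
    rw [hs, hs']
    push_cast
    exact Finset.sum_congr rfl fun n _ => by cases x (m+n) <;> simp [bval]
  apply alf_irrational
  refine ⟨(s' : ℚ) / (p : ℚ), ?_⟩
  have hp0 : (p:ℝ) ≠ 0 := Nat.cast_ne_zero.mpr hp.ne'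
  rw [hcast] at hseq
  have : alf = (s' : ℝ) / (p : ℝ) := by
    rw [eq_div_iff hp0]; linarith [hseq]
  rw [this]; push_cast; ring

lemma rat_evper (x : ℕ → Bool) (ρ : ℚ) (hx : (ρ : ℝ) = pim x) : EvPer x := by
  classical
  set t : ℕ → ℝ := fun m => pim (shf^[m] x) with ht
  have htstep : ∀ m, t (m + 1) = 2 * t m - bval (x m) := by
    intro m
    have h := pim_step (shf^[m] x)
    have h0 : (shf^[m] x) 0 = x m := by rw [shf_iter]; simp
    have h1 : shf (shf^[m] x) = shf^[m+1] x := (Function.iterate_succ_apply' shf m x).symm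
    rw [h0, h1] at h
    simp only [ht]
    linarith
  have htb : ∀ m, 0 ≤ t m ∧ t m ≤ 1 := fun m => ⟨pim_nonneg _, pim_le_one _⟩
  set q : ℕ := ρ.den with hq
  have hq0 : (q:ℝ) ≠ 0 := Nat.cast_ne_zero.mpr ρ.den_pos.ne'
  -- all t m have denominator dividing q
  have hj : ∀ m, ∃ j : ℤ, (j:ℝ) = q * t m := by
    intro m
    induction m with
    | zero =>
        refine ⟨ρ.num, ?_⟩
        have : t 0 = (ρ:ℝ) := by simp [ht]; rw [hx]
        rw [this, Rat.cast_def]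
        field_simp
        rfl
    | succ m ih =>
        obtain ⟨j, hjm⟩ := ih
        refine ⟨2 * j - q * (if x m then 1 else 0), ?_⟩
        rw [htstep m]
        push_cast
        rw [hjm]
        cases x m <;> simp [bval] <;> ring
  set J : ℕ → ℤ := fun m => (hj m).choose with hJ
  have hJspec : ∀ m, (J m : ℝ) = q * t m := fun m => (hj m).choose_spec
  have hJmem : ∀ m, J m ∈ Finset.Icc (0:ℤ) q := by
    intro m
    have h1 := (htb m).1; have h2 := (htb m).2
    have hc1 : (0:ℝ) ≤ (J m : ℝ) := by
      rw [hJspec m]; exact mul_nonneg (Nat.cast_nonneg q) h1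
    have hc2 : (J m : ℝ) ≤ (q:ℝ) := by
      rw [hJspec m]
      calc (q:ℝ) * t m ≤ (q:ℝ) * 1 := by
            apply mul_le_mul_of_nonneg_left h2 (Nat.cast_nonneg q)
        _ = q := mul_one _
    rw [Finset.mem_Icc]
    exact ⟨by exact_mod_cast hc1, by exact_mod_cast hc2⟩
  -- pigeonhole
  obtain ⟨m₁, hm₁, m₂, hm₂, hne, heq⟩ :=
    Finset.exists_ne_map_eq_of_card_lt_of_maps_to
      (s := Finset.range (q+2)) (t := Finset.Icc (0:ℤ) q)
      (by rw [Finset.card_range, Int.card_Icc]; omega) (fun m _ => hJmem m)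
  -- wlog m₁ < m₂
  obtain ⟨m, m', hlt, hteq⟩ : ∃ m m' : ℕ, m < m' ∧ t m = t m' := by
    have hual : ∀ a b : ℕ, J a = J b → t a = t b := by
      intro a b hab
      have := hJspec a
      rw [hab, hJspec b] at this
      exact (mul_left_cancel₀ hq0 this).symm
    rcases lt_or_gt_of_ne hne with h | h
    · exact ⟨m₁, m₂, h, hual _ _ heq⟩
    · exact ⟨m₂, m₁, h, hual _ _ heq.symm⟩
  set p : ℕ := m' - m with hp
  have hp0 : 0 < p := by omega
  have hm' : m' = m + p := by omega
  by_cases hall : ∀ k, x (m + k + p) = x (m + k)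
  · exact ⟨m, p, hp0, hall⟩
  push_neg at hall
  have hex : ∃ k, x (m + k + p) ≠ x (m + k) := hall
  set k₀ : ℕ := Nat.find hex with hk₀
  have hk₀spec : x (m + k₀ + p) ≠ x (m + k₀) := Nat.find_spec hex
  have hk₀min : ∀ k < k₀, x (m + k + p) = x (m + k) := by
    intro k hk
    by_contra hne'
    have h : k₀ ≤ k := hk₀ ▸ Nat.find_le hne'
    omega
  -- t agrees along the orbit up to k₀
  have hteqk : ∀ k ≤ k₀, t (m + k) = t (m' + k) := by
    intro k hk
    induction k with
    | zero => simpa using hteq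
    | succ k ih =>
        have hk' : k ≤ k₀ := by omega
        have e1 : m + (k+1) = (m + k) + 1 := by ring
        have e2 : m' + (k+1) = (m' + k) + 1 := by ring
        rw [e1, e2, htstep, htstep, ih hk']
        have : x (m' + k) = x (m + k) := by
          have := hk₀min k (by omega)
          rw [hm']
          have e : m + p + k = m + k + p := by ring
          rw [e, this]
        rw [this]
  have hT := hteqk k₀ le_rfl
  have hdig : x (m + k₀ + p) = x (m' + k₀) := by rw [hm']; congr 1; ring
  -- digits differ at k₀ but t values agree; deduce a constant tail
  have h1 := htstep (m + k₀)
  have h2 := htstep (m' + k₀)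
  rw [← hT] at h2
  have hb1 := (htb ((m + k₀) + 1)).1
  have hb12 := (htb ((m + k₀) + 1)).2
  have hb2 := (htb ((m' + k₀) + 1)).1
  have hb22 := (htb ((m' + k₀) + 1)).2
  rcases Bool.eq_false_or_eq_true (x (m + k₀)) with hc | hc
  ·
    have hc' : x (m' + k₀) = false := by
      have h := hk₀spec
      rw [hdig, hc] at h
      simpa using h
    rw [hc] at h1; rw [hc'] at h2
    simp [bval] at h1 h2
    have hTval : t (m + k₀) = 1/2 := by linarith
    have ho : t ((m' + k₀) + 1) = 1 := by rw [h2, hTval]; ring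
    have hall' : ∀ n, (shf^[(m' + k₀) + 1] x) n = true := pim_eq_one _ ho
    refine const_tail_evper x ((m' + k₀) + 1) true (fun n => ?_)
    have h := hall' n
    rwa [shf_iter] at h
  · have hc' : x (m' + k₀) = true := by
      have h := hk₀spec
      rw [hdig, hc] at h
      simpa using h
    rw [hc] at h1; rw [hc'] at h2
    simp [bval] at h1 h2
    have hTval : t (m + k₀) = 1/2 := by linarith
    have hz : t ((m' + k₀) + 1) = 0 := by rw [h2, hTval]; ring
    have hall' : ∀ n, (shf^[(m' + k₀) + 1] x) n = false := pim_eq_zero _ hz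
    refine const_tail_evper x ((m' + k₀) + 1) false (fun n => ?_)
    have h := hall' n
    rwa [shf_iter] at h

instance fact_zero_lt_one_real : Fact ((0:ℝ) < 1) := ⟨one_pos⟩

/-- the Sturmian subshift -/
def Xset : Set (ℕ → Bool) := closure (Set.range code)

lemma Xset_nonempty : Xset.Nonempty := ⟨code 0, subset_closure ⟨0, rfl⟩⟩

lemma isClosed_Xset : IsClosed Xset := isClosed_closure

lemma isCompact_Xset : IsCompact Xset := isClosed_Xset.isCompact

lemma Xset_subset_bal : Xset ⊆ Bal :=
  closure_minimal (by rintro _ ⟨β, rfl⟩; exact code_mem_bal β) isClosed_bal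

lemma shf_image_Xset : shf '' Xset = Xset := by
  have hrange : shf '' (Set.range code) = Set.range code := by
    ext y
    constructor
    · rintro ⟨_, ⟨β, rfl⟩, rfl⟩
      exact ⟨β + alf, (code_shift β).symm⟩
    · rintro ⟨β, rfl⟩
      exact ⟨code (β - alf), ⟨β - alf, rfl⟩, by rw [code_shift]; congr 1; ring⟩
  apply le_antisymm
  · intro y hy
    obtain ⟨z, hz, rfl⟩ := hy
    have := image_closure_subset_closure_image (f := shf) continuous_shf (s := Set.range code)
    have hmem := this ⟨z, hz, rfl⟩
    rwa [hrange] at hmem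
  · -- X = closure (shf '' range) ⊆ shf '' X since the latter is closed
    have hclosed : IsClosed (shf '' Xset) :=
      (isCompact_Xset.image continuous_shf).isClosed
    have hsub : Set.range code ⊆ shf '' Xset := by
      rw [← hrange]
      exact Set.image_mono subset_closure
    exact closure_minimal hsub hclosed

/-- projection to the circle -/
def cPi (x : ℕ → Bool) : AddCircle (1:ℝ) := ((pim x : ℝ) : AddCircle (1:ℝ))

lemma continuous_cPi : Continuous cPi :=
  (AddCircle.continuous_mk' (1:ℝ)).comp continuous_pim

/-- doubling map on the circle -/
def Dbl (θ : AddCircle (1:ℝ)) : AddCircle (1:ℝ) := θ + θ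

lemma Dbl_coe (r : ℝ) : Dbl ((r : ℝ) : AddCircle (1:ℝ)) = ((2 * r : ℝ) : AddCircle (1:ℝ)) := by
  rw [Dbl, ← AddCircle.coe_add]; congr 1; ring

lemma Dbl_cPi (x : ℕ → Bool) : Dbl (cPi x) = cPi (shf x) := by
  rw [cPi, Dbl_coe, pim_step x, cPi]
  rcases Bool.eq_false_or_eq_true (x 0) with h | h <;> rw [h]
  · simp only [bval, if_true]
    rw [AddCircle.coe_add, AddCircle.coe_period, zero_add]
  · simp [bval]

/-- the invariant Cantor set -/
def Lam : Set (AddCircle (1:ℝ)) := cPi '' Xset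

lemma Lam_nonempty : Lam.Nonempty := Xset_nonempty.image _

lemma isCompact_Lam : IsCompact Lam := isCompact_Xset.image continuous_cPi

lemma isClosed_Lam : IsClosed Lam := isCompact_Lam.isClosed

lemma Dbl_image_Lam : Dbl '' Lam = Lam := by
  rw [Lam, ← Set.image_comp]
  have : Dbl ∘ cPi = cPi ∘ shf := funext Dbl_cPi
  rw [this, Set.image_comp, shf_image_Xset]

/-- iterated doubling on coe -/
lemma Dbl_iter_coe (n : ℕ) (r : ℝ) :
    Dbl^[n] ((r : ℝ) : AddCircle (1:ℝ)) = (((2^n * r : ℝ)) : AddCircle (1:ℝ)) := by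
  induction n generalizing r with
  | zero => simp
  | succ n ih =>
      rw [Function.iterate_succ_apply, Dbl_coe, ih]
      congr 1; ring

/-- No point of `Lam` is periodic for the doubling map. -/
lemma Lam_no_periodic (θ : AddCircle (1:ℝ)) (hθ : θ ∈ Lam) (n : ℕ) (hn : 1 ≤ n)
    (hper : Dbl^[n] θ = θ) : False := by
  obtain ⟨x, hxX, rfl⟩ := hθ
  rw [cPi, Dbl_iter_coe] at hper
  -- 2^n * pim x - pim x ∈ ℤ hence pim x is rational
  have hz : ((2^n * pim x - pim x : ℝ) : AddCircle (1:ℝ)) = 0 := by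
    rw [AddCircle.coe_sub, hper, sub_self]
  rw [AddCircle.coe_eq_zero_iff] at hz
  obtain ⟨k, hk⟩ := hz
  have hk' : (k : ℝ) = 2^n * pim x - pim x := by simpa using hk
  have h2n : (2:ℝ)^n - 1 ≠ 0 := by
    have : (2:ℝ)^n ≥ 2^1 := by
      apply pow_le_pow_right₀ (by norm_num) hn
    norm_num at this ⊢
    nlinarith
  have hrat : (((k : ℚ) / ((2:ℚ)^n - 1) : ℚ) : ℝ) = pim x := by
    push_cast
    rw [div_eq_iff h2n]
    nlinarith [hk']
  exact bal_not_evper x (Xset_subset_bal hxX) (rat_evper x _ hrat)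

/-! ### Generic construction of a trivialization from local sections -/

/-- Build a trivialization of `q` over `U` from disjoint continuous sections indexed by a
discrete type, together with a continuous index function. -/
def trivOfSections {E X ι : Type*} [TopologicalSpace E] [TopologicalSpace X]
    [TopologicalSpace ι] [DiscreteTopology ι]
    (q : E → X) (hq : Continuous q) (U : Set X) (hU : IsOpen U)
    (σ : ι → X → E) (idx : E → ι)
    (hσc : ∀ i, ContinuousOn (σ i) U)
    (hidx : ContinuousOn idx (q ⁻¹' U))
    (hsec : ∀ i, ∀ x ∈ U, q (σ i x) = x)
    (hidxσ : ∀ i, ∀ x ∈ U, idx (σ i x) = i)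
    (hσidx : ∀ e, q e ∈ U → σ (idx e) (q e) = e) :
    Bundle.Trivialization ι q where
  toFun e := (q e, idx e)
  invFun p := σ p.2 p.1
  source := q ⁻¹' U
  target := U ×ˢ Set.univ
  map_source' := fun e he => ⟨he, Set.mem_univ _⟩
  map_target' := fun p hp => by
    have := hsec p.2 p.1 hp.1
    simp only [Set.mem_preimage, this]
    exact hp.1
  left_inv' := fun e he => hσidx e he
  right_inv' := fun p hp => by
    have h1 := hsec p.2 p.1 hp.1
    have h2 := hidxσ p.2 p.1 hp.1
    ext <;> simp [h1, h2]
  open_source := hU.preimage hq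
  open_target := hU.prod isOpen_univ
  continuousOn_toFun := (hq.continuousOn).prodMk hidx
  continuousOn_invFun := by
    rintro ⟨x, i⟩ ⟨hx, -⟩
    have hopen : IsOpen ((Prod.snd : X × ι → ι) ⁻¹' {i}) :=
      (isOpen_discrete _).preimage continuous_snd
    have hmem : (x, i) ∈ (Prod.snd : X × ι → ι) ⁻¹' {i} := rfl
    have hcont : ContinuousWithinAt (fun p : X × ι => σ i p.1) (U ×ˢ Set.univ) (x, i) := by
      have : ContinuousOn (fun p : X × ι => σ i p.1) (U ×ˢ Set.univ) :=
        (hσc i).comp continuous_fst.continuousOn (fun p hp => hp.1)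
      exact this (x, i) ⟨hx, Set.mem_univ _⟩
    apply hcont.congr_of_eventuallyEq
    · filter_upwards [Filter.inter_mem_inf (hopen.mem_nhds hmem) (Filter.univ_mem)] with p hp
      rcases hp with ⟨hp1, -⟩
      have : p.2 = i := hp1
      rw [this]
    · rfl
  baseSet := U
  open_baseSet := hU
  source_eq := rfl
  target_eq := rfl
  proj_toFun := fun p _ => rfl

/-! ### The annulus map -/

abbrev Circ := AddCircle (1:ℝ)
abbrev Ann := Circ × Set.Ioo (0:ℝ) 1

/-- the "speed" function, vanishing exactly on `Lam` -/
def cfn (θ : Circ) : ℝ := Metric.infDist θ Lam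

lemma continuous_cfn : Continuous cfn := Metric.continuous_infDist_pt Lam

lemma cfn_nonneg (θ : Circ) : 0 ≤ cfn θ := Metric.infDist_nonneg

lemma cfn_eq_zero_iff (θ : Circ) : cfn θ = 0 ↔ θ ∈ Lam :=
  (isClosed_Lam.mem_iff_infDist_zero Lam_nonempty).symm

lemma cfn_eq_zero_of_mem {θ : Circ} (h : θ ∈ Lam) : cfn θ = 0 :=
  (cfn_eq_zero_iff θ).mpr h

/-- fiber maps -/
def gmap (θ : Circ) (y : Set.Ioo (0:ℝ) 1) : Set.Ioo (0:ℝ) 1 := hIoo (hInv y + cfn θ)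

def gminv (θ : Circ) (y : Set.Ioo (0:ℝ) 1) : Set.Ioo (0:ℝ) 1 := hIoo (hInv y - cfn θ)

lemma gmap_gminv (θ : Circ) (y : Set.Ioo (0:ℝ) 1) : gmap θ (gminv θ y) = y := by
  rw [gmap, gminv, hInv_hIoo, sub_add_cancel, hIoo_hInv]

lemma gminv_gmap (θ : Circ) (y : Set.Ioo (0:ℝ) 1) : gminv θ (gmap θ y) = y := by
  rw [gmap, gminv, hInv_hIoo, add_sub_cancel_right, hIoo_hInv]

/-- the degree-two annulus covering -/
def fmap : Ann → Ann := fun a => (a.1 + a.1, gmap a.1 a.2)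

lemma continuous_fmap : Continuous fmap := by
  refine Continuous.prodMk (by fun_prop) ?_
  apply continuous_hIoo.comp
  exact (continuous_hInv.comp continuous_snd).add (continuous_cfn.comp continuous_fst)

lemma fmap_surjective : Function.Surjective fmap := by
  rintro ⟨θ, y⟩
  obtain ⟨r, hr⟩ := Quotient.exists_rep θ
  refine ⟨(((r/2 : ℝ) : Circ), gminv ((r/2 : ℝ) : Circ) y), ?_⟩
  rw [fmap]
  have h1 : (((r/2:ℝ) : Circ)) + (((r/2:ℝ)) : Circ) = θ := by
    rw [← AddCircle.coe_add, ← hr]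
    norm_num
  rw [h1, gmap_gminv]

/-! the trivializations -/

section Triv

variable (c₀ : ℝ)

/-- base arc used in the trivialization -/
def Varc : Set Circ := {((c₀ : ℝ) : Circ)}ᶜ

lemma isOpen_Varc : IsOpen (Varc c₀) := isOpen_compl_singleton

/-- section formulas -/
def bshift (i : Bool) : ℝ := if i then 1/2 else 0

def e1 : OpenPartialHomeomorph ℝ Circ := AddCircle.openPartialHomeomorphCoe (1:ℝ) c₀
def e2 : OpenPartialHomeomorph ℝ Circ := AddCircle.openPartialHomeomorphCoe (1:ℝ) (c₀/2)

lemma e1_source : (e1 c₀).source = Set.Ioo c₀ (c₀+1) := by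
  simp [e1, AddCircle.openPartialHomeomorphCoe]
lemma e1_target : (e1 c₀).target = Varc c₀ := by
  simp [e1, Varc, AddCircle.openPartialHomeomorphCoe]
lemma e2_source : (e2 c₀).source = Set.Ioo (c₀/2) (c₀/2+1) := by
  simp [e2, AddCircle.openPartialHomeomorphCoe]
lemma e2_target : (e2 c₀).target = {((c₀/2 : ℝ) : Circ)}ᶜ := by
  simp [e2, AddCircle.openPartialHomeomorphCoe]
lemma e1_coe (x : ℝ) : (e1 c₀) x = ((x:ℝ) : Circ) := rfl
lemma e2_coe (x : ℝ) : (e2 c₀) x = ((x:ℝ) : Circ) := rfl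

/-- the circle part of the sections -/
def sArc (i : Bool) (θ : Circ) : Circ := (((e1 c₀).symm θ / 2 + bshift i : ℝ) : Circ)

/-- the full sections over `Varc ×ˢ univ` -/
def sectAnn (i : Bool) (p : Ann) : Ann :=
  (sArc c₀ i p.1, gminv (sArc c₀ i p.1) p.2)

/-- index ("which sheet") function -/
def idxArc (θ : Circ) : Bool := decide (c₀/2 + 1/2 < (e2 c₀).symm θ)

def idxAnn (a : Ann) : Bool := idxArc c₀ a.1

variable {c₀}

lemma e1_symm_mem {θ : Circ} (hθ : θ ∈ Varc c₀) :
    (e1 c₀).symm θ ∈ Set.Ioo c₀ (c₀+1) := by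
  rw [← e1_source]; exact (e1 c₀).map_target (by rwa [e1_target])

lemma e1_coe_symm {θ : Circ} (hθ : θ ∈ Varc c₀) :
    (((e1 c₀).symm θ : ℝ) : Circ) = θ := by
  rw [← e1_coe]; exact (e1 c₀).right_inv (by rwa [e1_target])

lemma e1_symm_coe {x : ℝ} (hx : x ∈ Set.Ioo c₀ (c₀+1)) :
    (e1 c₀).symm ((x : ℝ) : Circ) = x := by
  rw [← e1_coe]; exact (e1 c₀).left_inv (by rwa [e1_source])

lemma e2_symm_mem {θ : Circ} (hθ : θ ∈ ({((c₀/2 : ℝ) : Circ)}ᶜ : Set Circ)) :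
    (e2 c₀).symm θ ∈ Set.Ioo (c₀/2) (c₀/2+1) := by
  rw [← e2_source]; exact (e2 c₀).map_target (by rwa [e2_target])

lemma e2_coe_symm {θ : Circ} (hθ : θ ∈ ({((c₀/2 : ℝ) : Circ)}ᶜ : Set Circ)) :
    (((e2 c₀).symm θ : ℝ) : Circ) = θ := by
  rw [← e2_coe]; exact (e2 c₀).right_inv (by rwa [e2_target])

lemma e2_symm_coe {x : ℝ} (hx : x ∈ Set.Ioo (c₀/2) (c₀/2+1)) :
    (e2 c₀).symm ((x : ℝ) : Circ) = x := by
  rw [← e2_coe]; exact (e2 c₀).left_inv (by rwa [e2_source])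

lemma sArc_proj (i : Bool) {θ : Circ} (hθ : θ ∈ Varc c₀) :
    sArc c₀ i θ + sArc c₀ i θ = θ := by
  rw [sArc, ← AddCircle.coe_add]
  cases i
  · have : (e1 c₀).symm θ / 2 + bshift false + ((e1 c₀).symm θ / 2 + bshift false)
        = (e1 c₀).symm θ := by norm_num [bshift]; try ring
    rw [this]; exact e1_coe_symm hθ
  · have : (e1 c₀).symm θ / 2 + bshift true + ((e1 c₀).symm θ / 2 + bshift true)
        = (e1 c₀).symm θ + 1 := by norm_num [bshift]; try ring
    rw [this, AddCircle.coe_add_period]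
    exact e1_coe_symm hθ

lemma sArc_mem_source (i : Bool) {θ : Circ} (hθ : θ ∈ Varc c₀) :
    (e1 c₀).symm θ / 2 + bshift i ∈ Set.Ioo (c₀/2) (c₀/2+1) := by
  have h := e1_symm_mem hθ
  cases i <;> simp only [bshift] <;>
    constructor <;> simp <;> nlinarith [h.1, h.2]

lemma half_ne_zero_circ : (((1/2 : ℝ)) : Circ) ≠ 0 := by
  intro h
  rw [AddCircle.coe_eq_zero_iff] at h
  obtain ⟨n, hn⟩ := h
  have : (n : ℝ) = 1/2 := by simpa using hn
  rcases le_or_gt n 0 with h' | h'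
  · have : (n:ℝ) ≤ 0 := by exact_mod_cast h'
    linarith
  · have : (1:ℝ) ≤ (n:ℝ) := by exact_mod_cast h'
    linarith

lemma idx_sArc (i : Bool) {θ : Circ} (hθ : θ ∈ Varc c₀) :
    idxArc c₀ (sArc c₀ i θ) = i := by
  have hmem := sArc_mem_source i hθ
  have hsymm : (e2 c₀).symm (sArc c₀ i θ) = (e1 c₀).symm θ / 2 + bshift i :=
    e2_symm_coe hmem
  have h := e1_symm_mem hθ
  rw [idxArc, hsymm]
  cases i <;> simp only [bshift] <;> simp <;> [linarith [h.2]; linarith [h.1]]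

lemma dbl_ne_half {θ : Circ} (hV : θ + θ ∈ Varc c₀) : θ ∈ ({((c₀/2 : ℝ) : Circ)}ᶜ : Set Circ) := by
  intro hmem
  simp only [Set.mem_singleton_iff] at hmem
  apply hV
  rw [hmem, Set.mem_singleton_iff, ← AddCircle.coe_add]
  norm_num

lemma sArc_of_idx {θ : Circ} (hV : θ + θ ∈ Varc c₀) :
    sArc c₀ (idxArc c₀ θ) (θ + θ) = θ := by
  have hθ2 : θ ∈ ({((c₀/2 : ℝ) : Circ)}ᶜ : Set Circ) := dbl_ne_half hV
  set u : ℝ := (e2 c₀).symm θ with hu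
  have humem : u ∈ Set.Ioo (c₀/2) (c₀/2+1) := e2_symm_mem hθ2
  have hucoe : ((u : ℝ) : Circ) = θ := e2_coe_symm hθ2
  have hune : u ≠ c₀/2 + 1/2 := by
    intro heq
    apply hV
    rw [← hucoe, ← AddCircle.coe_add, heq, Set.mem_singleton_iff]
    have : c₀/2 + 1/2 + (c₀/2 + 1/2) = c₀ + 1 := by ring
    rw [this, AddCircle.coe_add_period]
  have hsum : θ + θ = ((2*u : ℝ) : Circ) := by
    rw [← hucoe, ← AddCircle.coe_add]; congr 1; ring
  rcases lt_or_gt_of_ne hune with hlt | hgt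
  · -- lower sheet
    have h2u : (2*u : ℝ) ∈ Set.Ioo c₀ (c₀+1) := by
      constructor <;> [linarith [humem.1]; linarith]
    have hidx : idxArc c₀ θ = false := by
      rw [idxArc, ← hu]; simp; linarith
    rw [hidx, sArc, hsum, e1_symm_coe h2u]
    have : 2*u/2 + bshift false = u := by simp [bshift]
    rw [this, hucoe]
  · -- upper sheet
    have h2u : (2*u - 1 : ℝ) ∈ Set.Ioo c₀ (c₀+1) := by
      constructor <;> [linarith [humem.2]; linarith [humem.2]]
    have hidx : idxArc c₀ θ = true := by
      rw [idxArc, ← hu]; simp; linarith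
    have hcoe2 : ((2*u : ℝ) : Circ) = ((2*u - 1 : ℝ) : Circ) := by
      have : (2*u : ℝ) = (2*u - 1) + 1 := by ring
      conv_lhs => rw [this]
      rw [AddCircle.coe_add_period]
    rw [hidx, sArc, hsum, hcoe2, e1_symm_coe h2u]
    have : (2*u - 1)/2 + bshift true = u := by simp [bshift]; ring
    rw [this, hucoe]

lemma continuousOn_sArc (i : Bool) : ContinuousOn (sArc c₀ i) (Varc c₀) := by
  have h1 : ContinuousOn ((e1 c₀).symm) (Varc c₀) := by
    rw [← e1_target]; exact (e1 c₀).continuousOn_symm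
  exact (AddCircle.continuous_mk' (1:ℝ)).comp_continuousOn
    ((h1.div_const 2).add continuousOn_const)

lemma continuousOn_sectAnn (i : Bool) :
    ContinuousOn (sectAnn c₀ i) ((Varc c₀) ×ˢ (Set.univ : Set (Set.Ioo (0:ℝ) 1))) := by
  have h1 : ContinuousOn (fun p : Ann => sArc c₀ i p.1) ((Varc c₀) ×ˢ Set.univ) :=
    (continuousOn_sArc i).comp continuous_fst.continuousOn (fun p hp => hp.1)
  apply ContinuousOn.prodMk h1
  apply continuous_hIoo.comp_continuousOn
  exact ((continuous_hInv.comp continuous_snd).continuousOn).sub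
    (continuous_cfn.comp_continuousOn h1)

lemma continuousOn_idxAnn :
    ContinuousOn (idxAnn c₀) (fmap ⁻¹' ((Varc c₀) ×ˢ (Set.univ : Set (Set.Ioo (0:ℝ) 1)))) := by
  intro a ha
  have haV : a.1 + a.1 ∈ Varc c₀ := (Set.mem_preimage.mp ha).1
  have hθ2 : a.1 ∈ ({((c₀/2 : ℝ) : Circ)}ᶜ : Set Circ) := dbl_ne_half haV
  set u : ℝ := (e2 c₀).symm a.1 with hu
  have humem : u ∈ Set.Ioo (c₀/2) (c₀/2+1) := e2_symm_mem hθ2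
  have hucoe : ((u : ℝ) : Circ) = a.1 := e2_coe_symm hθ2
  have hune : u ≠ c₀/2 + 1/2 := by
    intro heq
    apply haV
    rw [← hucoe, ← AddCircle.coe_add, heq, Set.mem_singleton_iff]
    have : c₀/2 + 1/2 + (c₀/2 + 1/2) = c₀ + 1 := by ring
    rw [this, AddCircle.coe_add_period]
  apply ContinuousAt.continuousWithinAt
  rcases lt_or_gt_of_ne hune with hlt | hgt
  · -- idx is locally false
    have hopen : IsOpen ((e2 c₀).target ∩ (e2 c₀).symm ⁻¹' (Set.Iio (c₀/2+1/2))) :=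
      (e2 c₀).continuousOn_symm.isOpen_inter_preimage (e2 c₀).open_target isOpen_Iio
    have hmem : a.1 ∈ (e2 c₀).target ∩ (e2 c₀).symm ⁻¹' (Set.Iio (c₀/2+1/2)) :=
      ⟨by rw [e2_target]; exact hθ2, by rw [Set.mem_preimage, ← hu]; exact hlt⟩
    have hopen2 : IsOpen ((Prod.fst : Ann → Circ) ⁻¹'
        ((e2 c₀).target ∩ (e2 c₀).symm ⁻¹' (Set.Iio (c₀/2+1/2)))) :=
      hopen.preimage continuous_fst
    have hEq : idxAnn c₀ =ᶠ[nhds a] (fun _ => false) := by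
      filter_upwards [hopen2.mem_nhds hmem] with p hp
      rcases hp with ⟨-, hp2⟩
      rw [Set.mem_preimage, Set.mem_Iio] at hp2
      simp only [idxAnn, idxArc]
      simpa using le_of_lt hp2
    exact continuousAt_const.congr hEq.symm
  · have hopen : IsOpen ((e2 c₀).target ∩ (e2 c₀).symm ⁻¹' (Set.Ioi (c₀/2+1/2))) :=
      (e2 c₀).continuousOn_symm.isOpen_inter_preimage (e2 c₀).open_target isOpen_Ioi
    have hmem : a.1 ∈ (e2 c₀).target ∩ (e2 c₀).symm ⁻¹' (Set.Ioi (c₀/2+1/2)) :=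
      ⟨by rw [e2_target]; exact hθ2, by rw [Set.mem_preimage, ← hu]; exact hgt⟩
    have hopen2 : IsOpen ((Prod.fst : Ann → Circ) ⁻¹'
        ((e2 c₀).target ∩ (e2 c₀).symm ⁻¹' (Set.Ioi (c₀/2+1/2)))) :=
      hopen.preimage continuous_fst
    have hEq : idxAnn c₀ =ᶠ[nhds a] (fun _ => true) := by
      filter_upwards [hopen2.mem_nhds hmem] with p hp
      rcases hp with ⟨-, hp2⟩
      rw [Set.mem_preimage, Set.mem_Ioi] at hp2
      simp only [idxAnn, idxArc]
      simpa using hp2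
    exact continuousAt_const.congr hEq.symm

end Triv

/-- `fmap` is a covering map. -/
lemma fmap_isCoveringMap : IsCoveringMap fmap := by
  intro b
  obtain ⟨aR, haR⟩ := Quotient.exists_rep b.1
  set c₀ : ℝ := aR + 1/2 with hc₀
  have hbV : b.1 ∈ Varc c₀ := by
    intro hmem
    rw [Set.mem_singleton_iff] at hmem
    apply half_ne_zero_circ
    have hcoe : ((c₀ : ℝ) : Circ) = ((aR:ℝ) : Circ) + (((1/2:ℝ)) : Circ) := by
      rw [← AddCircle.coe_add]
    have hb1 : ((aR:ℝ) : Circ) = b.1 := haR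
    calc (((1/2:ℝ)) : Circ) = ((c₀:ℝ) : Circ) - ((aR:ℝ):Circ) := by rw [hcoe]; abel
      _ = b.1 - b.1 := by rw [← hmem, hb1]
      _ = 0 := sub_self _
  apply IsEvenlyCovered.to_isEvenlyCovered_preimage (I := Bool)
  refine (fun (t : Bundle.Trivialization Bool fmap) (h : b ∈ t.baseSet) =>
    IsEvenlyCovered.of_trivialization h) ?_ ?_
  · refine trivOfSections fmap continuous_fmap ((Varc c₀) ×ˢ Set.univ)
      ((isOpen_Varc c₀).prod isOpen_univ) (sectAnn c₀) (idxAnn c₀)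
      (fun i => continuousOn_sectAnn i) continuousOn_idxAnn ?_ ?_ ?_
    · -- sections are sections
      rintro i ⟨θ, y⟩ ⟨hθ, -⟩
      have h1 := sArc_proj i hθ
      simp only [fmap, sectAnn]
      rw [h1, gmap_gminv]
    · rintro i ⟨θ, y⟩ ⟨hθ, -⟩
      exact idx_sArc i hθ
    · rintro ⟨θ, y⟩ hmem
      have hV : θ + θ ∈ Varc c₀ := (Set.mem_preimage.mp hmem).1
      have h1 : sArc c₀ (idxArc c₀ θ) (θ + θ) = θ := sArc_of_idx hV
      simp only [fmap, sectAnn, idxAnn]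
      rw [h1, gminv_gmap]
  · exact (⟨hbV, Set.mem_univ _⟩ : b ∈ (Varc c₀) ×ˢ Set.univ)

/-! ### invariant set and absence of periodic points -/

def Kset : Set Ann := Lam ×ˢ ({hIoo 0} : Set (Set.Ioo (0:ℝ) 1))

lemma Kset_nonempty : Kset.Nonempty := Lam_nonempty.prod ⟨hIoo 0, rfl⟩

lemma isCompact_Kset : IsCompact Kset := isCompact_Lam.prod isCompact_singleton

lemma gmap_of_mem {θ : Circ} (h : θ ∈ Lam) (y : Set.Ioo (0:ℝ) 1) : gmap θ y = y := by
  rw [gmap, cfn_eq_zero_of_mem h, add_zero, hIoo_hInv]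

lemma fmap_image_Kset : fmap '' Kset = Kset := by
  have h1 : fmap '' Kset = (Dbl '' Lam) ×ˢ ({hIoo 0} : Set (Set.Ioo (0:ℝ) 1)) := by
    ext ⟨θ, y⟩
    constructor
    · rintro ⟨⟨θ', y'⟩, ⟨hθ', hy'⟩, hEq⟩
      rw [Set.mem_singleton_iff] at hy'
      rw [← hEq]
      simp only [fmap, Set.mem_prod, Set.mem_singleton_iff]
      refine ⟨⟨θ', hθ', rfl⟩, ?_⟩
      simp only [] at hy' hθ'
      rw [hy', gmap_of_mem hθ']
    · rintro ⟨⟨θ', hθ', rfl⟩, hy⟩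
      rw [Set.mem_singleton_iff] at hy
      subst hy
      exact ⟨(θ', hIoo 0), ⟨hθ', rfl⟩, by
        rw [fmap, gmap_of_mem hθ']; rfl⟩
  rw [h1, Dbl_image_Lam, Kset]

lemma fmap_iter (n : ℕ) (a : Ann) :
    fmap^[n] a = (Dbl^[n] a.1, hIoo (hInv a.2 + ∑ k ∈ range n, cfn (Dbl^[k] a.1))) := by
  induction n with
  | zero =>
      simp only [Function.iterate_zero_apply, range_zero, Finset.sum_empty, add_zero, hIoo_hInv]
  | succ n ih =>
      rw [Function.iterate_succ_apply', ih, Function.iterate_succ_apply' Dbl]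
      simp only [fmap, Dbl, gmap]
      rw [hInv_hIoo, Finset.sum_range_succ]
      congr 2
      ring

lemma fmap_no_periodic (n : ℕ) (hn : 1 ≤ n) (a : Ann) : fmap^[n] a ≠ a := by
  intro hper
  have h := fmap_iter n a
  rw [hper] at h
  have h1 : Dbl^[n] a.1 = a.1 := congrArg Prod.fst h.symm
  have h2 : hIoo (hInv a.2 + ∑ k ∈ range n, cfn (Dbl^[k] a.1)) = a.2 :=
    (congrArg Prod.snd h).symm
  have h3 : hInv a.2 + ∑ k ∈ range n, cfn (Dbl^[k] a.1) = hInv a.2 := by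
    have := congrArg hInv h2
    rwa [hInv_hIoo] at this
  have hsum : ∑ k ∈ range n, cfn (Dbl^[k] a.1) = 0 := by linarith
  have hterm : ∀ k ∈ range n, cfn (Dbl^[k] a.1) = 0 :=
    (Finset.sum_eq_zero_iff_of_nonneg (fun k _ => cfn_nonneg _)).mp hsum
  have h0 : cfn a.1 = 0 := by
    have := hterm 0 (Finset.mem_range.mpr (by omega))
    simpa using this
  exact Lam_no_periodic a.1 ((cfn_eq_zero_iff a.1).mp h0) n hn h1

end Aux

/-- there is a degree-2 covering map of the open annulus with a

nonempty compact invariant set (`f(K) = K`) but no periodic points at all. -/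
theorem exists_degree_two_covering_invariant_set_no_periodic_points :
    ∃ (f : OpenAnnulus → OpenAnnulus) (F : Strip → Strip),
      IsCoveringMap f ∧ Function.Surjective f ∧
      Continuous F ∧
      (∀ v : Strip, annulusProj (F v) = f (annulusProj v)) ∧
      (∀ v : Strip, F (shift v) = ((F v).1 + 2, (F v).2)) ∧
      (∃ K : Set OpenAnnulus, K.Nonempty ∧ IsCompact K ∧ f '' K = K) ∧
      (∀ n : ℕ, 1 ≤ n → ∀ a : OpenAnnulus, f^[n] a ≠ a) := by
  refine ⟨fmap, (fun v => (v.1 + v.1, gmap ((v.1 : ℝ) : Circ) v.2)),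
    fmap_isCoveringMap, fmap_surjective, ?_, ?_, ?_,
    ⟨Kset, Kset_nonempty, isCompact_Kset, fmap_image_Kset⟩,
    fun n hn a => fmap_no_periodic n hn a⟩
  · refine Continuous.prodMk (by fun_prop) ?_
    apply continuous_hIoo.comp
    apply Continuous.add
    · exact continuous_hInv.comp continuous_snd
    · exact (continuous_cfn.comp ((AddCircle.continuous_mk' (1:ℝ)).comp continuous_fst))
  · intro v
    simp only [annulusProj, fmap, gmap]
    rw [AddCircle.coe_add]
  · intro v
    simp only [shift]
    have h1 : v.1 + 1 + (v.1 + 1) = v.1 + v.1 + 2 := by ring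
    have h2 : ((v.1 + 1 : ℝ) : Circ) = ((v.1 : ℝ) : Circ) := AddCircle.coe_add_period 1 v.1
    rw [h1, h2]

end
end
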